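/- arXiv:math/9407204 — 5 statements merged into one kernel-verified Lean document; each statement's English description precedes it below -/
import Mathlib

section
/- There exists a set X ⊆ ω^{↑ω} with X ∈ m^0 but X ∉ t^0; that is, the Miller ideal m^0 is not contained in the Matet ideal t^0. -/
/-- `σ` is a strictly increasing finite sequence of naturals (an element of `ω^{↑<ω}`). -/
def IncSeq (σ : List ℕ) : Prop := List.Chain' (· < ·) σ

/-- A tree: a nonempty set of strictly increasing finite sequences closed under
initial segments. -/
def IsTree (T : Set (List ℕ)) : Prop :=
  T.Nonempty ∧ (∀ σ ∈ T, IncSeq σ) ∧ ∀ σ ∈ T, ∀ τ, τ <+: σ → τ ∈ T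

/-- The initial segment of `f` of length `n`, as a finite sequence. -/
def seg (f : ℕ → ℕ) (n : ℕ) : List ℕ := (List.range n).map f

/-- The branches of `T`: strictly increasing `f : ℕ → ℕ` all of whose initial
segments lie in `T`. -/
def branches (T : Set (List ℕ)) : Set (ℕ → ℕ) :=
  {f | StrictMono f ∧ ∀ n, seg f n ∈ T}

/-- The values of the immediate successors of `σ` in `T`. -/
def succs (T : Set (List ℕ)) (σ : List ℕ) : Set ℕ := {n | σ ++ [n] ∈ T}

/-- `σ` is a splitting node of `T`: it has at least two immediate successors. -/
def IsSplit (T : Set (List ℕ)) (σ : List ℕ) : Prop :=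
  σ ∈ T ∧ ∃ m n : ℕ, m ≠ n ∧ σ ++ [m] ∈ T ∧ σ ++ [n] ∈ T

/-- `σ` is an infinite-splitting node of `T`. -/
def IsInfSplit (T : Set (List ℕ)) (σ : List ℕ) : Prop :=
  σ ∈ T ∧ (succs T σ).Infinite

/-- A Sacks tree: every node extends to a splitting node. -/
def IsSacks (S : Set (List ℕ)) : Prop :=
  IsTree S ∧ ∀ σ ∈ S, ∃ τ, σ <+: τ ∧ IsSplit S τ

/-- A Miller tree: every node extends to an infinite-splitting node. -/
def IsMiller (M : Set (List ℕ)) : Prop :=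
  IsTree M ∧ ∀ σ ∈ M, ∃ τ, σ <+: τ ∧ IsInfSplit M τ

/-- A Laver tree with stem `s`: `s` is comparable with all nodes, and every node
extending `s` has infinitely many immediate successors. -/
def IsLaverWithStem (L : Set (List ℕ)) (s : List ℕ) : Prop :=
  IsTree L ∧ s ∈ L ∧ (∀ σ ∈ L, σ <+: s ∨ s <+: σ) ∧
    ∀ σ ∈ L, s <+: σ → (succs L σ).Infinite

/-- A Laver tree. -/
def IsLaver (L : Set (List ℕ)) : Prop := ∃ s, IsLaverWithStem L s

/-- Membership in the tree ideal associated to the class `P` of trees: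
for every tree in `P` there is a subtree in `P` whose branches avoid `X`. -/
def inIdeal (P : Set (List ℕ) → Prop) (X : Set (ℕ → ℕ)) : Prop :=
  ∀ T, P T → ∃ T', P T' ∧ T' ⊆ T ∧ branches T' ∩ X = ∅

/-- The Matet tree `T(s,A)` determined by `s` and the family `a`: all initial
segments of words `s⌢τ_{a_{i_0}}⌢…⌢τ_{a_{i_k}}` with `i_0 < … < i_k`, where `τ_b`
is the increasing enumeration of `b`. -/
def matetTree (s : List ℕ) (a : ℕ → Finset ℕ) : Set (List ℕ) :=
  {σ | ∃ l : List ℕ, List.Chain' (· < ·) l ∧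
      σ <+: s ++ (l.map fun i => (a i).sort (· ≤ ·)).flatten}

/-- The side conditions on the data of a Matet tree. -/
def IsMatetSystem (s : List ℕ) (a : ℕ → Finset ℕ) : Prop :=
  IncSeq s ∧ (∀ n, (a n).Nonempty) ∧
  (∀ x ∈ s, ∀ y ∈ a 0, x < y) ∧
  (∀ n, ∀ x ∈ a n, ∀ y ∈ a (n + 1), x < y)

/-- A Matet tree. -/
def IsMatet (T : Set (List ℕ)) : Prop :=
  ∃ s a, IsMatetSystem s a ∧ T = matetTree s a



namespace MM
open List

/-- almost-disjoint-branching property of a tree -/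
def ADB (N : Set (List ℕ)) : Prop :=
  ∀ f ∈ branches N, ∀ g ∈ branches N, f ≠ g → (Set.range f ∩ Set.range g).Finite

section Matet

variable (s : List ℕ) (a : ℕ → Finset ℕ)

def blk (i : ℕ) : List ℕ := (a i).sort (· ≤ ·)

variable {a} in
lemma mem_blk {x i : ℕ} : x ∈ blk a i ↔ x ∈ a i := Finset.mem_sort _

lemma blk_chain (i : ℕ) : List.Chain' (· < ·) (blk a i) :=
  (Finset.sortedLT_sort _).isChain

variable {s a}

variable (hsys : IsMatetSystem s a)
include hsys

lemma blk_ne_nil (i : ℕ) : blk a i ≠ [] := by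
  have h := hsys.2.1 i
  intro hn
  have : (blk a i).length = 0 := by rw [hn]; rfl
  rw [blk, Finset.length_sort] at this
  exact absurd (Finset.card_eq_zero.mp this) (Finset.nonempty_iff_ne_empty.mp h)

lemma blockLt : ∀ i j, i < j → ∀ x ∈ a i, ∀ y ∈ a j, x < y := by
  intro i j hij
  induction j with
  | zero => omega
  | succ j ih =>
    rcases Nat.lt_or_ge i j with h | h
    · intro x hx y hy
      obtain ⟨w, hw⟩ := hsys.2.1 j
      exact lt_trans (ih h x hx w hw) (hsys.2.2.2 j w hw y hy)
    · have : i = j := by omega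
      subst this
      exact hsys.2.2.2 i

lemma sLt : ∀ x ∈ s, ∀ j, ∀ y ∈ a j, x < y := by
  intro x hx j y hy
  rcases Nat.eq_zero_or_pos j with rfl | hj
  · exact hsys.2.2.1 x hx y hy
  · obtain ⟨w, hw⟩ := hsys.2.1 0
    exact lt_trans (hsys.2.2.1 x hx w hw) (blockLt hsys 0 j hj w hw y hy)

lemma block_disjoint {i j x : ℕ} (hij : i ≠ j) (hx : x ∈ a i) (hx' : x ∈ a j) : False := by
  rcases Nat.lt_or_ge i j with h | h
  · exact lt_irrefl x (blockLt hsys i j h x hx x hx')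
  · exact lt_irrefl x (blockLt hsys j i (by omega) x hx' x hx)

end Matet

section MatetW

variable (s : List ℕ) (a : ℕ → Finset ℕ) (z : ℕ → Bool)

def chunk (m : ℕ) : List ℕ := blk a (2*m) ++ (if z m then blk a (2*m+1) else [])

def Wd : ℕ → List ℕ
  | 0 => s
  | n+1 => Wd n ++ chunk a z n

def Lz : ℕ → List ℕ
  | 0 => []
  | n+1 => Lz n ++ (2*n :: (if z n then [2*n+1] else []))

variable {s a z}

lemma Wd_eq (n : ℕ) : Wd s a z n = s ++ ((Lz z n).map fun i => (a i).sort (· ≤ ·)).flatten := by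
  induction n with
  | zero => simp [Wd, Lz]
  | succ n ih =>
    rw [Wd, Lz, ih, List.map_append, List.flatten_append, List.append_assoc]
    congr 1
    cases hz : z n <;> simp [chunk, hz, blk]

lemma Lz_lt (n : ℕ) : ∀ x ∈ Lz z n, x < 2*n := by
  induction n with
  | zero => simp [Lz]
  | succ n ih =>
    intro x hx
    rw [Lz, List.mem_append] at hx
    rcases hx with h | h
    · have := ih x h; omega
    · rcases List.mem_cons.mp h with rfl | h
      · omega
      · rcases hz : z n with _ | _ <;> rw [hz] at h <;> simp at h
        omega

lemma Lz_chain (n : ℕ) : List.Chain' (· < ·) (Lz z n) := by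
  induction n with
  | zero => simp [Lz]; exact List.isChain_nil
  | succ n ih =>
    rw [Lz, List.Chain', List.isChain_append]
    refine ⟨ih, ?_, ?_⟩
    · cases hz : z n <;> simp [hz]
    · intro x hx y hy
      have hx' := Lz_lt n x (List.mem_of_mem_getLast? hx)
      rcases List.mem_cons.mp (List.mem_of_mem_head? hy) with rfl | hy'
      · omega
      · cases hz : z n <;> rw [hz] at hy' <;> simp at hy'
        omega

end MatetW

section MatetW2
open List
variable {s : List ℕ} {a : ℕ → Finset ℕ} {z : ℕ → Bool}
variable (hsys : IsMatetSystem s a)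
include hsys

lemma Wd_mem₁ (n : ℕ) : ∀ x ∈ Wd s a z n, x ∈ s ∨ ∃ j, j < 2*n ∧ x ∈ a j := by
  induction n with
  | zero => intro x hx; exact Or.inl hx
  | succ n ih =>
    intro x hx
    rw [Wd, List.mem_append] at hx
    rcases hx with h | h
    · rcases ih x h with h' | ⟨j, hj, hj'⟩
      · exact Or.inl h'
      · exact Or.inr ⟨j, by omega, hj'⟩
    · rw [chunk, List.mem_append] at h
      rcases h with h | h
      · exact Or.inr ⟨2*n, by omega, mem_blk.mp h⟩
      · cases hz : z n with
        | false => rw [hz] at h; exact absurd h (List.not_mem_nil)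
        | true => rw [hz] at h; simp only [if_true] at h
                  exact Or.inr ⟨2*n+1, by omega, mem_blk.mp h⟩

lemma Wd_mem₂ (n : ℕ) : ∀ x ∈ Wd s a z n,
    x ∈ s ∨ ∃ m, x ∈ a (2*m) ∨ (z m = true ∧ x ∈ a (2*m+1)) := by
  induction n with
  | zero => intro x hx; exact Or.inl hx
  | succ n ih =>
    intro x hx
    rw [Wd, List.mem_append] at hx
    rcases hx with h | h
    · exact ih x h
    · rw [chunk, List.mem_append] at h
      rcases h with h | h
      · exact Or.inr ⟨n, Or.inl (mem_blk.mp h)⟩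
      · cases hz : z n with
        | false => rw [hz] at h; exact absurd h (List.not_mem_nil)
        | true => rw [hz] at h; simp only [if_true] at h
                  exact Or.inr ⟨n, Or.inr ⟨hz, mem_blk.mp h⟩⟩

lemma Wd_chain (n : ℕ) : List.Chain' (· < ·) (Wd s a z n) := by
  induction n with
  | zero => exact hsys.1
  | succ n ih =>
    rw [Wd, List.Chain', List.isChain_append]
    refine ⟨ih, ?_, ?_⟩
    · rw [chunk, List.isChain_append]
      refine ⟨blk_chain a _, ?_, ?_⟩
      · cases hz : z n <;> simp [hz]; exact blk_chain a _
      · intro x hx y hy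
        cases hz : z n with
        | false => rw [hz] at hy; simp at hy
        | true =>
          rw [hz] at hy; simp only [if_true] at hy
          have hx' := mem_blk.mp (List.mem_of_mem_getLast? hx)
          have hy' := mem_blk.mp (List.mem_of_mem_head? hy)
          exact hsys.2.2.2 _ x hx' y hy'
    · intro x hx y hy
      have hxW := List.mem_of_mem_getLast? hx
      have hy' : y ∈ a (2*n) ∨ y ∈ a (2*n+1) := by
        have hyC := List.mem_of_mem_head? hy
        rw [chunk, List.mem_append] at hyC
        rcases hyC with h | h
        · exact Or.inl (mem_blk.mp h)
        · cases hz : z n with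
          | false => rw [hz] at h; exact absurd h (List.not_mem_nil)
          | true => rw [hz] at h; simp only [if_true] at h
                    exact Or.inr (mem_blk.mp h)
      have hxlt : ∀ j, 2*n ≤ j → y ∈ a j → x < y := by
        intro j hj hyj
        rcases Wd_mem₁ hsys n x hxW with h | ⟨j', hj', hj''⟩
        · exact sLt hsys x h _ y hyj
        · exact blockLt hsys j' j (by omega) x hj'' y hyj
      rcases hy' with h | h
      · exact hxlt (2*n) (le_refl _) h
      · exact hxlt (2*n+1) (by omega) h

lemma Wd_length (n : ℕ) : n ≤ (Wd s a z n).length := by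
  induction n with
  | zero => omega
  | succ n ih =>
    rw [Wd, List.length_append]
    have : 1 ≤ (chunk a z n).length := by
      rw [chunk, List.length_append]
      have := blk_ne_nil hsys (a := a) (2*n)
      have : 0 < (blk a (2*n)).length := List.length_pos_iff.mpr this
      omega
    omega

omit hsys

lemma Wd_prefix {m n : ℕ} (h : m ≤ n) : Wd s a z m <+: Wd s a z n := by
  induction n with
  | zero => have : m = 0 := by omega
            subst this; exact List.prefix_refl _
  | succ n ih =>
    rcases Nat.lt_or_ge m (n+1) with h' | h'
    · exact (ih (by omega)).trans ⟨chunk a z n, rfl⟩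
    · have : m = n+1 := by omega
      subst this; exact List.prefix_refl _

end MatetW2

section MatetF
open List
variable {s : List ℕ} {a : ℕ → Finset ℕ} {z : ℕ → Bool}
variable (hsys : IsMatetSystem s a)

noncomputable def fz (s : List ℕ) (a : ℕ → Finset ℕ) (z : ℕ → Bool) (p : ℕ) : ℕ :=
  (Wd s a z (p+1)).getD p 0

include hsys

lemma fz_eq {n p : ℕ} (h : p < (Wd s a z n).length) : fz s a z p = (Wd s a z n)[p] := by
  have h1 : p < (Wd s a z (p+1)).length := lt_of_lt_of_le (by omega) (Wd_length hsys (p+1))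
  rw [fz, List.getD_eq_getElem _ _ h1]
  rcases Nat.le_total (p+1) n with hle | hle
  · exact (Wd_prefix hle).getElem h1
  · exact ((Wd_prefix hle).getElem h).symm

lemma seg_fz (n : ℕ) : seg (fz s a z) n = (Wd s a z n).take n := by
  have hlen : n ≤ (Wd s a z n).length := Wd_length hsys n
  apply List.ext_getElem
  · simp [seg]; omega
  · intro p h1 h2
    have hp : p < n := by simpa [seg] using h1
    rw [List.getElem_take]
    simp only [seg, List.getElem_map, List.getElem_range]
    exact fz_eq hsys (lt_of_lt_of_le hp hlen)

lemma fz_strictMono : StrictMono (fz s a z) := by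
  intro p q hpq
  have hq : q < (Wd s a z (q+1)).length := lt_of_lt_of_le (by omega) (Wd_length hsys (q+1))
  have hp : p < (Wd s a z (q+1)).length := by omega
  rw [fz_eq hsys hp, fz_eq hsys hq]
  have hpw : List.Pairwise (· < ·) (Wd s a z (q+1)) :=
    List.isChain_iff_pairwise.mp (Wd_chain hsys (q+1))
  exact List.pairwise_iff_get.mp hpw ⟨p, hp⟩ ⟨q, hq⟩ hpq

lemma fz_mem_branches : fz s a z ∈ branches (matetTree s a) := by
  refine ⟨fz_strictMono hsys, fun n => ?_⟩
  refine ⟨Lz z n, Lz_chain n, ?_⟩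
  rw [seg_fz hsys n, ← Wd_eq]
  exact List.take_prefix _ _

lemma mem_range_fz {v n : ℕ} (h : v ∈ Wd s a z n) : v ∈ Set.range (fz s a z) := by
  obtain ⟨p, hp, hpv⟩ := List.getElem_of_mem h
  exact ⟨p, by rw [fz_eq hsys hp]; exact hpv⟩

lemma range_fz_sub {v : ℕ} (h : v ∈ Set.range (fz s a z)) :
    v ∈ s ∨ ∃ m, v ∈ a (2*m) ∨ (z m = true ∧ v ∈ a (2*m+1)) := by
  obtain ⟨p, rfl⟩ := h
  have h1 : p < (Wd s a z (p+1)).length := lt_of_lt_of_le (by omega) (Wd_length hsys (p+1))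
  have : fz s a z p ∈ Wd s a z (p+1) := by
    rw [fz_eq hsys h1]; exact List.getElem_mem h1
  exact Wd_mem₂ hsys (p+1) _ this

lemma even_block_sub_range {v m : ℕ} (h : v ∈ a (2*m)) : v ∈ Set.range (fz s a z) := by
  apply mem_range_fz hsys (n := m+1)
  rw [Wd, List.mem_append]
  exact Or.inr (by rw [chunk, List.mem_append]; exact Or.inl (mem_blk.mpr h))

lemma odd_block_sub_range {v m : ℕ} (hz : z m = true) (h : v ∈ a (2*m+1)) :
    v ∈ Set.range (fz s a z) := by
  apply mem_range_fz hsys (n := m+1)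
  rw [Wd, List.mem_append]
  refine Or.inr ?_
  rw [chunk, List.mem_append, hz]
  exact Or.inr (by simp only [if_true]; exact mem_blk.mpr h)

lemma odd_block_not_range {v m : ℕ} (hz : z m = false) (h : v ∈ a (2*m+1)) :
    v ∉ Set.range (fz s a z) := by
  intro hv
  rcases range_fz_sub hsys hv with hvs | ⟨k, hk | ⟨hzk, hk⟩⟩
  · exact lt_irrefl v (sLt hsys v hvs _ v h)
  · exact block_disjoint hsys (by omega) hk h
  · rcases eq_or_ne k m with rfl | hne
    · rw [hz] at hzk; exact Bool.false_ne_true hzk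
    · exact block_disjoint hsys (by omega) hk h

omit hsys

theorem matet_family {T : Set (List ℕ)} (hT : IsMatet T) :
    ∃ F : (ℕ → Bool) → (ℕ → ℕ),
      (∀ z, F z ∈ branches T) ∧
      ∀ z z', z ≠ z' → F z ≠ F z' ∧ (Set.range (F z) ∩ Set.range (F z')).Infinite := by
  obtain ⟨s, a, hsys, rfl⟩ := hT
  refine ⟨fz s a, fun z => fz_mem_branches hsys, ?_⟩
  intro z z' hzz
  constructor
  · -- functions differ because ranges differ
    obtain ⟨m, hm⟩ := Function.ne_iff.mp hzz
    obtain ⟨v, hv⟩ := hsys.2.1 (2*m+1)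
    have key : ∀ w w' : ℕ → Bool, w m = true → w' m = false → fz s a w ≠ fz s a w' := by
      intro w w' hw hw' heq
      have h1 := odd_block_sub_range hsys (z := w) hw hv
      have h2 := odd_block_not_range hsys (z := w') hw' hv
      rw [heq] at h1
      exact h2 h1
    cases hzm : z m with
    | true =>
      cases hz'm : z' m with
      | true => rw [hzm, hz'm] at hm; exact absurd rfl hm
      | false => exact key z z' hzm hz'm
    | false =>
      cases hz'm : z' m with
      | true => exact (key z' z hz'm hzm).symm
      | false => rw [hzm, hz'm] at hm; exact absurd rfl hm
  · -- common infinite range intersection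
    classical
    set c : ℕ → ℕ := fun m => (hsys.2.1 (2*m)).choose with hc
    have hcmem : ∀ m, c m ∈ a (2*m) := fun m => (hsys.2.1 (2*m)).choose_spec
    have hcinj : Function.Injective c := by
      intro m m' hmm
      by_contra hne
      exact block_disjoint hsys (i := 2*m) (j := 2*m') (by omega) (hcmem m)
        (by rw [hmm]; exact hcmem m')
    have : Set.range c ⊆ Set.range (fz s a z) ∩ Set.range (fz s a z') := by
      rintro v ⟨m, rfl⟩
      exact ⟨even_block_sub_range hsys (hcmem m), even_block_sub_range hsys (hcmem m)⟩
    exact (Set.infinite_range_of_injective hcinj).mono this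

end MatetF

section L1
open Cardinal

lemma mk_nat_bool : #(ℕ → Bool) = Cardinal.continuum := by
  rw [Cardinal.mk_arrow]
  simp [Cardinal.mk_bool, Cardinal.two_power_aleph0]

theorem exists_branch_avoiding {T : Set (List ℕ)} (hT : IsMatet T)
    {ι : Type} (Ns : ι → Set (List ℕ)) (hsmall : #ι < Cardinal.continuum)
    (hADB : ∀ i, ADB (Ns i)) :
    ∃ x, x ∈ branches T ∧ ∀ i, x ∉ branches (Ns i) := by
  obtain ⟨F, hF1, hF2⟩ := matet_family hT
  classical
  set A : ι → Set (ℕ → Bool) := fun i => {z | F z ∈ branches (Ns i)} with hA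
  have hsub : ∀ i, (A i).Subsingleton := by
    intro i z hz z' hz'
    by_contra hne
    have h2 := hF2 z z' hne
    exact h2.2 ((hADB i) _ hz _ hz' h2.1)
  have hone : ∀ i, #(A i) ≤ 1 := fun i => Cardinal.mk_le_one_iff_set_subsingleton.mpr (hsub i)
  have hcard : #(⋃ i, A i) < Cardinal.continuum := by
    calc #(⋃ i, A i) ≤ #ι * ⨆ i, #(A i) := Cardinal.mk_iUnion_le A
    _ ≤ #ι * 1 := mul_le_mul' (le_refl _) (ciSup_le' hone)
    _ = #ι := mul_one _
    _ < Cardinal.continuum := hsmall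
  have hne : (⋃ i, A i) ≠ Set.univ := by
    intro h
    rw [h] at hcard
    rw [Cardinal.mk_univ, mk_nat_bool] at hcard
    exact lt_irrefl _ hcard
  obtain ⟨z, hz⟩ := (Set.ne_univ_iff_exists_notMem _).mp hne
  refine ⟨F z, hF1 z, fun i hmem => ?_⟩
  exact hz (Set.mem_iUnion.mpr ⟨i, hmem⟩)

end L1

section Scheme
open List

def lmax (l : List ℕ) : ℕ := l.foldr max 0

lemma le_lmax {x : ℕ} : ∀ {l : List ℕ}, x ∈ l → x ≤ lmax l := by
  intro l
  induction l with
  | nil => intro h; exact absurd h (List.not_mem_nil)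
  | cons a l ih =>
    intro h
    rcases List.mem_cons.mp h with rfl | h'
    · exact le_max_left _ _
    · exact le_trans (ih h') (le_max_right _ _)

variable {M : Set (List ℕ)}

lemma nil_mem_tree (h : IsTree M) : [] ∈ M := by
  obtain ⟨σ, hσ⟩ := h.1
  exact h.2.2 σ hσ [] List.nil_prefix

/-- the step property for the fusion scheme: `τ` extends `p`, is an infinite splitting
node, its first new entry is a successor value of `p` in `M`, and all new entries
exceed the bound `B`. -/
def StepProp (M : Set (List ℕ)) (p : List ℕ) (B : ℕ) (τ : List ℕ) : Prop :=
  IsInfSplit M τ ∧ p <+: τ ∧ p.length < τ.length ∧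
    (∀ h : p.length < τ.length, τ[p.length] ∈ succs M p) ∧
    ∀ q (h : q < τ.length), p.length ≤ q → B < τ[q]

lemma step_exists (hM : IsMiller M) {p : List ℕ} (hp : IsInfSplit M p) (B : ℕ) :
    ∃ τ, StepProp M p B τ := by
  obtain ⟨x, hx, hBx⟩ := Set.Infinite.exists_gt hp.2 B
  have hxM : p ++ [x] ∈ M := hx
  obtain ⟨τ, hτ1, hτ2⟩ := hM.2 (p ++ [x]) hxM
  have hpτ : p ++ [x] <+: τ := hτ1
  have hlen : p.length + 1 ≤ τ.length := by
    have := hpτ.length_le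
    simpa using this
  have hgetx : τ[p.length]'(by omega) = x := by
    have h1 : (p ++ [x])[p.length]'(by simp) = x := by simp
    rw [← hpτ.getElem (by simp)]
    exact h1
  have hInc : List.Chain' (· < ·) τ := hM.1.2.1 τ hτ2.1
  have hPw : List.Pairwise (· < ·) τ := List.isChain_iff_pairwise.mp hInc
  refine ⟨τ, hτ2, (List.prefix_append p [x]).trans hpτ, by omega, ?_, ?_⟩
  · intro h
    rw [hgetx]
    exact hx
  · intro q hq hpq
    rcases Nat.eq_or_lt_of_le hpq with rfl | hlt
    · rw [hgetx]; exact hBx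
    · have : τ[p.length]'(by omega) < τ[q] :=
        List.pairwise_iff_get.mp hPw ⟨p.length, by omega⟩ ⟨q, hq⟩ hlt
      rw [hgetx] at this
      omega

variable (hM : IsMiller M)

/-- the fusion scheme: a family of infinite splitting nodes of `M` indexed by `ℕ`
(codes of finite index paths), with globally separated "new parts". -/
noncomputable def schemeF : (n : ℕ) → ((k : ℕ) → k < n → {τ : List ℕ // IsInfSplit M τ}) →
    {τ : List ℕ // IsInfSplit M τ}
  | 0, _ => ⟨(hM.2 [] (nil_mem_tree hM.1)).choose, ((hM.2 [] (nil_mem_tree hM.1)).choose_spec).2⟩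
  | (n+1), prev => by
      have hlt : n.unpair.2 < n + 1 := lt_of_le_of_lt (Nat.unpair_right_le n) (Nat.lt_succ_self n)
      have hp := (prev n.unpair.2 hlt).2
      have hB : ∃ τ, StepProp M (prev n.unpair.2 hlt).1
          (Finset.univ.sup (fun k : Fin (n+1) => lmax (prev k.1 k.isLt).1)) τ :=
        step_exists hM hp _
      exact ⟨hB.choose, hB.choose_spec.1⟩

noncomputable def nd (n : ℕ) : List ℕ :=
  (WellFounded.fix (Nat.lt_wfRel.wf) (schemeF hM) n).1

noncomputable def Bnd (n : ℕ) : ℕ :=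
  Finset.univ.sup (fun k : Fin n => lmax (nd hM k.1))

lemma nd_infsplit (n : ℕ) : IsInfSplit M (nd hM n) :=
  (WellFounded.fix (Nat.lt_wfRel.wf) (schemeF hM) n).2

lemma nd_mem (n : ℕ) : nd hM n ∈ M := (nd_infsplit hM n).1

lemma nd_spec (n : ℕ) : StepProp M (nd hM n.unpair.2) (Bnd hM (n+1)) (nd hM (n+1)) := by
  have hfix := WellFounded.fix_eq (Nat.lt_wfRel.wf) (schemeF hM) (n+1)
  show StepProp M (nd hM n.unpair.2) (Bnd hM (n+1))
    ((WellFounded.fix (Nat.lt_wfRel.wf) (schemeF hM) (n+1)).1)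
  rw [hfix]
  simp only [schemeF]
  exact (step_exists hM (nd_infsplit hM n.unpair.2) _).choose_spec

lemma nd_le_Bnd {k n : ℕ} (h : k < n) {v : ℕ} (hv : v ∈ nd hM k) : v ≤ Bnd hM n := by
  have := le_lmax hv
  exact le_trans this (Finset.le_sup (f := fun k : Fin n => lmax (nd hM k.1))
    (Finset.mem_univ (⟨k, h⟩ : Fin n)))

end Scheme

section SchemeNodes
open List
variable {M : Set (List ℕ)} (hM : IsMiller M)

/-- the scheme node indexed by a finite path `t` (children prepend). -/
noncomputable def nod (t : List ℕ) : List ℕ := nd hM (Encodable.encode t)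

noncomputable def pLen : List ℕ → ℕ
  | [] => 0
  | (_ :: t) => (nod hM t).length

lemma enc_cons (i : ℕ) (t : List ℕ) :
    Encodable.encode (i :: t) = (Nat.pair i (Encodable.encode t)) + 1 := by
  rw [Encodable.encode_list_cons]; simp [Nat.succ_eq_add_one]

lemma nod_child_spec (i : ℕ) (t : List ℕ) :
    StepProp M (nod hM t) (Bnd hM (Encodable.encode (i :: t))) (nod hM (i :: t)) := by
  have h := nd_spec hM (Nat.pair i (Encodable.encode t))
  rw [Nat.unpair_pair] at h
  rw [nod, nod, enc_cons]
  exact h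

lemma nod_mem (t : List ℕ) : nod hM t ∈ M := nd_mem hM _

lemma nod_infsplit (t : List ℕ) : IsInfSplit M (nod hM t) := nd_infsplit hM _

lemma nod_chain (t : List ℕ) : List.Chain' (· < ·) (nod hM t) := hM.1.2.1 _ (nod_mem hM t)

lemma nod_child_prefix (i : ℕ) (t : List ℕ) : nod hM t <+: nod hM (i :: t) :=
  (nod_child_spec hM i t).2.1

lemma nod_child_len (i : ℕ) (t : List ℕ) : (nod hM t).length < (nod hM (i :: t)).length :=
  (nod_child_spec hM i t).2.2.1

lemma nod_suffix_prefix : ∀ {t' t : List ℕ}, t <:+ t' → nod hM t <+: nod hM t' := by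
  intro t'
  induction t' with
  | nil =>
    intro t ht
    rw [List.suffix_nil.mp ht]
  | cons i t'' ih =>
    intro t ht
    rcases List.suffix_cons_iff.mp ht with rfl | h
    · exact List.prefix_refl _
    · exact (ih h).trans (nod_child_prefix hM i t'')

lemma pLen_lt_len (t : List ℕ) : pLen hM t ≤ (nod hM t).length := by
  cases t with
  | nil => exact Nat.zero_le _
  | cons i t' => exact le_of_lt (nod_child_len hM i t')

/-- window entries of distinct scheme nodes are distinct (windows are globally separated). -/
lemma win_unique {t t' : List ℕ} {q q' : ℕ}
    (h1 : pLen hM t ≤ q) (h2 : q < (nod hM t).length)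
    (h1' : pLen hM t' ≤ q') (h2' : q' < (nod hM t').length)
    (heq : (nod hM t)[q] = (nod hM t')[q']) : t = t' := by
  by_contra hne
  have henc : Encodable.encode t ≠ Encodable.encode t' :=
    fun h => hne (Encodable.encode_injective h)
  -- symmetric argument
  have key : ∀ (u w : List ℕ) (r r' : ℕ) (hr1 : pLen hM u ≤ r) (hr2 : r < (nod hM u).length)
      (hr1' : pLen hM w ≤ r') (hr2' : r' < (nod hM w).length),
      Encodable.encode u < Encodable.encode w → (nod hM u)[r] = (nod hM w)[r'] → False := by
    intro u w r r' hr1 hr2 hr1' hr2' hlt hvals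
    -- w is not nil since its code is positive
    have hwnil : w ≠ [] := by
      intro h
      subst h
      rw [show Encodable.encode ([] : List ℕ) = 0 from Encodable.encode_list_nil] at hlt
      omega
    obtain ⟨j, w', rfl⟩ := List.exists_cons_of_ne_nil hwnil
    have hstep := nod_child_spec hM j w'
    have hbig : Bnd hM (Encodable.encode (j :: w')) < (nod hM (j :: w'))[r'] :=
      hstep.2.2.2.2 r' hr2' hr1'
    have hsmall : (nod hM u)[r] ≤ Bnd hM (Encodable.encode (j :: w')) :=
      nd_le_Bnd hM hlt (List.getElem_mem hr2)
    omega
  rcases lt_or_gt_of_ne henc with h | h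
  · exact key t t' q q' h1 h2 h1' h2' h heq
  · exact key t' t q' q h1' h2' h1 h2 h heq.symm

/-- entries of a scheme node are strictly increasing, hence injective. -/
lemma nod_get_inj {t : List ℕ} {q q' : ℕ} (h : q < (nod hM t).length)
    (h' : q' < (nod hM t).length) (heq : (nod hM t)[q] = (nod hM t)[q']) : q = q' := by
  have hPw : List.Pairwise (· < ·) (nod hM t) := List.isChain_iff_pairwise.mp (nod_chain hM t)
  rcases lt_trichotomy q q' with hlt | he | hlt
  · have h2 := List.pairwise_iff_get.mp hPw ⟨q, h⟩ ⟨q', h'⟩ hlt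
    simp only [List.get_eq_getElem] at h2
    omega
  · exact he
  · have h2 := List.pairwise_iff_get.mp hPw ⟨q', h'⟩ ⟨q, h⟩ hlt
    simp only [List.get_eq_getElem] at h2
    omega

end SchemeNodes

section Tz
open List
variable {M : Set (List ℕ)} (hM : IsMiller M)

def zBit (z : ℕ → Bool) (k : ℕ) : ℕ := if z k then 1 else 0

/-- `t` is a legal index path for the parameter `z`. -/
def Good (z : ℕ → Bool) : List ℕ → Prop
  | [] => True
  | (i :: t) => i % 2 = zBit z t.length ∧ Good z t

lemma Good.suffix {z : ℕ → Bool} : ∀ {t u : List ℕ}, Good z t → u <:+ t → Good z u := by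
  intro t
  induction t with
  | nil =>
    intro u hg hu
    rw [List.suffix_nil.mp hu]; trivial
  | cons i t' ih =>
    intro u hg hu
    rcases List.suffix_cons_iff.mp hu with rfl | h
    · exact hg
    · exact ih hg.2 h

/-- the pruned Miller subtree determined by the parameter `z`. -/
def Tz (z : ℕ → Bool) : Set (List ℕ) :=
  {τ | ∃ t, Good z t ∧ τ <+: nod hM t}

lemma Tz_sub (z : ℕ → Bool) : Tz hM z ⊆ M := by
  rintro τ ⟨t, _, hpre⟩
  exact hM.1.2.2 _ (nod_mem hM t) τ hpre

lemma Tz_tree (z : ℕ → Bool) : IsTree (Tz hM z) := by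
  refine ⟨⟨[], ⟨[], trivial, List.nil_prefix⟩⟩, ?_, ?_⟩
  · intro σ hσ
    exact hM.1.2.1 σ (Tz_sub hM z hσ)
  · rintro σ ⟨t, hg, hpre⟩ τ hτ
    exact ⟨t, hg, hτ.trans hpre⟩

/-- first new entry of the child node `i :: t`. -/
lemma prefix_snoc_getElem {l l' : List ℕ} (h : l <+: l') (hlt : l.length < l'.length) :
    l ++ [l'[l.length]] <+: l' := by
  obtain ⟨r, rfl⟩ := h
  have hr : r ≠ [] := by intro h0; subst h0; simp at hlt
  obtain ⟨b, r', rfl⟩ := List.exists_cons_of_ne_nil hr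
  have hb : (l ++ b :: r')[l.length]'hlt = b := by
    rw [List.getElem_append_right (le_refl _)]
    simp
  rw [hb]
  exact ⟨r', by simp⟩

lemma child_succ (z : ℕ → Bool) {i : ℕ} (t : List ℕ) (hg : Good z (i :: t)) :
    (nod hM t) ++ [(nod hM (i :: t))[(nod hM t).length]'(nod_child_len hM i t)] ∈ Tz hM z :=
  ⟨i :: t, hg, prefix_snoc_getElem (nod_child_prefix hM i t) (nod_child_len hM i t)⟩

lemma parity_infinite (b : ℕ) (hb : b < 2) : {i : ℕ | i % 2 = b}.Infinite := by
  have hinj : Function.Injective (fun k : ℕ => 2*k + b) := by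
    intro k k' h
    dsimp at h
    omega
  exact Set.infinite_of_injective_forall_mem hinj
    (fun k => by simp only [Set.mem_setOf_eq]; omega)

lemma nod_infsplit_Tz (z : ℕ → Bool) {t : List ℕ} (hg : Good z t) :
    IsInfSplit (Tz hM z) (nod hM t) := by
  refine ⟨⟨t, hg, List.prefix_refl _⟩, ?_⟩
  have hsub : (fun i : ℕ => (nod hM (i :: t))[(nod hM t).length]'(nod_child_len hM i t)) ''
      {i | i % 2 = zBit z t.length} ⊆ succs (Tz hM z) (nod hM t) := by
    rintro x ⟨i, hi, rfl⟩
    exact child_succ hM z t ⟨hi, hg⟩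
  apply Set.Infinite.mono hsub
  apply Set.Infinite.image
  · intro i hi j hj heq
    have h1 : pLen hM (i :: t) ≤ (nod hM t).length := le_refl _
    have := win_unique hM (t := i :: t) (t' := j :: t) h1 (nod_child_len hM i t)
      (le_refl _) (nod_child_len hM j t) heq
    exact (List.cons_eq_cons.mp this).1
  · exact parity_infinite _ (by unfold zBit; split <;> omega)

lemma Tz_miller (z : ℕ → Bool) : IsMiller (Tz hM z) := by
  refine ⟨Tz_tree hM z, ?_⟩
  rintro σ ⟨t, hg, hpre⟩
  exact ⟨nod hM t, hpre, nod_infsplit_Tz hM z hg⟩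

end Tz

section Branches
open List
variable {M : Set (List ℕ)} (hM : IsMiller M)

lemma seg_get {f : ℕ → ℕ} {n p : ℕ} (hp : p < n) (h : p < (seg f n).length) :
    (seg f n)[p] = f p := by
  simp [seg]

lemma walk {t : List ℕ} {n : ℕ} (hn : n < (nod hM t).length) :
    ∃ u, u <:+ t ∧ pLen hM u ≤ n ∧ n < (nod hM u).length := by
  induction t with
  | nil => exact ⟨[], List.suffix_refl _, Nat.zero_le _, hn⟩
  | cons i t' ih =>
    rcases le_or_gt (pLen hM (i :: t')) n with h | h
    · exact ⟨i :: t', List.suffix_refl _, h, hn⟩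
    · have h' : n < (nod hM t').length := h
      obtain ⟨u, hu1, hu2, hu3⟩ := ih h'
      exact ⟨u, hu1.trans (List.suffix_cons i t'), hu2, hu3⟩

lemma branch_cover {z : ℕ → Bool} {f : ℕ → ℕ} (hf : f ∈ branches (Tz hM z)) (n : ℕ) :
    ∃ u, Good z u ∧ pLen hM u ≤ n ∧ n < (nod hM u).length ∧
      seg f (n+1) = (nod hM u).take (n+1) := by
  obtain ⟨t, hg, hpre⟩ := hf.2 (n+1)
  have hlen : (seg f (n+1)).length = n+1 := by simp [seg]
  have hlt : n < (nod hM t).length := by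
    have := hpre.length_le
    omega
  obtain ⟨u, hu1, hu2, hu3⟩ := walk hM hlt
  have hnodpre : nod hM u <+: nod hM t := nod_suffix_prefix hM hu1
  have hpre2 : seg f (n+1) <+: nod hM u :=
    List.prefix_of_prefix_length_le hpre hnodpre (by omega)
  refine ⟨u, hg.suffix hu1, hu2, hu3, ?_⟩
  have := List.prefix_iff_eq_take.mp hpre2
  rwa [hlen] at this

lemma cover_entry {f : ℕ → ℕ} {u : List ℕ} {n : ℕ}
    (hu3 : n < (nod hM u).length)
    (hu4 : seg f (n+1) = (nod hM u).take (n+1)) : (nod hM u)[n] = f n := by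
  have h1 : (seg f (n+1)).length = n+1 := by simp [seg]
  have h2 : n < (seg f (n+1)).length := by omega
  have h3 := seg_get (f := f) (n := n+1) (by omega) h2
  rw [List.getElem_of_eq hu4 h2, List.getElem_take] at h3
  exact h3

/-- entries of covers at later positions agree with `f` at earlier positions too -/
lemma cover_entry_lt {f : ℕ → ℕ} {u : List ℕ} {n p : ℕ}
    (hp : p ≤ n) (hu3 : n < (nod hM u).length)
    (hu4 : seg f (n+1) = (nod hM u).take (n+1)) : (nod hM u)[p]'(by omega) = f p := by
  have h2 : p < (seg f (n+1)).length := by simp [seg]; omega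
  have h3 := seg_get (f := f) (n := n+1) (by omega) h2
  rw [List.getElem_of_eq hu4 h2, List.getElem_take] at h3
  exact h3

lemma Tz_adb (z : ℕ → Bool) : ADB (Tz hM z) := by
  intro f hf g hg hfg
  classical
  have hex : ∃ n, f n ≠ g n := Function.ne_iff.mp hfg
  set d := Nat.find hex with hd
  have hdspec : f d ≠ g d := Nat.find_spec hex
  have hfin : (f '' Set.Iio d ∪ g '' Set.Iio d).Finite :=
    ((Set.finite_Iio d).image f).union ((Set.finite_Iio d).image g)
  apply Set.Finite.subset hfin
  rintro v ⟨⟨n, rfl⟩, ⟨m, hm⟩⟩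
  rcases Nat.lt_or_ge n d with h | h
  · exact Or.inl ⟨n, h, rfl⟩
  rcases Nat.lt_or_ge m d with h' | h'
  · exact Or.inr ⟨m, h', hm⟩
  exfalso
  obtain ⟨u, hgu, hu2, hu3, hu4⟩ := branch_cover hM hf n
  obtain ⟨w, hgw, hw2, hw3, hw4⟩ := branch_cover hM hg m
  have hvu : (nod hM u)[n] = f n := cover_entry hM hu3 hu4
  have hvw : (nod hM w)[m] = g m := cover_entry hM hw3 hw4
  have huw : u = w := win_unique hM hu2 hu3 hw2 hw3 (by rw [hvu, hvw, hm])
  subst huw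
  have hnm : n = m := nod_get_inj hM hu3 hw3 (by rw [hvu, hvw, hm])
  subst hnm
  have hfd : (nod hM u)[d]'(by omega) = f d := cover_entry_lt hM h hu3 hu4
  have hgd : (nod hM u)[d]'(by omega) = g d := cover_entry_lt hM h hw3 hw4
  exact hdspec (by rw [← hfd, hgd])

lemma good_bits {z : ℕ → Bool} : ∀ {u : List ℕ}, Good z u → ∀ {i : ℕ} {t' : List ℕ},
    (i :: t') <:+ u → i % 2 = zBit z t'.length := by
  intro u
  induction u with
  | nil =>
    intro _ i t' h
    have := List.suffix_nil.mp h
    exact absurd this (List.cons_ne_nil _ _)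
  | cons j w ih =>
    intro hg i t' h
    rcases List.suffix_cons_iff.mp h with heq | h'
    · injection heq with h1 h2
      subst h1; subst h2
      exact hg.1
    · exact ih hg.2 h'

lemma Tz_cross {z z' : ℕ → Bool} (hzz : z ≠ z') {f : ℕ → ℕ}
    (hf : f ∈ branches (Tz hM z)) (hf' : f ∈ branches (Tz hM z')) : False := by
  classical
  have hex : ∃ k, z k ≠ z' k := Function.ne_iff.mp hzz
  set k₀ := Nat.find hex with hk₀
  have cov : ∀ n : ℕ, ∃ u, (Good z u ∧ Good z' u) ∧ pLen hM u ≤ n ∧ n < (nod hM u).length ∧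
      seg f (n+1) = (nod hM u).take (n+1) := by
    intro n
    obtain ⟨u, hgu, hu2, hu3, hu4⟩ := branch_cover hM hf n
    obtain ⟨w, hgw, hw2, hw3, hw4⟩ := branch_cover hM hf' n
    have hvu : (nod hM u)[n] = f n := cover_entry hM hu3 hu4
    have hvw : (nod hM w)[n] = f n := cover_entry hM hw3 hw4
    have huw : u = w := win_unique hM hu2 hu3 hw2 hw3 (by rw [hvu, hvw])
    subst huw
    exact ⟨u, ⟨hgu, hgw⟩, hu2, hu3, hu4⟩
  choose u hu1 hu2 hu3 hu4 using cov
  have chain : ∀ n, u n <:+ u (n+1) := by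
    intro n
    have hlt : n < (nod hM (u (n+1))).length := by
      have := hu3 (n+1); omega
    obtain ⟨w, hw1, hw2, hw3⟩ := walk hM hlt
    have hnodpre : nod hM w <+: nod hM (u (n+1)) := nod_suffix_prefix hM hw1
    have e1 : (nod hM w)[n]'hw3 = (nod hM (u (n+1)))[n]'hlt := hnodpre.getElem hw3
    have e2 : (nod hM (u (n+1)))[n]'hlt = f n :=
      cover_entry_lt hM (by omega) (hu3 (n+1)) (hu4 (n+1))
    have e3 : (nod hM (u n))[n]'(hu3 n) = f n := cover_entry hM (hu3 n) (hu4 n)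
    have : u n = w := win_unique hM (hu2 n) (hu3 n) hw2 hw3 (by rw [e3, e1, e2])
    rw [this]
    exact hw1
  have chainle : ∀ {n m : ℕ}, n ≤ m → u n <:+ u m := by
    intro n m hnm
    induction m with
    | zero => have : n = 0 := by omega
              subst this; exact List.suffix_refl _
    | succ m ih =>
      rcases Nat.lt_or_ge n (m+1) with h | h
      · exact (ih (by omega)).trans (chain m)
      · have : n = m+1 := by omega
        subst this; exact List.suffix_refl _
  -- lengths of the index paths are unbounded
  have grow : ∀ j : ℕ, ∃ n, j ≤ (u n).length := by
    intro j
    induction j with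
    | zero => exact ⟨0, Nat.zero_le _⟩
    | succ j ih =>
      obtain ⟨n, hn⟩ := ih
      set n' := (nod hM (u n)).length with hn'
      have hnn' : n ≤ n' := by have := hu3 n; omega
      have hsuf : u n <:+ u n' := chainle hnn'
      have hne : u n ≠ u n' := by
        intro hcontra
        have h1 := hu3 n'
        rw [← hcontra] at h1
        omega
      have : (u n).length < (u n').length := by
        have h1 := hsuf.length_le
        rcases Nat.eq_or_lt_of_le h1 with h2 | h2
        · exact absurd (hsuf.eq_of_length h2) hne
        · exact h2
      exact ⟨n', by omega⟩
  obtain ⟨n, hn⟩ := grow (k₀+1)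
  -- the suffix of `u n` of length `k₀+1`
  set t'' := (u n).drop ((u n).length - (k₀+1)) with ht''
  have hlen'' : t''.length = k₀+1 := by
    rw [ht'', List.length_drop]
    omega
  have hne'' : t'' ≠ [] := by
    intro h
    rw [h] at hlen''
    simp at hlen''
  obtain ⟨i, t₃, he⟩ := List.exists_cons_of_ne_nil hne''
  have hsuf'' : (i :: t₃) <:+ u n := by
    rw [← he]
    exact List.drop_suffix _ _
  have hlent₃ : t₃.length = k₀ := by
    rw [he] at hlen''
    simpa using hlen''
  have hb1 : i % 2 = zBit z k₀ := by
    have := good_bits (hu1 n).1 hsuf''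
    rwa [hlent₃] at this
  have hb2 : i % 2 = zBit z' k₀ := by
    have := good_bits (hu1 n).2 hsuf''
    rwa [hlent₃] at this
  have : z k₀ = z' k₀ := by
    have h3 : zBit z k₀ = zBit z' k₀ := by omega
    unfold zBit at h3
    rcases hz : z k₀ <;> rcases hz' : z' k₀ <;> rw [hz, hz'] at h3 <;> simp at h3 <;> rfl
  exact (Nat.find_spec hex) this

include hM in
theorem miller_shrink {ι : Type} (P : ι → (ℕ → ℕ))
    (hsmall : Cardinal.mk ι < Cardinal.continuum) :
    ∃ N, IsMiller N ∧ N ⊆ M ∧ ADB N ∧ ∀ i, P i ∉ branches N := by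
  classical
  set A : ι → Set (ℕ → Bool) := fun i => {z | P i ∈ branches (Tz hM z)} with hA
  have hsub : ∀ i, (A i).Subsingleton := by
    intro i z hz z' hz'
    by_contra hne
    exact Tz_cross hM hne hz hz'
  have hone : ∀ i, Cardinal.mk (A i) ≤ 1 := fun i =>
    Cardinal.mk_le_one_iff_set_subsingleton.mpr (hsub i)
  have hcard : Cardinal.mk (⋃ i, A i) < Cardinal.continuum := by
    calc Cardinal.mk (⋃ i, A i) ≤ Cardinal.mk ι * ⨆ i, Cardinal.mk (A i) :=
          Cardinal.mk_iUnion_le A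
    _ ≤ Cardinal.mk ι * 1 := mul_le_mul' (le_refl _) (ciSup_le' hone)
    _ = Cardinal.mk ι := mul_one _
    _ < Cardinal.continuum := hsmall
  have hne : (⋃ i, A i) ≠ Set.univ := by
    intro h
    rw [h, Cardinal.mk_univ, mk_nat_bool] at hcard
    exact lt_irrefl _ hcard
  obtain ⟨z, hz⟩ := (Set.ne_univ_iff_exists_notMem _).mp hne
  refine ⟨Tz hM z, Tz_miller hM z, Tz_sub hM z, Tz_adb hM z, fun i hmem => ?_⟩
  exact hz (Set.mem_iUnion.mpr ⟨i, hmem⟩)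

end Branches

section Assembly
open Cardinal

lemma ADB_empty : ADB (∅ : Set (List ℕ)) := by
  intro f hf
  exact absurd (hf.2 0) (Set.notMem_empty _)

abbrev Idx : Type := (Cardinal.continuum.{0}).ord.ToType

lemma Idx_lt_small (α : Idx) : #{β : Idx // β < α} < Cardinal.continuum := by
  exact Cardinal.mk_Iio_toType_ord_lt α

lemma Idx_option_small (α : Idx) :
    #(Option {β : Idx // β < α}) < Cardinal.continuum := by
  rw [Cardinal.mk_option]
  exact Cardinal.add_lt_of_lt Cardinal.aleph0_le_continuum (Idx_lt_small α)
    (Cardinal.one_lt_aleph0.trans_le Cardinal.aleph0_le_continuum)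

lemma mk_Idx : #Idx = Cardinal.continuum := Cardinal.mk_ord_toType _

variable (Φ : Idx → Set (List ℕ) × Set (List ℕ))

/-- the state space of the recursion: a chosen branch and a chosen Miller subtree. -/
abbrev RState : Type := (ℕ → ℕ) × Set (List ℕ)

def PropX (α : Idx) (prev : ∀ β : Idx, β < α → RState) (x : ℕ → ℕ) : Prop :=
  (IsMatet (Φ α).1 ∧ ∀ β (h : β < α), ADB (prev β h).2) →
    (x ∈ branches (Φ α).1 ∧ ∀ β (h : β < α), x ∉ branches (prev β h).2)

lemma exX (α : Idx) (prev : ∀ β : Idx, β < α → RState) : ∃ x, PropX Φ α prev x := by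
  classical
  by_cases hc : IsMatet (Φ α).1 ∧ ∀ β (h : β < α), ADB (prev β h).2
  · obtain ⟨x, hx1, hx2⟩ := exists_branch_avoiding hc.1
      (fun b : {β : Idx // β < α} => (prev b.1 b.2).2) (Idx_lt_small α)
      (fun b => hc.2 b.1 b.2)
    exact ⟨x, fun _ => ⟨hx1, fun β h => hx2 ⟨β, h⟩⟩⟩
  · exact ⟨fun n => n, fun h => absurd h hc⟩

def PropN (α : Idx) (prev : ∀ β : Idx, β < α → RState) (x : ℕ → ℕ)
    (N : Set (List ℕ)) : Prop :=
  ADB N ∧ (IsMiller (Φ α).2 → (IsMiller N ∧ N ⊆ (Φ α).2 ∧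
    (∀ β (h : β < α), (prev β h).1 ∉ branches N) ∧ x ∉ branches N))

lemma exN (α : Idx) (prev : ∀ β : Idx, β < α → RState) (x : ℕ → ℕ) :
    ∃ N, PropN Φ α prev x N := by
  classical
  by_cases hm : IsMiller (Φ α).2
  · obtain ⟨N, h1, h2, h3, h4⟩ := miller_shrink hm (ι := Option {β : Idx // β < α})
      (fun o => Option.elim o x (fun b => (prev b.1 b.2).1)) (Idx_option_small α)
    refine ⟨N, h3, fun _ => ⟨h1, h2, fun β h => h4 (some ⟨β, h⟩), h4 none⟩⟩
  · exact ⟨∅, ADB_empty, fun h => absurd h hm⟩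

noncomputable def Fst (α : Idx) (prev : ∀ β : Idx, β < α → RState) : RState :=
  ((exX Φ α prev).choose, (exN Φ α prev (exX Φ α prev).choose).choose)

noncomputable def St : Idx → RState :=
  WellFounded.fix (wellFounded_lt) (Fst Φ)

lemma St_eq (α : Idx) : St Φ α = Fst Φ α (fun β _ => St Φ β) :=
  WellFounded.fix_eq _ _ _

lemma St_specX (α : Idx) : PropX Φ α (fun β _ => St Φ β) (St Φ α).1 := by
  rw [St_eq]
  exact (exX Φ α _).choose_spec

lemma St_specN (α : Idx) :
    PropN Φ α (fun β _ => St Φ β) (St Φ α).1 (St Φ α).2 := by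
  rw [St_eq]
  exact (exN Φ α _ _).choose_spec

lemma St_ADB (α : Idx) : ADB (St Φ α).2 := (St_specN Φ α).1

lemma St_X (α : Idx) (h : IsMatet (Φ α).1) :
    (St Φ α).1 ∈ branches (Φ α).1 ∧ ∀ β, β < α → (St Φ α).1 ∉ branches (St Φ β).2 := by
  have := St_specX Φ α ⟨h, fun β hb => St_ADB Φ β⟩
  exact ⟨this.1, fun β hb => this.2 β hb⟩

lemma St_N (α : Idx) (h : IsMiller (Φ α).2) :
    IsMiller (St Φ α).2 ∧ (St Φ α).2 ⊆ (Φ α).2 ∧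
      (∀ β, β < α → (St Φ β).1 ∉ branches (St Φ α).2) ∧
      (St Φ α).1 ∉ branches (St Φ α).2 := by
  have := (St_specN Φ α).2 h
  exact ⟨this.1, this.2.1, fun β hb => this.2.2.1 β hb, this.2.2.2⟩

end Assembly

open Cardinal in
theorem main_theorem :
    ∃ X : Set (ℕ → ℕ), (∀ f ∈ X, StrictMono f) ∧
      inIdeal IsMiller X ∧ ¬ inIdeal IsMatet X := by
  classical
  have hcard : #Idx = #(Set (List ℕ) × Set (List ℕ)) := by
    rw [mk_Idx, Cardinal.mk_prod]
    rw [Cardinal.mk_set, Cardinal.mk_list_eq_aleph0, Cardinal.two_power_aleph0]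
    simp [Cardinal.mul_eq_self Cardinal.aleph0_le_continuum]
  obtain ⟨e⟩ := Cardinal.eq.mp hcard
  set Φ : Idx → Set (List ℕ) × Set (List ℕ) := fun α => e α with hΦ
  set X : Set (ℕ → ℕ) := {f | ∃ α, IsMatet (Φ α).1 ∧ f = (St Φ α).1} with hX
  refine ⟨X, ?_, ?_, ?_⟩
  · rintro f ⟨α, hα, rfl⟩
    exact ((St_X Φ α hα).1).1
  · intro Mt hMt
    set α := e.symm (∅, Mt) with hα
    have h2 : (Φ α).2 = Mt := by rw [hΦ]; simp [hα]
    have hm : IsMiller (Φ α).2 := by rw [h2]; exact hMt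
    obtain ⟨hN1, hN2, hN3, hN4⟩ := St_N Φ α hm
    refine ⟨(St Φ α).2, hN1, by rw [h2] at hN2; exact hN2, ?_⟩
    ext f
    simp only [Set.mem_inter_iff, Set.mem_empty_iff_false, iff_false]
    rintro ⟨hfb, γ, hγ, rfl⟩
    rcases lt_trichotomy γ α with h | h | h
    · exact hN3 γ h hfb
    · subst h
      exact hN4 hfb
    · exact (St_X Φ γ hγ).2 α h hfb
  · intro hideal
    have hsys0 : IsMatetSystem [] (fun n => ({n} : Finset ℕ)) := by
      refine ⟨List.isChain_nil, fun n => ⟨n, Finset.mem_singleton_self n⟩, ?_, ?_⟩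
      · intro x hx
        exact absurd hx (List.not_mem_nil)
      · intro n x hx y hy
        rw [Finset.mem_singleton] at hx hy
        omega
    have hT0 : IsMatet (matetTree [] (fun n => ({n} : Finset ℕ))) :=
      ⟨[], fun n => {n}, hsys0, rfl⟩
    obtain ⟨T', hT', hsub, hempty⟩ := hideal _ hT0
    set α := e.symm (T', ∅) with hα
    have h1 : (Φ α).1 = T' := by rw [hΦ]; simp [hα]
    have hm : IsMatet (Φ α).1 := by rw [h1]; exact hT'
    have hx := (St_X Φ α hm).1
    rw [h1] at hx
    have hmem : (St Φ α).1 ∈ branches T' ∩ X := ⟨hx, ⟨α, hm, rfl⟩⟩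
    rw [hempty] at hmem
    exact hmem

end MM

/-- **Theorem 2.6.** `m⁰ \ t⁰ ≠ ∅`: there is a set of strictly increasing functions
belonging to the Miller ideal `m⁰` but not to the Matet ideal `t⁰`. -/
theorem miller_ideal_not_subset_matet_ideal :
    ∃ X : Set (ℕ → ℕ), (∀ f ∈ X, StrictMono f) ∧
      inIdeal IsMiller X ∧ ¬ inIdeal IsMatet X :=
  MM.main_theorem
end

section
/- The Silver ideal v^0 and the Matet ideal t^0 are orthogonal: there exists a set X ⊆ ω^{↑ω} such that X ∈ v^0 and for every Matet tree T there is a Matet tree T' ⊆ T with [T'] ⊆ X (hence the complement of X belongs to t^0). -/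
/-- The initial segment of length `n` of the increasing enumeration of `X`. -/
noncomputable def enumList (X : Set ℕ) (n : ℕ) : List ℕ :=
  (List.range n).map (Nat.nth fun k => k ∈ X)

/-- The Silver tree determined by `G = g⁻¹(1)` and the (infinite) set `F` of free
coordinates: all initial segments of increasing enumerations of infinite sets `X`
with `G ⊆ X ⊆ G ∪ F`. -/
def silverTree (G F : Set ℕ) : Set (List ℕ) :=
  {σ | ∃ X : Set ℕ, X.Infinite ∧ G ⊆ X ∧ X ⊆ G ∪ F ∧ ∃ n, σ = enumList X n}

/-- A Silver tree. -/
def IsSilver (V : Set (List ℕ)) : Prop :=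
  ∃ G F : Set ℕ, F.Infinite ∧ Disjoint G F ∧ V = silverTree G F

namespace SMO

lemma map_range_eq {α : Type*} {f g : ℕ → α} {n i : ℕ}
    (h : (List.range n).map f = (List.range n).map g) (hi : i < n) : f i = g i := by
  have hlen : i < ((List.range n).map f).length := by simpa using hi
  have := List.getElem_of_eq h hlen
  simpa using this

lemma mem_seg {f : ℕ → ℕ} {n i : ℕ} (hi : i < n) : f i ∈ seg f n := by
  simp only [seg, List.mem_map, List.mem_range]
  exact ⟨i, hi, rfl⟩

lemma silverTree_mono {G F G₁ F₁ : Set ℕ} (hG : G ⊆ G₁) (hsub : G₁ ∪ F₁ ⊆ G ∪ F) :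
    silverTree G₁ F₁ ⊆ silverTree G F := by
  rintro σ ⟨X, hXinf, hGX, hXsub, n, rfl⟩
  exact ⟨X, hXinf, hG.trans hGX, hXsub.trans hsub, n, rfl⟩

lemma silver_branch_subset {G F : Set ℕ} {f : ℕ → ℕ}
    (hf : f ∈ branches (silverTree G F)) : Set.range f ⊆ G ∪ F := by
  rintro _ ⟨n, rfl⟩
  obtain ⟨X, hXinf, hGX, hXsub, m, hm⟩ := hf.2 (n + 1)
  have hlen : n + 1 = m := by
    have := congrArg List.length hm
    simpa [seg, enumList] using this
  subst hlen
  have hfn : f n = Nat.nth (fun k => k ∈ X) n := map_range_eq hm (Nat.lt_succ_self n)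
  have : f n ∈ X := by
    rw [hfn]; exact Nat.nth_mem_of_infinite hXinf n
  exact hXsub this

lemma silver_branch_kernel {G F : Set ℕ} {f : ℕ → ℕ}
    (hf : f ∈ branches (silverTree G F)) : G ⊆ Set.range f := by
  intro g hg
  obtain ⟨X, hXinf, hGX, hXsub, m, hm⟩ := hf.2 (g + 2)
  have hlen : g + 2 = m := by
    have := congrArg List.length hm
    simpa [seg, enumList] using this
  subst hlen
  have hfi : ∀ i < g + 2, f i = Nat.nth (fun k => k ∈ X) i := fun i hi => map_range_eq hm hi
  classical
  have hgX : g ∈ X := hGX hg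
  have hk : Nat.nth (fun k => k ∈ X) (Nat.count (fun k => k ∈ X) g) = g :=
    Nat.nth_count hgX
  set k := Nat.count (fun k => k ∈ X) g with hkdef
  have hmono : StrictMono (Nat.nth fun k => k ∈ X) := Nat.nth_strictMono hXinf
  have hglt : g < f (g + 1) := lt_of_lt_of_le (Nat.lt_succ_self g) hf.1.le_apply
  have hlt : Nat.nth (fun k => k ∈ X) k < Nat.nth (fun k => k ∈ X) (g + 1) := by
    rw [hk, ← hfi (g + 1) (by omega)]; exact hglt
  have hklt : k < g + 1 := hmono.lt_iff_lt.mp hlt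
  refine ⟨k, ?_⟩
  rw [hfi k (by omega), hk]

section Matet

variable {s : List ℕ} {a : ℕ → Finset ℕ}

lemma block_lt_block (h : IsMatetSystem s a) {i : ℕ} :
    ∀ {j}, i < j → ∀ {u v}, u ∈ a i → v ∈ a j → u < v := by
  intro j
  induction j with
  | zero => intro hij; omega
  | succ j ih =>
    intro hij u v hu hv
    rcases Nat.lt_succ_iff_lt_or_eq.mp hij with h' | h'
    · obtain ⟨w, hw⟩ := h.2.1 j
      exact (ih h' hu hw).trans (h.2.2.2 j w hw v hv)
    · subst h'; exact h.2.2.2 i u hu v hv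

lemma s_lt_block (h : IsMatetSystem s a) {i : ℕ} :
    ∀ u ∈ s, ∀ v ∈ a i, u < v := by
  induction i with
  | zero => exact h.2.2.1
  | succ i ih =>
    intro u hu v hv
    obtain ⟨w, hw⟩ := h.2.1 i
    exact (ih u hu w hw).trans (h.2.2.2 i w hw v hv)

lemma blocks_disjoint (h : IsMatetSystem s a) {i k u} (hne : i ≠ k)
    (hu : u ∈ a i) (hu' : u ∈ a k) : False := by
  rcases hne.lt_or_gt with h' | h'
  · exact lt_irrefl u (block_lt_block h h' hu hu')
  · exact lt_irrefl u (block_lt_block h h' hu' hu)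

lemma mem_word {l : List ℕ} {u : ℕ} :
    u ∈ s ++ (l.map fun i => (a i).sort (· ≤ ·)).flatten ↔ u ∈ s ∨ ∃ i ∈ l, u ∈ a i := by
  simp [List.mem_flatten, Finset.mem_sort]

lemma flatten_pairwise (h : IsMatetSystem s a) :
    ∀ {l : List ℕ}, List.Chain' (· < ·) l →
      List.Pairwise (· < ·) ((l.map fun i => (a i).sort (· ≤ ·)).flatten) := by
  intro l
  induction l with
  | nil => simp
  | cons i t ih =>
    intro hl
    simp only [List.map_cons, List.flatten_cons]
    rw [List.pairwise_append]
    refine ⟨(Finset.sortedLT_sort _).pairwise, ih hl.tail, ?_⟩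
    intro u hu v hv
    have hu' : u ∈ a i := (Finset.mem_sort _).mp hu
    obtain ⟨L, hL, hvL⟩ := List.mem_flatten.mp hv
    obtain ⟨j, hjt, rfl⟩ := List.mem_map.mp hL
    have hv' : v ∈ a j := (Finset.mem_sort _).mp hvL
    have hij : i < j := by
      have hp := List.isChain_iff_pairwise.mp hl
      exact (List.pairwise_cons.mp hp).1 j hjt
    exact block_lt_block h hij hu' hv'

lemma word_pairwise (h : IsMatetSystem s a) {l : List ℕ} (hl : List.Chain' (· < ·) l) :
    List.Pairwise (· < ·) (s ++ (l.map fun i => (a i).sort (· ≤ ·)).flatten) := by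
  rw [List.pairwise_append]
  refine ⟨List.isChain_iff_pairwise.mp h.1, flatten_pairwise h hl, ?_⟩
  intro u hu v hv
  obtain ⟨L, hL, hvL⟩ := List.mem_flatten.mp hv
  obtain ⟨j, hjt, rfl⟩ := List.mem_map.mp hL
  exact s_lt_block h u hu v ((Finset.mem_sort _).mp hvL)

lemma matet_branch_subset {f : ℕ → ℕ} (hf : f ∈ branches (matetTree s a)) (n : ℕ) :
    f n ∈ s ∨ ∃ i, f n ∈ a i := by
  obtain ⟨l, hl, t, ht⟩ := hf.2 (n + 1)
  have : f n ∈ s ++ (l.map fun i => (a i).sort (· ≤ ·)).flatten := by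
    rw [← ht]
    exact List.mem_append_left _ (mem_seg (Nat.lt_succ_self n))
  rcases mem_word.mp this with h' | ⟨i, _, h'⟩
  · exact Or.inl h'
  · exact Or.inr ⟨i, h'⟩

lemma matet_branch_complete (h : IsMatetSystem s a) {f : ℕ → ℕ}
    (hf : f ∈ branches (matetTree s a)) {k : ℕ} {u : ℕ}
    (hu : u ∈ Set.range f) (huk : u ∈ a k) : ∀ v ∈ a k, v ∈ Set.range f := by
  intro v hv
  obtain ⟨j, rfl⟩ := hu
  set m := (a k).max' (h.2.1 k) with hm
  have hum : f j ≤ m := Finset.le_max' _ _ huk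
  have hvm : v ≤ m := Finset.le_max' _ _ hv
  have hfm : m < f (m + 1) := lt_of_lt_of_le (Nat.lt_succ_self m) hf.1.le_apply
  have hj : j < m + 2 := by
    by_contra h'
    push_neg at h'
    have : j ≤ f j := hf.1.le_apply
    omega
  obtain ⟨l, hl, t, ht⟩ := hf.2 (m + 2)
  have hfjword : f j ∈ s ++ (l.map fun i => (a i).sort (· ≤ ·)).flatten := by
    rw [← ht]; exact List.mem_append_left _ (mem_seg hj)
  have hfs : f j ∉ s := fun hmem => lt_irrefl (f j) (s_lt_block h _ hmem _ huk)
  rcases mem_word.mp hfjword with h' | ⟨i, hil, hfi⟩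
  · exact absurd h' hfs
  have hik : i = k := by
    by_contra hne
    exact blocks_disjoint h hne hfi huk
  subst hik
  have hvword : v ∈ s ++ (l.map fun i => (a i).sort (· ≤ ·)).flatten :=
    mem_word.mpr (Or.inr ⟨i, hil, hv⟩)
  rw [← ht] at hvword
  rcases List.mem_append.mp hvword with h' | h'
  · simp only [seg, List.mem_map, List.mem_range] at h'
    obtain ⟨idx, _, rfl⟩ := h'
    exact ⟨idx, rfl⟩
  · exfalso
    have hpw := word_pairwise h hl
    rw [← ht, List.pairwise_append] at hpw
    have : f (m + 1) < v := hpw.2.2 _ (mem_seg (by omega)) _ h'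
    omega

end Matet

section Slots

def rho (x : ℕ → Bool) : ℕ → ℕ
  | 0 => 0
  | r + 1 => 2 * rho x r + (if x r then 1 else 0)

lemma rho_lt (x : ℕ → Bool) (r : ℕ) : rho x r < 2 ^ r := by
  induction r with
  | zero => simp [rho]
  | succ r ih =>
    have : 2 ^ (r + 1) = 2 * 2 ^ r := by ring
    rcases Bool.eq_false_or_eq_true (x r) with h | h <;> simp [rho, h] <;> omega

lemma rho_congr {x y : ℕ → Bool} {r : ℕ} (h : ∀ i < r, x i = y i) : rho x r = rho y r := by
  induction r with
  | zero => rfl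
  | succ r ih =>
    have h1 : x r = y r := h r (Nat.lt_succ_self r)
    have h2 : rho x r = rho y r := ih fun i hi => h i (by omega)
    simp [rho, h1, h2]

lemma rho_eq_imp {x y : ℕ → Bool} {r : ℕ} (h : rho x r = rho y r) : ∀ i < r, x i = y i := by
  induction r with
  | zero => omega
  | succ r ih =>
    have hx := rho_lt x r
    have hy := rho_lt y r
    have hbit : x r = y r ∧ rho x r = rho y r := by
      rcases Bool.eq_false_or_eq_true (x r) with h1 | h1 <;>
        rcases Bool.eq_false_or_eq_true (y r) with h2 | h2 <;>
          simp [rho, h1, h2] at h ⊢ <;> omega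
    intro i hi
    rcases Nat.lt_succ_iff_lt_or_eq.mp hi with h' | h'
    · exact ih hbit.2 i h'
    · subst h'; exact hbit.1

lemma rho_lt_rho {x y : ℕ → Bool} {d : ℕ} (hagree : ∀ i < d, x i = y i)
    (hx : x d = false) (hy : y d = true) : ∀ {r}, d < r → rho x r < rho y r := by
  intro r
  induction r with
  | zero => omega
  | succ r ih =>
    intro hdr
    rcases Nat.lt_succ_iff_lt_or_eq.mp hdr with h' | h'
    · have := ih h'
      have hb : (if x r then 1 else 0) ≤ 1 := by split <;> omega
      have hb' : (0:ℕ) ≤ (if y r then 1 else 0) := by omega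
      simp only [rho]
      omega
    · subst h'
      have : rho x d = rho y d := rho_congr hagree
      simp [rho, hx, hy, this]

def slotStart (r : ℕ) : ℕ := 2 ^ (r + 1) - 2

def hslot (x : ℕ → Bool) (r : ℕ) : ℕ := slotStart r + rho x r

def pslot (x : ℕ → Bool) (r : ℕ) : ℕ := slotStart r + 2 ^ r + rho x r

lemma slotStart_succ (r : ℕ) : slotStart (r + 1) = slotStart r + 2 ^ (r + 1) := by
  have h1 : (2:ℕ) ≤ 2 ^ (r + 1) := Nat.one_lt_two_pow (by omega)
  have : 2 ^ (r + 2) = 2 * 2 ^ (r + 1) := by ring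
  simp only [slotStart]
  omega

lemma slotStart_mono : Monotone slotStart := by
  intro r q h
  have := Nat.pow_le_pow_right (by omega : 1 ≤ 2) (Nat.add_le_add_right h 1)
  simp only [slotStart]
  omega

lemma self_le_slotStart (r : ℕ) : r ≤ slotStart r := by
  have := Nat.lt_two_pow_self (n := r + 1)
  simp only [slotStart]
  omega

lemma hslot_bounds (x : ℕ → Bool) (r : ℕ) :
    slotStart r ≤ hslot x r ∧ hslot x r < slotStart r + 2 ^ r := by
  have := rho_lt x r
  simp only [hslot]
  omega

lemma pslot_bounds (x : ℕ → Bool) (r : ℕ) :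
    slotStart r + 2 ^ r ≤ pslot x r ∧ pslot x r < slotStart (r + 1) := by
  have := rho_lt x r
  rw [slotStart_succ]
  have h2 : 2 ^ (r + 1) = 2 * 2 ^ r := by ring
  simp only [pslot]
  omega

lemma hslot_lt_pslot (x y : ℕ → Bool) (r : ℕ) : hslot x r < pslot y r := by
  have h1 := (hslot_bounds x r).2
  have h2 := (pslot_bounds y r).1
  omega

lemma pslot_lt_hslot (x y : ℕ → Bool) {r q : ℕ} (h : r < q) : pslot x r < hslot y q := by
  have h1 := (pslot_bounds x r).2
  have h2 := slotStart_mono (show r + 1 ≤ q by omega)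
  have h3 := (hslot_bounds y q).1
  omega

lemma hslot_lt_hslot_round (x y : ℕ → Bool) {r q : ℕ} (h : r < q) : hslot x r < hslot y q := by
  have h1 := hslot_lt_pslot x x r
  have h2 := pslot_lt_hslot x y h
  omega

lemma pslot_lt_pslot_round (x y : ℕ → Bool) {r q : ℕ} (h : r < q) : pslot x r < pslot y q := by
  have h1 := pslot_lt_hslot x y h
  have h2 := hslot_lt_pslot y y q
  omega

lemma hslot_lt_pslot_le (x y : ℕ → Bool) {r q : ℕ} (h : r ≤ q) : hslot x r < pslot y q := by
  rcases Nat.lt_or_ge r q with h' | h'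
  · have h1 := pslot_lt_hslot x y h'
    have := hslot_lt_pslot x x r
    have := hslot_lt_pslot y y q
    have := hslot_lt_hslot_round x y h'
    omega
  · have : r = q := by omega
    subst this
    exact hslot_lt_pslot x y r

lemma hslot_eq_imp {x y : ℕ → Bool} {r q : ℕ} (h : hslot x r = hslot y q) :
    r = q ∧ rho x r = rho y q := by
  have hrq : r = q := by
    by_contra hne
    rcases Nat.lt_or_ge r q with h' | h'
    · have := hslot_lt_hslot_round x y h'
      omega
    · have h'' : q < r := by omega
      have := hslot_lt_hslot_round y x h''
      omega
  subst hrq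
  refine ⟨rfl, ?_⟩
  simp only [hslot] at h
  omega

lemma pslot_eq_imp {x y : ℕ → Bool} {r q : ℕ} (h : pslot x r = pslot y q) :
    r = q ∧ rho x r = rho y q := by
  have hrq : r = q := by
    by_contra hne
    rcases Nat.lt_or_ge r q with h' | h'
    · have := pslot_lt_pslot_round x y h'
      omega
    · have h'' : q < r := by omega
      have := pslot_lt_pslot_round y x h''
      omega
  subst hrq
  refine ⟨rfl, ?_⟩
  simp only [pslot] at h
  omega

lemma hslot_ne_pslot (x y : ℕ → Bool) (r q : ℕ) : hslot x r ≠ pslot y q := by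
  rcases Nat.lt_or_ge r q with h' | h'
  · have := hslot_lt_pslot_le x y (le_of_lt h')
    omega
  · rcases Nat.lt_or_ge q r with h'' | h''
    · have h1 := (pslot_bounds y q).2
      have h2 := slotStart_mono (show q + 1 ≤ r by omega)
      have h3 := (hslot_bounds x r).1
      omega
    · have : r = q := by omega
      subst this
      have := hslot_lt_pslot x y r
      omega

end Slots

section Cube

noncomputable def uF (F : Set ℕ) : ℕ → ℕ := Nat.nth (fun k => k ∈ F)

lemma uF_mono {F : Set ℕ} (hF : F.Infinite) : StrictMono (uF F) :=
  Nat.nth_strictMono hF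

lemma uF_mem {F : Set ℕ} (hF : F.Infinite) (n : ℕ) : uF F n ∈ F :=
  Nat.nth_mem_of_infinite hF n

lemma uF_ge {F : Set ℕ} (hF : F.Infinite) (n : ℕ) : n ≤ uF F n :=
  (uF_mono hF).le_apply

def Hker (F : Set ℕ) (x : ℕ → Bool) : Set ℕ := Set.range fun r => uF F (hslot x r)

def Pads (F : Set ℕ) (x : ℕ → Bool) : Set ℕ := Set.range fun r => uF F (pslot x r)

lemma Hker_subset {F : Set ℕ} (hF : F.Infinite) (x : ℕ → Bool) : Hker F x ⊆ F := by
  rintro _ ⟨r, rfl⟩; exact uF_mem hF _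

lemma Pads_subset {F : Set ℕ} (hF : F.Infinite) (x : ℕ → Bool) : Pads F x ⊆ F := by
  rintro _ ⟨r, rfl⟩; exact uF_mem hF _

lemma Hker_infinite {F : Set ℕ} (hF : F.Infinite) (x : ℕ → Bool) : (Hker F x).Infinite := by
  apply Set.infinite_range_of_injective
  intro r q h
  have := hslot_eq_imp ((uF_mono hF).injective h)
  exact this.1

lemma Pads_infinite {F : Set ℕ} (hF : F.Infinite) (x : ℕ → Bool) : (Pads F x).Infinite := by
  apply Set.infinite_range_of_injective
  intro r q h
  have := pslot_eq_imp ((uF_mono hF).injective h)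
  exact this.1

lemma Hker_Pads_disjoint {F : Set ℕ} (hF : F.Infinite) (x y : ℕ → Bool) :
    Disjoint (Hker F x) (Pads F y) := by
  rw [Set.disjoint_left]
  rintro _ ⟨r, rfl⟩ ⟨q, hq⟩
  exact hslot_ne_pslot x y r q ((uF_mono hF).injective hq.symm)

lemma val_hslot_not_mem_other {F : Set ℕ} (hF : F.Infinite) {x y : ℕ → Bool} {d r : ℕ}
    (hd : x d ≠ y d) (hr : d < r) :
    uF F (hslot x r) ∉ Hker F y ∪ Pads F y := by
  rintro (⟨q, hq⟩ | ⟨q, hq⟩)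
  · have h1 := hslot_eq_imp ((uF_mono hF).injective hq)
    obtain ⟨hqr, hrho⟩ := h1
    subst hqr
    exact hd ((rho_eq_imp hrho d hr).symm)
  · exact hslot_ne_pslot x y r q ((uF_mono hF).injective hq.symm)

noncomputable def SCube (F G : Set ℕ) (x : ℕ → Bool) : Set (List ℕ) :=
  silverTree (G ∪ Hker F x) (Pads F x)

lemma SCube_isSilver {F G : Set ℕ} (hF : F.Infinite) (hGF : Disjoint G F) (x : ℕ → Bool) :
    IsSilver (SCube F G x) := by
  refine ⟨G ∪ Hker F x, Pads F x, Pads_infinite hF x, ?_, rfl⟩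
  rw [Set.disjoint_union_left]
  exact ⟨hGF.mono_right (Pads_subset hF x), Hker_Pads_disjoint hF x x⟩

lemma SCube_subset {F G : Set ℕ} (hF : F.Infinite) (x : ℕ → Bool) :
    SCube F G x ⊆ silverTree G F := by
  apply silverTree_mono Set.subset_union_left
  intro v hv
  rcases hv with (hv | hv) | hv
  · exact Or.inl hv
  · exact Or.inr (Hker_subset hF x hv)
  · exact Or.inr (Pads_subset hF x hv)

end Cube

section Merge

variable {s : List ℕ} {a : ℕ → Finset ℕ}

def Ix (x : ℕ → Bool) : Set ℕ := Set.range fun r => Encodable.encode ((List.range r).map x)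

lemma Ix_infinite (x : ℕ → Bool) : (Ix x).Infinite := by
  apply Set.infinite_range_of_injective
  intro r q h
  have h2 := Encodable.encode_injective h
  have := congrArg List.length h2
  simpa using this

noncomputable def jIdx (x : ℕ → Bool) : ℕ → ℕ := Nat.nth (· ∈ Ix x)

lemma jIdx_mono (x : ℕ → Bool) : StrictMono (jIdx x) := Nat.nth_strictMono (Ix_infinite x)

lemma jIdx_mem (x : ℕ → Bool) (n : ℕ) : jIdx x n ∈ Ix x :=
  Nat.nth_mem_of_infinite (Ix_infinite x) n

noncomputable def MBlocks (a : ℕ → Finset ℕ) (x : ℕ → Bool) (k : ℕ) : Finset ℕ :=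
  a (jIdx x (2 * k)) ∪ a (jIdx x (2 * k + 1))

lemma MBlocks_system (h : IsMatetSystem s a) (x : ℕ → Bool) :
    IsMatetSystem s (MBlocks a x) := by
  refine ⟨h.1, ?_, ?_, ?_⟩
  · intro n
    exact (h.2.1 _).mono Finset.subset_union_left
  · intro u hu v hv
    rcases Finset.mem_union.mp hv with hv | hv
    · exact s_lt_block h u hu v hv
    · exact s_lt_block h u hu v hv
  · intro n u hu v hv
    have key : ∀ {i i' : ℕ}, i < i' → u ∈ a i → v ∈ a i' → u < v := fun hii hu' hv' =>
      block_lt_block h hii hu' hv'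
    rcases Finset.mem_union.mp hu with hu' | hu' <;>
      rcases Finset.mem_union.mp hv with hv' | hv'
    · exact key (jIdx_mono x (by omega)) hu' hv'
    · exact key (jIdx_mono x (by omega)) hu' hv'
    · exact key (jIdx_mono x (by omega)) hu' hv'
    · exact key (jIdx_mono x (by omega)) hu' hv'

lemma MBlocks_card (h : IsMatetSystem s a) (x : ℕ → Bool) (k : ℕ) :
    2 ≤ (MBlocks a x k).card := by
  obtain ⟨u, hu⟩ := h.2.1 (jIdx x (2 * k))
  obtain ⟨v, hv⟩ := h.2.1 (jIdx x (2 * k + 1))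
  have huv : u < v := block_lt_block h (jIdx_mono x (by omega)) hu hv
  exact Finset.one_lt_card.mpr
    ⟨u, Finset.mem_union_left _ hu, v, Finset.mem_union_right _ hv, huv.ne⟩

lemma sort_union {A B : Finset ℕ} (hAB : ∀ u ∈ A, ∀ v ∈ B, u < v) :
    (A ∪ B).sort (· ≤ ·) = A.sort (· ≤ ·) ++ B.sort (· ≤ ·) := by
  have hdisj : Disjoint A B :=
    Finset.disjoint_left.mpr fun {u} hu hu' => lt_irrefl u (hAB u hu u hu')
  refine (fun hp hs => List.Perm.eq_of_pairwise' (Finset.pairwise_sort _ _) hs hp) ?_ ?_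
  · rw [← Multiset.coe_eq_coe]
    have hval : (A ∪ B).val = A.val + B.val := by
      rw [Finset.union_val, eq_comm, Multiset.add_eq_union_iff_disjoint]
      exact Finset.disjoint_val.mpr hdisj
    calc ((A ∪ B).sort (· ≤ ·) : Multiset ℕ) = (A ∪ B).val := Finset.sort_eq _ _
      _ = A.val + B.val := hval
      _ = ((A.sort (· ≤ ·) : List ℕ) : Multiset ℕ) + ((B.sort (· ≤ ·) : List ℕ) : Multiset ℕ) := by
          rw [Finset.sort_eq, Finset.sort_eq]
      _ = ((A.sort (· ≤ ·) ++ B.sort (· ≤ ·) : List ℕ) : Multiset ℕ) := by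
          rw [← Multiset.coe_add]
  · rw [List.pairwise_append]
    refine ⟨Finset.pairwise_sort _ _, Finset.pairwise_sort _ _, ?_⟩
    intro u hu v hv
    exact le_of_lt (hAB u ((Finset.mem_sort _).mp hu) v ((Finset.mem_sort _).mp hv))

noncomputable def pairList (x : ℕ → Bool) (l : List ℕ) : List ℕ :=
  l.flatMap fun k => [jIdx x (2 * k), jIdx x (2 * k + 1)]

lemma mem_pairList {x : ℕ → Bool} {l : List ℕ} {v : ℕ} :
    v ∈ pairList x l ↔ ∃ k ∈ l, v = jIdx x (2 * k) ∨ v = jIdx x (2 * k + 1) := by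
  simp [pairList, List.mem_flatMap, eq_comm]

lemma pairList_chain (x : ℕ → Bool) {l : List ℕ} (hl : List.Chain' (· < ·) l) :
    List.Chain' (· < ·) (pairList x l) := by
  simp only [List.Chain', List.isChain_iff_pairwise] at hl ⊢
  induction l with
  | nil => simp [pairList]
  | cons k t ih =>
    have hl' := List.pairwise_cons.mp hl
    show List.Pairwise (· < ·) (([jIdx x (2 * k), jIdx x (2 * k + 1)] ++ pairList x t))
    rw [List.pairwise_append]
    refine ⟨?_, ih hl'.2, ?_⟩
    · simp [jIdx_mono x (by omega : 2 * k < 2 * k + 1)]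
    · intro u hu v hv
      obtain ⟨k', hk't, hv'⟩ := mem_pairList.mp hv
      have hkk' : k < k' := hl'.1 k' hk't
      have hu' : u = jIdx x (2 * k) ∨ u = jIdx x (2 * k + 1) := by simpa using hu
      have hmono : ∀ {m m' : ℕ}, m < m' → jIdx x m < jIdx x m' := fun h => jIdx_mono x h
      rcases hu' with rfl | rfl <;> rcases hv' with rfl | rfl <;>
        exact hmono (by omega)

lemma flatten_pair (h : IsMatetSystem s a) (x : ℕ → Bool) (l : List ℕ) :
    ((l.map fun k => (MBlocks a x k).sort (· ≤ ·)).flatten)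
      = (((pairList x l).map fun i => (a i).sort (· ≤ ·)).flatten) := by
  induction l with
  | nil => simp [pairList]
  | cons k t ih =>
    have hcross : ∀ u ∈ a (jIdx x (2 * k)), ∀ v ∈ a (jIdx x (2 * k + 1)), u < v :=
      fun u hu v hv => block_lt_block h (jIdx_mono x (by omega)) hu hv
    have hsort : (MBlocks a x k).sort (· ≤ ·)
        = (a (jIdx x (2 * k))).sort (· ≤ ·) ++ (a (jIdx x (2 * k + 1))).sort (· ≤ ·) :=
      sort_union hcross
    simp only [pairList, List.flatMap_cons, List.map_cons, List.flatten_cons, hsort,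
      List.map_append, List.flatten_append, List.map_nil, List.flatten_nil, List.append_nil,
      List.append_assoc]
    rw [show (t.flatMap fun k => [jIdx x (2 * k), jIdx x (2 * k + 1)]) = pairList x t from rfl,
      ih]

lemma MTree_subset (h : IsMatetSystem s a) (x : ℕ → Bool) :
    matetTree s (MBlocks a x) ⊆ matetTree s a := by
  rintro σ ⟨l, hl, hpre⟩
  refine ⟨pairList x l, pairList_chain x hl, ?_⟩
  rwa [flatten_pair h x l] at hpre

lemma MTree_range_subset (h : IsMatetSystem s a) {x : ℕ → Bool} {f : ℕ → ℕ}
    (hf : f ∈ branches (matetTree s (MBlocks a x))) (n : ℕ) :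
    f n ∈ s ∨ ∃ i ∈ Ix x, f n ∈ a i := by
  rcases matet_branch_subset hf n with h' | ⟨k, hk⟩
  · exact Or.inl h'
  · rcases Finset.mem_union.mp hk with hk' | hk'
    · exact Or.inr ⟨_, jIdx_mem x _, hk'⟩
    · exact Or.inr ⟨_, jIdx_mem x _, hk'⟩

lemma Ix_ad {x y : ℕ → Bool} (hne : x ≠ y) : (Ix x ∩ Ix y).Finite := by
  obtain ⟨n, hn⟩ : ∃ n, x n ≠ y n := by
    by_contra hc
    push_neg at hc
    exact hne (funext hc)
  apply Set.Finite.subset (Set.Finite.image (fun r => Encodable.encode ((List.range r).map x))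
    (Set.finite_Iic n))
  rintro e ⟨⟨r, rfl⟩, ⟨q, hq⟩⟩
  have h2 := Encodable.encode_injective hq
  have hrq : q = r := by
    have := congrArg List.length h2
    simpa using this
  subst hrq
  have hagree : ∀ i < q, y i = x i := by
    intro i hi
    have := congrArg (fun L => L[i]?) h2
    simpa [List.getElem?_map, List.getElem?_range, hi] using this
  have hqn : q ≤ n := by
    by_contra hc
    exact hn (hagree n (by omega)).symm
  exact ⟨q, by simpa using hqn, rfl⟩

lemma KeyM (h : IsMatetSystem s a) {G₁ F₁ : Set ℕ} (hG₁ : G₁.Infinite)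
    {x y : ℕ → Bool} {fx fy : ℕ → ℕ}
    (hfx : fx ∈ branches (matetTree s (MBlocks a x)))
    (hfxc : fx ∈ branches (silverTree G₁ F₁))
    (hfy : fy ∈ branches (matetTree s (MBlocks a y)))
    (hfyc : fy ∈ branches (silverTree G₁ F₁)) : x = y := by
  by_contra hne
  have hIxy := Ix_ad hne
  have hsub : G₁ ⊆ {u | u ∈ s} ∪ ⋃ i ∈ (Ix x ∩ Ix y), (a i : Set ℕ) := by
    intro g hg
    obtain ⟨nx, hnx⟩ := silver_branch_kernel hfxc hg
    obtain ⟨ny, hny⟩ := silver_branch_kernel hfyc hg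
    rcases MTree_range_subset h hfx nx with h' | ⟨i, hi, hgi⟩
    · left
      show g ∈ s
      rw [← hnx]
      exact h'
    rcases MTree_range_subset h hfy ny with h'' | ⟨i', hi', hgi'⟩
    · left
      show g ∈ s
      rw [← hny]
      exact h''
    rw [hnx] at hgi
    rw [hny] at hgi'
    have hii' : i = i' := by
      by_contra hne'
      exact blocks_disjoint h hne' hgi hgi'
    subst hii'
    right
    exact Set.mem_biUnion ⟨hi, hi'⟩ hgi
  have hfin : ({u | u ∈ s} ∪ ⋃ i ∈ (Ix x ∩ Ix y), (a i : Set ℕ)).Finite := by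
    apply Set.Finite.union
    · exact s.finite_toSet
    · exact Set.Finite.biUnion hIxy fun i _ => (a i).finite_toSet
  exact hG₁ (hfin.subset hsub)

end Merge

lemma mem_le_foldr_max : ∀ (l : List ℕ) (w : ℕ), w ∈ l → w ≤ l.foldr max 0 := by
  intro l
  induction l with
  | nil => simp
  | cons a t ih =>
    intro w hw
    rcases List.mem_cons.mp hw with rfl | hw'
    · simp only [List.foldr_cons]
      exact le_max_left _ _
    · simp only [List.foldr_cons]
      exact (ih w hw').trans (le_max_right _ _)

section KeyS

variable {G F : Set ℕ} {s' : List ℕ} {Bb : ℕ → Finset ℕ}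

lemma KeyS_core (hF : F.Infinite) (hGF : Disjoint G F)
    (hsys : IsMatetSystem s' Bb) (hcard : ∀ k, 2 ≤ (Bb k).card)
    {x y : ℕ → Bool} {fx fy : ℕ → ℕ}
    (hfxm : fx ∈ branches (matetTree s' Bb))
    (hfxc : fx ∈ branches (silverTree (G ∪ Hker F x) (Pads F x)))
    (hfym : fy ∈ branches (matetTree s' Bb))
    (hfyc : fy ∈ branches (silverTree (G ∪ Hker F y) (Pads F y)))
    {d : ℕ} (hagree : ∀ i < d, x i = y i) (hxd : x d = false) (hyd : y d = true) : False := by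
  have hdne : x d ≠ y d := by simp [hxd, hyd]
  have humono := uF_mono hF
  have hker_x : G ∪ Hker F x ⊆ Set.range fx := silver_branch_kernel hfxc
  have hsub_x : Set.range fx ⊆ (G ∪ Hker F x) ∪ Pads F x := silver_branch_subset hfxc
  have hker_y : G ∪ Hker F y ⊆ Set.range fy := silver_branch_kernel hfyc
  have hsub_y : Set.range fy ⊆ (G ∪ Hker F y) ∪ Pads F y := silver_branch_subset hfyc
  have erho : ∀ q, d < q → rho x q < rho y q := fun q hq => rho_lt_rho hagree hxd hyd hq
  -- purity
  have purex : ∀ r, d < r → ∀ K, uF F (hslot x r) ∈ Bb K →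
      ∀ v ∈ Bb K, v ∈ Hker F x ∪ Pads F x := by
    intro r hr K hA v hv
    have hBsub : ∀ w ∈ Bb K, w ∈ Set.range fx :=
      matet_branch_complete hsys hfxm (hker_x (Or.inr ⟨r, rfl⟩)) hA
    rcases hsub_x (hBsub v hv) with (hvG | hvH) | hvP
    · exfalso
      have hvry : v ∈ Set.range fy := hker_y (Or.inl hvG)
      have hBsuby : ∀ w ∈ Bb K, w ∈ Set.range fy :=
        matet_branch_complete hsys hfym hvry hv
      rcases hsub_y (hBsuby _ hA) with (hAG | hAH) | hAP
      · exact Set.disjoint_left.mp hGF hAG (uF_mem hF _)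
      · exact val_hslot_not_mem_other hF hdne hr (Or.inl hAH)
      · exact val_hslot_not_mem_other hF hdne hr (Or.inr hAP)
    · exact Or.inl hvH
    · exact Or.inr hvP
  have purey : ∀ r, d < r → ∀ K, uF F (hslot y r) ∈ Bb K →
      ∀ v ∈ Bb K, v ∈ Hker F y ∪ Pads F y := by
    intro r hr K hA v hv
    have hBsub : ∀ w ∈ Bb K, w ∈ Set.range fy :=
      matet_branch_complete hsys hfym (hker_y (Or.inr ⟨r, rfl⟩)) hA
    rcases hsub_y (hBsub v hv) with (hvG | hvH) | hvP
    · exfalso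
      have hvrx : v ∈ Set.range fx := hker_x (Or.inl hvG)
      have hBsubx : ∀ w ∈ Bb K, w ∈ Set.range fx :=
        matet_branch_complete hsys hfxm hvrx hv
      rcases hsub_x (hBsubx _ hA) with (hAG | hAH) | hAP
      · exact Set.disjoint_left.mp hGF hAG (uF_mem hF _)
      · exact val_hslot_not_mem_other hF (Ne.symm hdne) hr (Or.inl hAH)
      · exact val_hslot_not_mem_other hF (Ne.symm hdne) hr (Or.inr hAP)
    · exact Or.inl hvH
    · exact Or.inr hvP
  -- block existence
  have getblockx : ∀ r, s'.foldr max 0 < r → ∃ K, uF F (hslot x r) ∈ Bb K := by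
    intro r h2
    obtain ⟨n, hn⟩ := hker_x (Or.inr ⟨r, rfl⟩)
    replace hn : fx n = uF F (hslot x r) := hn
    rcases matet_branch_subset hfxm n with h' | ⟨K, hK⟩
    · exfalso
      have hge : r ≤ uF F (hslot x r) :=
        le_trans (le_trans (self_le_slotStart r) (hslot_bounds x r).1) (uF_ge hF _)
      rw [hn] at h'
      have := mem_le_foldr_max s' _ h'
      omega
    · exact ⟨K, by rwa [hn] at hK⟩
  have getblocky : ∀ r, s'.foldr max 0 < r → ∃ K, uF F (hslot y r) ∈ Bb K := by
    intro r h2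
    obtain ⟨n, hn⟩ := hker_y (Or.inr ⟨r, rfl⟩)
    replace hn : fy n = uF F (hslot y r) := hn
    rcases matet_branch_subset hfym n with h' | ⟨K, hK⟩
    · exfalso
      have hge : r ≤ uF F (hslot y r) :=
        le_trans (le_trans (self_le_slotStart r) (hslot_bounds y r).1) (uF_ge hF _)
      rw [hn] at h'
      have := mem_le_foldr_max s' _ h'
      omega
    · exact ⟨K, by rwa [hn] at hK⟩
  -- second element
  have second : ∀ K (v : ℕ), v ∈ Bb K → ∃ p ∈ Bb K, p ≠ v := by
    intro K v hv
    obtain ⟨u1, hu1, u2, hu2, hne12⟩ := Finset.one_lt_card.mp (hcard K)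
    rcases eq_or_ne u1 v with rfl | h
    · exact ⟨u2, hu2, hne12.symm⟩
    · exact ⟨u1, hu1, h⟩
  -- dichotomies
  have dichx : ∀ rr K, d < rr → uF F (hslot x (rr + 1)) ∈ Bb K →
      (∃ p ∈ Bb K, p ≤ uF F (pslot x rr)) ∨ (∃ p ∈ Bb K, uF F (pslot x (rr + 1)) ≤ p) := by
    intro rr K hrr hA
    obtain ⟨p, hp, hpne⟩ := second K _ hA
    rcases purex (rr + 1) (by omega) K hA p hp with ⟨r', hr'⟩ | ⟨r', hr'⟩
    · rcases Nat.lt_trichotomy r' (rr + 1) with h' | h' | h'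
      · left
        refine ⟨p, hp, ?_⟩
        rw [← hr']
        exact le_of_lt (humono (hslot_lt_pslot_le x x (by omega)))
      · exact absurd (by rw [← hr', h']) hpne
      · right
        refine ⟨p, hp, ?_⟩
        rw [← hr']
        exact le_of_lt (humono (pslot_lt_hslot x x h'))
    · rcases le_or_gt r' rr with h' | h'
      · left
        refine ⟨p, hp, ?_⟩
        rw [← hr']
        rcases eq_or_lt_of_le h' with rfl | h''
        · exact le_rfl
        · exact le_of_lt (humono (pslot_lt_pslot_round x x h''))
      · right
        refine ⟨p, hp, ?_⟩
        rw [← hr']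
        rcases eq_or_lt_of_le (show rr + 1 ≤ r' by omega) with h'' | h''
        · rw [h'']
        · exact le_of_lt (humono (pslot_lt_pslot_round x x h''))
  have dichy : ∀ rr K, d < rr → uF F (hslot y (rr + 1)) ∈ Bb K →
      (∃ p ∈ Bb K, p ≤ uF F (pslot y rr)) ∨ (∃ p ∈ Bb K, uF F (pslot y (rr + 1)) ≤ p) := by
    intro rr K hrr hA
    obtain ⟨p, hp, hpne⟩ := second K _ hA
    rcases purey (rr + 1) (by omega) K hA p hp with ⟨r', hr'⟩ | ⟨r', hr'⟩
    · rcases Nat.lt_trichotomy r' (rr + 1) with h' | h' | h'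
      · left
        refine ⟨p, hp, ?_⟩
        rw [← hr']
        exact le_of_lt (humono (hslot_lt_pslot_le y y (by omega)))
      · exact absurd (by rw [← hr', h']) hpne
      · right
        refine ⟨p, hp, ?_⟩
        rw [← hr']
        exact le_of_lt (humono (pslot_lt_hslot y y h'))
    · rcases le_or_gt r' rr with h' | h'
      · left
        refine ⟨p, hp, ?_⟩
        rw [← hr']
        rcases eq_or_lt_of_le h' with rfl | h''
        · exact le_rfl
        · exact le_of_lt (humono (pslot_lt_pslot_round y y h''))
      · right
        refine ⟨p, hp, ?_⟩
        rw [← hr']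
        rcases eq_or_lt_of_le (show rr + 1 ≤ r' by omega) with h'' | h''
        · rw [h'']
        · exact le_of_lt (humono (pslot_lt_pslot_round y y h''))
  -- distinct blocks
  have distinct : ∀ rx ry Kx Ky, d < rx → d < ry →
      uF F (hslot x rx) ∈ Bb Kx → uF F (hslot y ry) ∈ Bb Ky → Kx ≠ Ky := by
    intro rx ry Kx Ky hrx hry hAx hCy h
    subst h
    exact val_hslot_not_mem_other hF (Ne.symm hdne) hry (purex rx hrx Kx hAx _ hCy)
  -- block ordering
  have border : ∀ K K', K ≠ K' →
      (∀ u ∈ Bb K, ∀ v ∈ Bb K', u < v) ∨ (∀ u ∈ Bb K', ∀ v ∈ Bb K, u < v) := by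
    intro K K' hne
    rcases hne.lt_or_gt with h' | h'
    · exact Or.inl fun u hu v hv => block_lt_block hsys h' hu hv
    · exact Or.inr fun u hu v hv => block_lt_block hsys h' hu hv
  -- main values
  set r0 : ℕ := s'.foldr max 0 + d + 1 with hr062
  have hdr0 : d < r0 := by omega
  set r : ℕ := r0 + 1 with hrdef
  obtain ⟨Kx1, hKx1⟩ := getblockx r (by omega)
  obtain ⟨Kx2, hKx2⟩ := getblockx (r + 1) (by omega)
  obtain ⟨Ky1, hKy1⟩ := getblocky r (by omega)
  obtain ⟨Ky2, hKy2⟩ := getblocky (r + 1) (by omega)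
  have e2 : uF F (hslot x r) < uF F (hslot y r) := by
    apply humono
    have := erho r (by omega)
    simp only [hslot]
    omega
  have e6 : uF F (hslot x (r + 1)) < uF F (hslot y (r + 1)) := by
    apply humono
    have := erho (r + 1) (by omega)
    simp only [hslot]
    omega
  have e3 : uF F (hslot y r) < uF F (pslot x r) := humono (hslot_lt_pslot y x r)
  have e7 : uF F (hslot y (r + 1)) < uF F (pslot x (r + 1)) :=
    humono (hslot_lt_pslot y x (r + 1))
  have e4 : uF F (pslot x r) < uF F (pslot y r) := by
    apply humono
    have := erho r (by omega)
    simp only [pslot]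
    omega
  have e8 : uF F (pslot x (r + 1)) < uF F (pslot y (r + 1)) := by
    apply humono
    have := erho (r + 1) (by omega)
    simp only [pslot]
    omega
  have e1 : uF F (pslot y r0) < uF F (hslot x r) := humono (pslot_lt_hslot y x (by omega))
  have e5 : uF F (pslot y r) < uF F (hslot x (r + 1)) := humono (pslot_lt_hslot y x (by omega))
  -- the drive
  rcases dichy r0 Ky1 (by omega) hKy1 with ⟨q, hq, hqle⟩ | ⟨q2, hq2, hq2ge⟩
  · have hneK := distinct r r Kx1 Ky1 (by omega) (by omega) hKx1 hKy1
    rcases border Kx1 Ky1 hneK with hlt | hlt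
    · have := hlt _ hKx1 _ hq
      omega
    · have := hlt _ hKy1 _ hKx1
      omega
  · rw [show r0 + 1 = r from rfl] at hq2ge
    rcases dichx r0 Kx1 (by omega) hKx1 with ⟨p, hp, hple⟩ | ⟨p, hp, hpge⟩
    · rcases dichx r Kx2 (by omega) hKx2 with ⟨p2, hp2, hp2le⟩ | ⟨p2, hp2, hp2ge⟩
      · have hneK := distinct (r + 1) r Kx2 Ky1 (by omega) (by omega) hKx2 hKy1
        rcases border Kx2 Ky1 hneK with hlt | hlt
        · have := hlt _ hKx2 _ hKy1
          omega
        · have := hlt _ hq2 _ hp2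
          omega
      · rcases dichy r Ky2 (by omega) hKy2 with ⟨q3, hq3, hq3le⟩ | ⟨q3, hq3, hq3ge⟩
        · have hneK := distinct (r + 1) (r + 1) Kx2 Ky2 (by omega) (by omega) hKx2 hKy2
          rcases border Kx2 Ky2 hneK with hlt | hlt
          · have := hlt _ hKx2 _ hq3
            omega
          · have := hlt _ hKy2 _ hKx2
            omega
        · have hneK := distinct (r + 1) (r + 1) Kx2 Ky2 (by omega) (by omega) hKx2 hKy2
          rcases border Kx2 Ky2 hneK with hlt | hlt
          · have := hlt _ hp2 _ hKy2
            omega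
          · have := hlt _ hq3 _ hKx2
            omega
    · rw [show r0 + 1 = r from rfl] at hpge
      have hneK := distinct r r Kx1 Ky1 (by omega) (by omega) hKx1 hKy1
      rcases border Kx1 Ky1 hneK with hlt | hlt
      · have := hlt _ hp _ hKy1
        omega
      · have := hlt _ hq2 _ hKx1
        omega

lemma KeyS (hF : F.Infinite) (hGF : Disjoint G F)
    (hsys : IsMatetSystem s' Bb) (hcard : ∀ k, 2 ≤ (Bb k).card)
    {x y : ℕ → Bool} {fx fy : ℕ → ℕ}
    (hfxm : fx ∈ branches (matetTree s' Bb))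
    (hfxc : fx ∈ branches (SCube F G x))
    (hfym : fy ∈ branches (matetTree s' Bb))
    (hfyc : fy ∈ branches (SCube F G y)) : x = y := by
  by_contra hne
  have hex : ∃ n, x n ≠ y n := by
    by_contra hc
    push_neg at hc
    exact hne (funext hc)
  classical
  set d := Nat.find hex with hd
  have hdne : x d ≠ y d := Nat.find_spec hex
  have hagree : ∀ i < d, x i = y i := by
    intro i hi
    by_contra hc
    have : d ≤ i := Nat.find_le hc
    omega
  have hfxc' : fx ∈ branches (silverTree (G ∪ Hker F x) (Pads F x)) := hfxc
  have hfyc' : fy ∈ branches (silverTree (G ∪ Hker F y) (Pads F y)) := hfyc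
  rcases Bool.eq_false_or_eq_true (x d) with hxd | hxd
  · have hyd : y d = false := by
      rcases Bool.eq_false_or_eq_true (y d) with h' | h'
      · exact absurd (hxd.trans h'.symm) hdne
      · exact h'
    exact KeyS_core hF hGF hsys hcard hfym hfyc' hfxm hfxc'
      (fun i hi => (hagree i hi).symm) hyd hxd
  · have hyd : y d = true := by
      rcases Bool.eq_false_or_eq_true (y d) with h' | h'
      · exact h'
      · exact absurd (hxd.trans h'.symm) hdne
    exact KeyS_core hF hGF hsys hcard hfxm hfxc' hfym hfyc' hagree hxd hyd

end KeyS

section Assembly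

open Cardinal

def MSub : Type := {T : Set (List ℕ) // IsMatet T}

def SSub : Type := {V : Set (List ℕ) // IsSilver V}

def Idx : Type := MSub ⊕ SSub

noncomputable def mS (T : MSub) : List ℕ := Classical.choose T.2

noncomputable def mA (T : MSub) : ℕ → Finset ℕ :=
  Classical.choose (Classical.choose_spec T.2)

lemma mSpec (T : MSub) :
    IsMatetSystem (mS T) (mA T) ∧ T.1 = matetTree (mS T) (mA T) :=
  Classical.choose_spec (Classical.choose_spec T.2)

noncomputable def sG (V : SSub) : Set ℕ := Classical.choose V.2

noncomputable def sF (V : SSub) : Set ℕ :=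
  Classical.choose (Classical.choose_spec V.2)

lemma sSpec (V : SSub) :
    (sF V).Infinite ∧ Disjoint (sG V) (sF V) ∧ V.1 = silverTree (sG V) (sF V) :=
  Classical.choose_spec (Classical.choose_spec V.2)

noncomputable def MC (T : MSub) (x : ℕ → Bool) : Set (List ℕ) :=
  matetTree (mS T) (MBlocks (mA T) x)

noncomputable def SC (V : SSub) (x : ℕ → Bool) : Set (List ℕ) :=
  SCube (sF V) (sG V) x

lemma mk_cand : #(ℕ → Bool) = continuum := by
  calc #(ℕ → Bool) = #Bool ^ #ℕ := (Cardinal.power_def _ _).symm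
    _ = 2 ^ ℵ₀ := by rw [Cardinal.mk_bool, Cardinal.mk_nat]
    _ = continuum := Cardinal.two_power_aleph0

lemma mk_idx_le : #Idx ≤ continuum := by
  have hset : #(Set (List ℕ)) = continuum := by
    rw [Cardinal.mk_set, Cardinal.mk_list_eq_aleph0, Cardinal.two_power_aleph0]
  have h1 : #MSub ≤ continuum := by
    rw [← hset]; exact Cardinal.mk_subtype_le _
  have h2 : #SSub ≤ continuum := by
    rw [← hset]; exact Cardinal.mk_subtype_le _
  have h3 : #Idx = #MSub + #SSub := by
    simp [Idx, Cardinal.mk_sum, Cardinal.lift_id]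
  rw [h3]
  calc #MSub + #SSub ≤ continuum + continuum := add_le_add h1 h2
    _ = continuum := Cardinal.add_eq_self Cardinal.aleph0_le_continuum

noncomputable def emb : Idx ↪ Cardinal.continuum.ord.ToType := by
  have h1 : #Idx ≤ #(Cardinal.continuum.ord.ToType) := by
    rw [Cardinal.mk_ord_toType]; exact mk_idx_le
  exact ((Cardinal.le_def _ _).mp h1).some

noncomputable def rel (a b : Idx) : Prop := emb a < emb b

lemma rel_wf : WellFounded rel := InvImage.wf emb IsWellFounded.wf

lemma small (a : Idx) : #{b : Idx // rel b a} < continuum := by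
  have hinj : Function.Injective
      (fun b : {b : Idx // rel b a} => (⟨emb b.1, b.2⟩ : Set.Iio (emb a))) := by
    intro b b' h
    have := congrArg Subtype.val h
    simp only at this
    exact Subtype.ext (emb.injective this)
  exact lt_of_le_of_lt (Cardinal.mk_le_of_injective hinj) (Cardinal.mk_Iio_ord_toType _)

def NoClash (T : MSub) (cm : ℕ → Bool) (V : SSub) (cs : ℕ → Bool) : Prop :=
  ∀ f, ¬(f ∈ branches (MC T cm) ∧ f ∈ branches (SC V cs))

def GoodAt (a : Idx) (prev : ∀ b, rel b a → (ℕ → Bool)) (c : ℕ → Bool) : Prop :=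
  match a with
  | Sum.inl T => ∀ V (h : rel (Sum.inr V) (Sum.inl T)), NoClash T c V (prev _ h)
  | Sum.inr V => ∀ T (h : rel (Sum.inl T) (Sum.inr V)), NoClash T (prev _ h) V c

lemma good_ex (a : Idx) (prev : ∀ b, rel b a → (ℕ → Bool)) :
    ∃ c, GoodAt a prev c := by
  by_contra hc
  push_neg at hc
  cases a with
  | inl T =>
    have hc' : ∀ c : ℕ → Bool, ∃ V, ∃ h : rel (Sum.inr V) (Sum.inl T),
        ¬NoClash T c V (prev _ h) := by
      intro c
      have := hc c
      simp only [GoodAt] at this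
      push_neg at this
      exact this
    choose Vf hrel hncl using hc'
    set Z : {b : Idx // rel b (Sum.inl T)} → Set (List ℕ) := fun b =>
      match b with
      | ⟨Sum.inr V, h⟩ => SC V (prev _ h)
      | ⟨Sum.inl _, _⟩ => ∅
      with hZ
    have hdanger : ∀ c : ℕ → Bool, ∃ f, f ∈ branches (MC T c) ∧
        f ∈ branches (Z ⟨Sum.inr (Vf c), hrel c⟩) := by
      intro c
      have h1 := hncl c
      simp only [NoClash] at h1
      push_neg at h1
      exact h1
    have hinj : Function.Injective
        (fun c : ℕ → Bool => (⟨Sum.inr (Vf c), hrel c⟩ : {b : Idx // rel b (Sum.inl T)})) := by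
      intro c c' he
      replace he : (⟨Sum.inr (Vf c), hrel c⟩ : {b : Idx // rel b (Sum.inl T)})
          = ⟨Sum.inr (Vf c'), hrel c'⟩ := he
      obtain ⟨f, hf1, hf2⟩ := hdanger c
      obtain ⟨g, hg1, hg2⟩ := hdanger c'
      rw [← he] at hg2
      have hVeq : Vf c = Vf c' := by
        have := congrArg Subtype.val he
        simp only at this
        exact Sum.inr.inj this
      set V := Vf c with hV
      have hf2' : f ∈ branches (silverTree (sG V ∪ Hker (sF V) (prev _ (hrel c)))
          (Pads (sF V) (prev _ (hrel c)))) := hf2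
      have hg2' : g ∈ branches (silverTree (sG V ∪ Hker (sF V) (prev _ (hrel c)))
          (Pads (sF V) (prev _ (hrel c)))) := hg2
      have hker : (sG V ∪ Hker (sF V) (prev _ (hrel c))).Infinite :=
        (Hker_infinite (sSpec V).1 _).mono Set.subset_union_right
      have hg1' : g ∈ branches (matetTree (mS T) (MBlocks (mA T) c')) := hg1
      have hf1' : f ∈ branches (matetTree (mS T) (MBlocks (mA T) c)) := hf1
      exact KeyM (mSpec T).1 hker hf1' hf2' hg1' hg2'
    have hle := Cardinal.mk_le_of_injective hinj
    rw [mk_cand] at hle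
    exact absurd hle (not_le.mpr (small _))
  | inr V =>
    have hc' : ∀ c : ℕ → Bool, ∃ T, ∃ h : rel (Sum.inl T) (Sum.inr V),
        ¬NoClash T (prev _ h) V c := by
      intro c
      have := hc c
      simp only [GoodAt] at this
      push_neg at this
      exact this
    choose Tf hrel hncl using hc'
    set Z : {b : Idx // rel b (Sum.inr V)} → Set (List ℕ) := fun b =>
      match b with
      | ⟨Sum.inl T, h⟩ => MC T (prev _ h)
      | ⟨Sum.inr _, _⟩ => ∅
      with hZ
    have hdanger : ∀ c : ℕ → Bool, ∃ f, f ∈ branches (Z ⟨Sum.inl (Tf c), hrel c⟩) ∧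
        f ∈ branches (SC V c) := by
      intro c
      have h1 := hncl c
      simp only [NoClash] at h1
      push_neg at h1
      exact h1
    have hinj : Function.Injective
        (fun c : ℕ → Bool => (⟨Sum.inl (Tf c), hrel c⟩ : {b : Idx // rel b (Sum.inr V)})) := by
      intro c c' he
      replace he : (⟨Sum.inl (Tf c), hrel c⟩ : {b : Idx // rel b (Sum.inr V)})
          = ⟨Sum.inl (Tf c'), hrel c'⟩ := he
      obtain ⟨f, hf1, hf2⟩ := hdanger c
      obtain ⟨g, hg1, hg2⟩ := hdanger c'
      rw [← he] at hg1
      set T := Tf c with hT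
      have hsys' := MBlocks_system (mSpec T).1 (prev _ (hrel c))
      have hcard' := MBlocks_card (mSpec T).1 (prev _ (hrel c))
      have hf1' : f ∈ branches (matetTree (mS T) (MBlocks (mA T) (prev _ (hrel c)))) := hf1
      have hg1' : g ∈ branches (matetTree (mS T) (MBlocks (mA T) (prev _ (hrel c)))) := hg1
      have hf2' : f ∈ branches (SCube (sF V) (sG V) c) := hf2
      have hg2' : g ∈ branches (SCube (sF V) (sG V) c') := hg2
      exact KeyS (sSpec V).1 (sSpec V).2.1 hsys' hcard' hf1' hf2' hg1' hg2'
    have hle := Cardinal.mk_le_of_injective hinj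
    rw [mk_cand] at hle
    exact absurd hle (not_le.mpr (small _))

noncomputable def Ch : Idx → (ℕ → Bool) :=
  rel_wf.fix fun a prev => Classical.choose (good_ex a prev)

lemma Ch_spec (a : Idx) : GoodAt a (fun b _ => Ch b) (Ch a) := by
  have heq : Ch a = Classical.choose (good_ex a (fun b _ => Ch b)) :=
    WellFounded.fix_eq rel_wf _ a
  rw [heq]
  exact Classical.choose_spec (good_ex a (fun b _ => Ch b))

noncomputable def XSet : Set (ℕ → ℕ) :=
  ⋃ T : MSub, branches (MC T (Ch (Sum.inl T)))

end Assembly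

end SMO

/-- **Proposition 2.10 (part).** The ideals `v⁰` and `t⁰` are orthogonal: there is a
set `X` of strictly increasing functions with `X ∈ v⁰` such that every Matet tree has
a Matet subtree all of whose branches lie in `X` (hence the complement of `X` is
in `t⁰`). -/
theorem silver_matet_orthogonal :
    ∃ X : Set (ℕ → ℕ), (∀ f ∈ X, StrictMono f) ∧
      inIdeal IsSilver X ∧
      ∀ T, IsMatet T → ∃ T', IsMatet T' ∧ T' ⊆ T ∧ branches T' ⊆ X := by
  classical
  refine ⟨SMO.XSet, ?_, ?_, ?_⟩
  · rintro f hf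
    obtain ⟨T, hfT⟩ := Set.mem_iUnion.mp hf
    exact hfT.1
  · intro Vt hV
    set V : SMO.SSub := ⟨Vt, hV⟩ with hVdef
    refine ⟨SMO.SC V (SMO.Ch (Sum.inr V)), ?_, ?_, ?_⟩
    · exact SMO.SCube_isSilver (SMO.sSpec V).1 (SMO.sSpec V).2.1 _
    · have h := SMO.SCube_subset (G := SMO.sG V) (SMO.sSpec V).1 (SMO.Ch (Sum.inr V))
      rw [← (SMO.sSpec V).2.2] at h
      exact h
    · rw [Set.eq_empty_iff_forall_notMem]
      rintro f ⟨hfV, hfX⟩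
      obtain ⟨T, hfT⟩ := Set.mem_iUnion.mp hfX
      rcases lt_trichotomy (SMO.emb (Sum.inl T)) (SMO.emb (Sum.inr V)) with h | h | h
      · have hg := SMO.Ch_spec (Sum.inr V)
        exact hg T h f ⟨hfT, hfV⟩
      · have := SMO.emb.injective h
        simp at this
      · have hg := SMO.Ch_spec (Sum.inl T)
        exact hg V h f ⟨hfT, hfV⟩
  · intro Tt hT
    set T : SMO.MSub := ⟨Tt, hT⟩ with hTdef
    refine ⟨SMO.MC T (SMO.Ch (Sum.inl T)), ?_, ?_, ?_⟩
    · exact ⟨SMO.mS T, SMO.MBlocks (SMO.mA T) _, SMO.MBlocks_system (SMO.mSpec T).1 _, rfl⟩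
    · have h := SMO.MTree_subset (SMO.mSpec T).1 (SMO.Ch (Sum.inl T))
      rw [← (SMO.mSpec T).2] at h
      exact h
    · exact Set.subset_iUnion (fun (T' : SMO.MSub) => branches (SMO.MC T' (SMO.Ch (Sum.inl T')))) T
end

section
/- For every Miller tree N there is an apple tree M with M ⊆ N; that is, the apple trees are dense in the Miller trees ordered by inclusion. -/
/-- `Succ_M(σ)`: the splitting nodes of `M` properly extending `σ` with no splitting
node of `M` strictly in between. -/
def SuccSplit (M : Set (List ℕ)) (σ : List ℕ) : Set (List ℕ) :=
  {τ | σ <+: τ ∧ σ ≠ τ ∧ IsSplit M τ ∧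
    ∀ ρ, σ <+: ρ → ρ <+: τ → ρ ≠ σ → ρ ≠ τ → ¬ IsSplit M ρ}

/-- An apple tree: a Miller tree satisfying `(*₁)` and `(*₂)`. -/
def IsApple (M : Set (List ℕ)) : Prop :=
  IsMiller M ∧
  (∀ σ, IsSplit M σ → ∀ m n : ℕ, m < n → σ ++ [n] ∈ M → σ ++ [m] ∈ M →
    ∀ τ ∈ SuccSplit M σ, (σ ++ [m]) <+: τ → ∀ x ∈ τ, x < n) ∧
  (∀ σ τ, IsSplit M σ → IsSplit M τ → σ <+: τ → σ ≠ τ → σ.length + 2 ≤ τ.length)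

open scoped Classical

namespace AppleProof

variable {N : Set (List ℕ)}

/-! ### generic list lemmas -/

lemma concat_prefix_eq {l r : List ℕ} {x y : ℕ} (hx : l ++ [x] <+: r)
    (hy : l ++ [y] <+: r) : x = y := by
  have h := List.prefix_of_prefix_length_le hx hy (by simp)
  have h2 := h.eq_of_length (by simp)
  simpa using h2

def maxE (l : List ℕ) : ℕ := l.foldr max 0

lemma le_maxE {l : List ℕ} {x : ℕ} (h : x ∈ l) : x ≤ maxE l := by
  induction l with
  | nil => simp at h
  | cons y l ih =>
    rcases List.mem_cons.mp h with rfl | h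
    · simp [maxE]
    · exact le_trans (ih h) (by simp [maxE])

lemma exists_cons_suffix {u w : List ℕ} (h : u <:+ w) (hne : u ≠ w) :
    ∃ j, (j :: u) <:+ w := by
  induction w with
  | nil => exact absurd (List.suffix_nil.mp h) hne
  | cons k w' ih =>
    rcases List.suffix_cons_iff.mp h with rfl | h'
    · exact absurd rfl hne
    · by_cases he : u = w'
      · exact ⟨k, by rw [he]⟩
      · obtain ⟨j, hj⟩ := ih h' he
        exact ⟨j, hj.trans (List.suffix_cons k w')⟩

/-! ### basic facts about Miller trees -/

lemma mem_of_prefix (hN : IsMiller N) {σ τ : List ℕ} (hσ : σ ∈ N) (h : τ <+: σ) : τ ∈ N :=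
  hN.1.2.2 σ hσ τ h

lemma nil_mem (hN : IsMiller N) : [] ∈ N := by
  obtain ⟨σ, hσ⟩ := hN.1.1
  exact mem_of_prefix hN hσ List.nil_prefix

lemma exists_big (hN : IsMiller N) :
    ∀ (L : ℕ) (σ : List ℕ), σ ∈ N → ∃ τ, σ <+: τ ∧ IsInfSplit N τ ∧ L ≤ τ.length := by
  intro L
  induction L with
  | zero =>
    intro σ hσ
    obtain ⟨τ, h1, h2⟩ := hN.2 σ hσ
    exact ⟨τ, h1, h2, Nat.zero_le _⟩
  | succ L ih =>
    intro σ hσ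
    obtain ⟨τ, h1, h2, h3⟩ := ih σ hσ
    obtain ⟨n, hn⟩ := h2.2.nonempty
    obtain ⟨τ', g1, g2⟩ := hN.2 (τ ++ [n]) hn
    refine ⟨τ', h1.trans ((List.prefix_append τ [n]).trans g1), g2, ?_⟩
    have := g1.length_le
    simp at this
    omega

lemma exists_pick {σ : List ℕ} (h : IsInfSplit N σ) (b : ℕ) :
    ∃ n, b < n ∧ σ ++ [n] ∈ N := by
  obtain ⟨n, hn, hb⟩ := h.2.exists_gt b
  exact ⟨n, hb, hn⟩

/-! ### the construction -/

noncomputable def big (hN : IsMiller N) (σ : List ℕ) (L : ℕ) : List ℕ :=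
  if h : σ ∈ N then (exists_big hN L σ h).choose else []

lemma big_spec (hN : IsMiller N) {σ : List ℕ} (h : σ ∈ N) (L : ℕ) :
    σ <+: big hN σ L ∧ IsInfSplit N (big hN σ L) ∧ L ≤ (big hN σ L).length := by
  rw [big, dif_pos h]
  exact (exists_big hN L σ h).choose_spec

noncomputable def pick (hN : IsMiller N) (σ : List ℕ) (b : ℕ) : ℕ :=
  if h : IsInfSplit N σ then (exists_pick h b).choose else 0

lemma pick_spec (hN : IsMiller N) {σ : List ℕ} (h : IsInfSplit N σ) (b : ℕ) :
    b < pick hN σ b ∧ σ ++ [pick hN σ b] ∈ N := by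
  rw [pick, dif_pos h]
  exact (exists_pick h b).choose_spec

noncomputable def step (hN : IsMiller N) (σ : List ℕ) (b : ℕ) : List ℕ :=
  big hN (σ ++ [pick hN σ b]) (σ.length + 2)

lemma step_spec (hN : IsMiller N) {σ : List ℕ} (h : IsInfSplit N σ) (b : ℕ) :
    σ ++ [pick hN σ b] <+: step hN σ b ∧ IsInfSplit N (step hN σ b) ∧
      σ.length + 2 ≤ (step hN σ b).length ∧ b < pick hN σ b ∧ σ ++ [pick hN σ b] ∈ N := by
  obtain ⟨hb, hmem⟩ := pick_spec hN h b
  obtain ⟨g1, g2, g3⟩ := big_spec hN hmem (σ.length + 2)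
  exact ⟨g1, g2, g3, hb, hmem⟩

noncomputable def go (hN : IsMiller N) (σ : List ℕ) : ℕ → List ℕ
  | 0 => step hN σ 0
  | k + 1 => step hN σ (maxE (go hN σ k))

noncomputable def bnd (hN : IsMiller N) (σ : List ℕ) : ℕ → ℕ
  | 0 => 0
  | k + 1 => maxE (go hN σ k)

lemma go_eq (hN : IsMiller N) (σ : List ℕ) (k : ℕ) :
    go hN σ k = step hN σ (bnd hN σ k) := by cases k <;> rfl

noncomputable def aσ (hN : IsMiller N) (σ : List ℕ) (k : ℕ) : ℕ :=
  pick hN σ (bnd hN σ k)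

noncomputable def t (hN : IsMiller N) : List ℕ → List ℕ
  | [] => big hN [] 0
  | k :: u => go hN (t hN u) k

noncomputable def a (hN : IsMiller N) (u : List ℕ) (k : ℕ) : ℕ := aσ hN (t hN u) k

lemma t_cons (hN : IsMiller N) (k : ℕ) (u : List ℕ) :
    t hN (k :: u) = go hN (t hN u) k := rfl

lemma t_infsplit (hN : IsMiller N) : ∀ u, IsInfSplit N (t hN u)
  | [] => (big_spec hN (nil_mem hN) 0).2.1
  | k :: u => by
    rw [t_cons, go_eq]
    exact (step_spec hN (t_infsplit hN u) _).2.1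

lemma t_mem (hN : IsMiller N) (u : List ℕ) : t hN u ∈ N := (t_infsplit hN u).1

lemma t_pre (hN : IsMiller N) (u : List ℕ) (k : ℕ) :
    t hN u ++ [a hN u k] <+: t hN (k :: u) := by
  rw [t_cons, go_eq]
  exact (step_spec hN (t_infsplit hN u) _).1

lemma t_len (hN : IsMiller N) (u : List ℕ) (k : ℕ) :
    (t hN u).length + 2 ≤ (t hN (k :: u)).length := by
  rw [t_cons, go_eq]
  exact (step_spec hN (t_infsplit hN u) _).2.2.1

lemma a_gt (hN : IsMiller N) (u : List ℕ) (k : ℕ) :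
    bnd hN (t hN u) k < a hN u k :=
  (step_spec hN (t_infsplit hN u) (bnd hN (t hN u) k)).2.2.2.1

lemma t_sub (hN : IsMiller N) (u : List ℕ) (k : ℕ) : t hN u <+: t hN (k :: u) :=
  (List.prefix_append _ _).trans (t_pre hN u k)

lemma a_mem (hN : IsMiller N) (u : List ℕ) (k : ℕ) : a hN u k ∈ t hN (k :: u) :=
  (t_pre hN u k).sublist.subset (by simp)

lemma maxE_lt_a (hN : IsMiller N) (u : List ℕ) :
    ∀ {j k : ℕ}, j < k → maxE (t hN (j :: u)) < a hN u k := by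
  intro j k
  induction k with
  | zero => omega
  | succ k ih =>
    intro hjk
    have hk1 : maxE (t hN (k :: u)) < a hN u (k + 1) := by
      have := a_gt hN u (k + 1)
      rw [bnd] at this
      rw [t_cons]
      exact this
    rcases Nat.lt_succ_iff_lt_or_eq.mp hjk with h | rfl
    · exact lt_of_lt_of_le (ih h) (le_trans (le_maxE (a_mem hN u k)) hk1.le)
    · exact hk1

lemma a_mono (hN : IsMiller N) (u : List ℕ) : StrictMono (a hN u) := by
  apply strictMono_nat_of_lt_succ
  intro k
  exact lt_of_le_of_lt (le_maxE (a_mem hN u k)) (maxE_lt_a hN u (Nat.lt_succ_self k))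

lemma t_congr (hN : IsMiller N) {u u' : List ℕ} (h : t hN u = t hN u') (k : ℕ) :
    a hN u k = a hN u' k ∧ t hN (k :: u) = t hN (k :: u') := by
  constructor
  · rw [a, a, h]
  · rw [t_cons, t_cons, h]

/-- suffix ⇒ prefix for the skeleton -/
lemma L_suf (hN : IsMiller N) : ∀ {w u : List ℕ}, u <:+ w → t hN u <+: t hN w := by
  intro w
  induction w with
  | nil => intro u h; rw [List.suffix_nil.mp h]
  | cons k w' ih =>
    intro u h
    rcases List.suffix_cons_iff.mp h with rfl | h'
    · exact List.prefix_refl _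
    · exact (ih h').trans (t_sub hN w' k)

lemma L_len (hN : IsMiller N) : ∀ {w u : List ℕ}, u <:+ w → u ≠ w →
    (t hN u).length + 2 ≤ (t hN w).length := by
  intro w
  induction w with
  | nil => intro u h hne; exact absurd (List.suffix_nil.mp h) hne
  | cons k w' ih =>
    intro u h hne
    rcases List.suffix_cons_iff.mp h with rfl | h'
    · exact absurd rfl hne
    · by_cases he : u = w'
      · subst he; exact t_len hN u k
      · have := ih h' he
        have := t_len hN w' k
        omega

lemma skel_prefix_aux (hN : IsMiller N) :
    ∀ n u v, u.length + v.length ≤ n → t hN u <+: t hN v → u <:+ v := by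
  intro n
  induction n with
  | zero =>
    intro u v hn h
    have hu : u = [] := by cases u <;> simp_all
    subst hu; exact List.nil_suffix
  | succ n ih =>
    intro u v hn h
    match u with
    | [] => exact List.nil_suffix
    | k₁ :: u₁ =>
      match v with
      | [] =>
        exfalso
        have h1 : t hN [] <+: t hN u₁ := L_suf hN List.nil_suffix
        have h2 := (t_len hN u₁ k₁)
        have h3 := h.length_le
        have h4 := h1.length_le
        omega
      | k :: u' =>
        have hA : t hN u' ++ [a hN u' k] <+: t hN (k :: u') := t_pre hN u' k
        rcases le_or_gt (t hN (k₁ :: u₁)).length (t hN u').length with hle | hlt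
        · have h1 : t hN (k₁ :: u₁) <+: t hN u' :=
            List.prefix_of_prefix_length_le h (t_sub hN u' k) hle
          have hsuf : (k₁ :: u₁) <:+ u' := by
            apply ih _ u' _ h1
            simp at hn ⊢; omega
          exact hsuf.trans (List.suffix_cons k u')
        · have hA' : t hN u' ++ [a hN u' k] <+: t hN (k₁ :: u₁) := by
            apply List.prefix_of_prefix_length_le hA h
            simp; omega
          have hB : t hN u₁ ++ [a hN u₁ k₁] <+: t hN (k₁ :: u₁) := t_pre hN u₁ k₁
          have hu₁ : t hN u₁ <+: t hN (k₁ :: u₁) := t_sub hN u₁ k₁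
          have hu'p : t hN u' <+: t hN (k₁ :: u₁) := (List.prefix_append _ _).trans hA'
          rcases le_or_gt (t hN u₁).length (t hN u').length with h2 | h2
          · have h3 : t hN u₁ <+: t hN u' := List.prefix_of_prefix_length_le hu₁ hu'p h2
            have hs : u₁ <:+ u' := by
              apply ih _ u' _ h3
              simp at hn ⊢; omega
            by_cases he : u₁ = u'
            · subst he
              have hkk : a hN u₁ k = a hN u₁ k₁ := concat_prefix_eq hA' hB
              have : k = k₁ := (a_mono hN u₁).injective hkk
              subst this
              exact List.suffix_refl _
            · exfalso
              obtain ⟨j, hj⟩ := exists_cons_suffix hs he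
              have h4 : t hN u₁ ++ [a hN u₁ j] <+: t hN (k₁ :: u₁) :=
                ((t_pre hN u₁ j).trans (L_suf hN hj)).trans hu'p
              have h5 : a hN u₁ j = a hN u₁ k₁ := concat_prefix_eq h4 hB
              have h6 : j = k₁ := (a_mono hN u₁).injective h5
              subst h6
              have h7 : t hN (j :: u₁) <+: t hN u' := L_suf hN hj
              have := h7.length_le
              have := hA'.length_le
              simp at this
              omega
          · have h3 : t hN u' <+: t hN u₁ := List.prefix_of_prefix_length_le hu'p hu₁ h2.le
            have hs : u' <:+ u₁ := by
              apply ih _ u₁ _ h3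
              simp at hn ⊢; omega
            have he : u' ≠ u₁ := by
              intro e; rw [e] at h2; omega
            obtain ⟨j, hj⟩ := exists_cons_suffix hs he
            have h4 : t hN u' ++ [a hN u' j] <+: t hN (k₁ :: u₁) :=
              ((t_pre hN u' j).trans (L_suf hN hj)).trans hu₁
            have h5 : a hN u' j = a hN u' k := concat_prefix_eq h4 hA'
            have h6 : j = k := (a_mono hN u').injective h5
            subst h6
            have hv : (j :: u') <:+ (k₁ :: u₁) := hj.trans (List.suffix_cons k₁ u₁)
            have hne : (j :: u') ≠ (k₁ :: u₁) := by
              intro e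
              have := hj.length_le
              have : (j :: u').length ≤ u₁.length := this
              rw [e] at this
              simp at this
            have h8 := L_len hN hv hne
            have h9 := h.length_le
            have := (L_suf hN hv).length_le
            omega

lemma skel_prefix (hN : IsMiller N) {u v : List ℕ} (h : t hN u <+: t hN v) : u <:+ v :=
  skel_prefix_aux hN (u.length + v.length) u v le_rfl h

/-- where can an extension `σ ++ [n]` inside the skeleton sit -/
lemma succ_cases (hN : IsMiller N) :
    ∀ (v σ : List ℕ) (n : ℕ), σ ++ [n] <+: t hN v →
      (σ ++ [n] <+: t hN []) ∨ (∃ u k, σ = t hN u ∧ n = a hN u k) ∨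
      (∃ u k, t hN u ++ [a hN u k] <+: σ ∧ σ ++ [n] <+: t hN (k :: u)) := by
  intro v
  induction v with
  | nil => intro σ n h; exact Or.inl h
  | cons k u' ih =>
    intro σ n h
    have hA : t hN u' ++ [a hN u' k] <+: t hN (k :: u') := t_pre hN u' k
    rcases lt_trichotomy σ.length (t hN u').length with hl | hl | hl
    · have : σ ++ [n] <+: t hN u' := by
        apply List.prefix_of_prefix_length_le h (t_sub hN u' k)
        simp; omega
      exact ih σ n this
    · have h1 : σ ++ [n] <+: t hN u' ++ [a hN u' k] := by
        apply List.prefix_of_prefix_length_le h hA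
        simp; omega
      have h2 : σ ++ [n] = t hN u' ++ [a hN u' k] := h1.eq_of_length (by simp; omega)
      obtain ⟨h3, h4⟩ := List.append_inj h2 hl
      exact Or.inr (Or.inl ⟨u', k, h3, by simpa using h4⟩)
    · have h1 : t hN u' ++ [a hN u' k] <+: σ ++ [n] := by
        apply List.prefix_of_prefix_length_le hA h
        simp; omega
      have h2 : t hN u' ++ [a hN u' k] <+: σ := by
        apply List.prefix_of_prefix_length_le h1 (List.prefix_append σ [n])
        simp; omega
      exact Or.inr (Or.inr ⟨u', k, h2, h⟩)

/-! ### the subtree -/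

def Mset (hN : IsMiller N) : Set (List ℕ) := {τ | ∃ u, τ <+: t hN u}

lemma Mset_sub (hN : IsMiller N) : Mset hN ⊆ N := by
  rintro τ ⟨u, hu⟩
  exact mem_of_prefix hN (t_mem hN u) hu

lemma t_mem_M (hN : IsMiller N) (u : List ℕ) : t hN u ∈ Mset hN := ⟨u, List.prefix_refl _⟩

lemma t_succ_mem_M (hN : IsMiller N) (u : List ℕ) (k : ℕ) :
    t hN u ++ [a hN u k] ∈ Mset hN := ⟨k :: u, t_pre hN u k⟩

lemma nil_prefix_t (hN : IsMiller N) (u : List ℕ) : t hN [] <+: t hN u :=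
  L_suf hN List.nil_suffix

/-- immediate successors of skeleton nodes in `Mset` are exactly the chosen values -/
lemma succ_char (hN : IsMiller N) {u : List ℕ} {m : ℕ} (h : t hN u ++ [m] ∈ Mset hN) :
    ∃ k, m = a hN u k := by
  obtain ⟨v, hv⟩ := h
  rcases succ_cases hN v (t hN u) m hv with h1 | ⟨u', k, he, hm⟩ | ⟨u'', k, h1, h2⟩
  · exfalso
    have h2 := (nil_prefix_t hN u).length_le
    have h3 := h1.length_le
    simp at h3; omega
  · exact ⟨k, by rw [hm, ← (t_congr hN he.symm k).1]⟩
  · exfalso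
    have h3 : t hN u <+: t hN (k :: u'') := (List.prefix_append _ _).trans h2
    have h4 : u <:+ (k :: u'') := skel_prefix hN h3
    rcases List.suffix_cons_iff.mp h4 with rfl | h5
    · have := h2.length_le; simp at this
    · have h6 := (L_suf hN h5).length_le
      have h7 := h1.length_le
      simp at h7; omega

lemma split_skel (hN : IsMiller N) (u : List ℕ) : IsSplit (Mset hN) (t hN u) :=
  ⟨t_mem_M hN u, a hN u 0, a hN u 1,
    ne_of_lt (a_mono hN u (by norm_num)), t_succ_mem_M hN u 0, t_succ_mem_M hN u 1⟩

lemma helper33 (hN : IsMiller N) {σ : List ℕ} {u u' : List ℕ} {k k' n m : ℕ}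
    (h1 : t hN u ++ [a hN u k] <+: σ) (h2 : σ ++ [n] <+: t hN (k :: u))
    (h3 : t hN u' ++ [a hN u' k'] <+: σ) (h4 : σ ++ [m] <+: t hN (k' :: u'))
    (hle : (t hN u).length ≤ (t hN u').length) : n = m := by
  have hu' : t hN u' <+: t hN (k :: u) :=
    (((List.prefix_append _ _).trans h3).trans (List.prefix_append σ [n])).trans h2
  have hs : u' <:+ (k :: u) := skel_prefix hN hu'
  rcases List.suffix_cons_iff.mp hs with rfl | h5
  · exfalso
    have e1 := h3.length_le
    have e2 := h2.length_le
    simp at e1 e2; omega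
  · have h6 : t hN u' <+: t hN u := L_suf hN h5
    have h7 : t hN u' = t hN u := h6.eq_of_length (le_antisymm h6.length_le hle)
    have h8 : a hN u' k' = a hN u k' := (t_congr hN h7 k').1
    rw [h8, h7] at h3
    have h9 : a hN u k = a hN u k' := concat_prefix_eq h1 h3
    have h10 : k = k' := (a_mono hN u).injective h9
    subst h10
    have h11 : t hN (k :: u') = t hN (k :: u) := (t_congr hN h7 k).2
    rw [h11] at h4
    exact concat_prefix_eq h2 h4

lemma split_char (hN : IsMiller N) {σ : List ℕ} (h : IsSplit (Mset hN) σ) :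
    ∃ u, σ = t hN u := by
  obtain ⟨hσM, m, n, hmn, hm, hn⟩ := h
  obtain ⟨v, hv⟩ := hm
  obtain ⟨w, hw⟩ := hn
  rcases succ_cases hN v σ m hv with c1 | ⟨u, k, he, _⟩ | ⟨u, k, c31, c32⟩
  · rcases succ_cases hN w σ n hw with d1 | ⟨u, k, he, _⟩ | ⟨u, k, d31, d32⟩
    · exact absurd (concat_prefix_eq c1 d1) hmn
    · exact ⟨u, he⟩
    · exfalso
      have e1 := (nil_prefix_t hN u).length_le
      have e2 := d31.length_le
      have e3 := c1.length_le
      simp at e2 e3; omega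
  · exact ⟨u, he⟩
  · rcases succ_cases hN w σ n hw with d1 | ⟨u', k', he, _⟩ | ⟨u', k', d31, d32⟩
    · exfalso
      have e1 := (nil_prefix_t hN u).length_le
      have e2 := c31.length_le
      have e3 := d1.length_le
      simp at e2 e3; omega
    · exact ⟨u', he⟩
    · exfalso
      rcases le_total (t hN u).length (t hN u').length with hle | hle
      · exact hmn (helper33 hN c31 c32 d31 d32 hle)
      · exact hmn (helper33 hN d31 d32 c31 c32 hle).symm

lemma succsplit_char (hN : IsMiller N) {u : List ℕ} {τ : List ℕ}
    (h : τ ∈ SuccSplit (Mset hN) (t hN u)) : ∃ k, τ = t hN (k :: u) := by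
  obtain ⟨hp, hne, hsplit, hbet⟩ := h
  obtain ⟨w, rfl⟩ := split_char hN hsplit
  have hs : u <:+ w := skel_prefix hN hp
  have hnuw : u ≠ w := fun e => hne (by rw [e])
  obtain ⟨j, hj⟩ := exists_cons_suffix hs hnuw
  refine ⟨j, ?_⟩
  by_contra hρτ
  have hρτ' : t hN (j :: u) ≠ t hN w := fun e => hρτ e.symm
  refine hbet (t hN (j :: u)) (t_sub hN u j) (L_suf hN hj) ?_ hρτ' (split_skel hN (j :: u))
  intro e
  have := t_len hN u j
  rw [e] at this
  omega

lemma Mset_tree (hN : IsMiller N) : IsTree (Mset hN) := by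
  refine ⟨⟨[], [], List.nil_prefix⟩, ?_, ?_⟩
  · intro σ hσ
    exact hN.1.2.1 σ (Mset_sub hN hσ)
  · rintro σ ⟨u, hu⟩ τ hτ
    exact ⟨u, hτ.trans hu⟩

lemma Mset_miller (hN : IsMiller N) : IsMiller (Mset hN) := by
  refine ⟨Mset_tree hN, ?_⟩
  rintro σ ⟨u, hu⟩
  refine ⟨t hN u, hu, t_mem_M hN u, ?_⟩
  exact Set.infinite_of_injective_forall_mem (a_mono hN u).injective
    (fun k => t_succ_mem_M hN u k)

lemma Mset_star1 (hN : IsMiller N) :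
    ∀ σ, IsSplit (Mset hN) σ → ∀ m n : ℕ, m < n → σ ++ [n] ∈ Mset hN →
      σ ++ [m] ∈ Mset hN →
      ∀ τ ∈ SuccSplit (Mset hN) σ, (σ ++ [m]) <+: τ → ∀ x ∈ τ, x < n := by
  intro σ hsplit m n hmn hnM hmM τ hτ hpref x hx
  obtain ⟨u, rfl⟩ := split_char hN hsplit
  obtain ⟨k, rfl⟩ := succ_char hN hnM
  obtain ⟨j, rfl⟩ := succ_char hN hmM
  have hjk : j < k := (a_mono hN u).lt_iff_lt.mp hmn
  obtain ⟨j', rfl⟩ := succsplit_char hN hτ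
  have h1 : a hN u j = a hN u j' := concat_prefix_eq hpref (t_pre hN u j')
  have h2 : j = j' := (a_mono hN u).injective h1
  subst h2
  exact lt_of_le_of_lt (le_maxE hx) (maxE_lt_a hN u hjk)

lemma Mset_star2 (hN : IsMiller N) :
    ∀ σ τ, IsSplit (Mset hN) σ → IsSplit (Mset hN) τ → σ <+: τ → σ ≠ τ →
      σ.length + 2 ≤ τ.length := by
  intro σ τ hs ht hpre hne
  obtain ⟨u, rfl⟩ := split_char hN hs
  obtain ⟨w, rfl⟩ := split_char hN ht
  have hs' : u <:+ w := skel_prefix hN hpre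
  have hnuw : u ≠ w := fun e => hne (by rw [e])
  exact L_len hN hs' hnuw

theorem apple_trees_dense' :
    ∀ N, IsMiller N → ∃ M, IsApple M ∧ M ⊆ N := by
  intro N hN
  exact ⟨Mset hN, ⟨Mset_miller hN, Mset_star1 hN, Mset_star2 hN⟩, Mset_sub hN⟩

end AppleProof

/-- The apple trees are dense in the Miller trees ordered by inclusion: every Miller
tree contains an apple subtree. -/
theorem apple_trees_dense :
    ∀ N, IsMiller N → ∃ M, IsApple M ∧ M ⊆ N :=
  AppleProof.apple_trees_dense'
end

section
/- If M is an apple tree and P_L is a pear subtree of a Laver tree L, then the tree M ∩ P_L has at most one branch: |[M ∩ P_L]| ≤ 1. -/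
/-- `σfam` is a pear subtree of the Laver tree `L` (with stem `s`):
a copy of `2^{<ω}` inside `L` satisfying (I) and (II). -/
def IsPear (L : Set (List ℕ)) (s : List ℕ) (σfam : List Bool → List ℕ) : Prop :=
  σfam [] = s ∧ (∀ t, σfam t ∈ L) ∧
  ∀ t : List Bool, ∃ k ℓ : ℕ, k < ℓ ∧
    (∀ t' : List Bool, t'.length = t.length → ∀ x ∈ σfam t', x < k) ∧
    σfam (t ++ [false]) = σfam t ++ [k] ∧
    σfam (t ++ [true]) = σfam t ++ [ℓ]

/-- The pear tree as a set of nodes (closed under initial segments). -/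
def pearTree (σfam : List Bool → List ℕ) : Set (List ℕ) :=
  {ρ | ∃ t, ρ <+: σfam t}

-- helper lemmas
lemma seg_length (f : ℕ → ℕ) (n : ℕ) : (seg f n).length = n := by simp [seg]

lemma seg_succ (f : ℕ → ℕ) (n : ℕ) : seg f (n+1) = seg f n ++ [f n] := by
  simp [seg, List.range_succ]

lemma seg_prefix (f : ℕ → ℕ) {m n : ℕ} (h : m ≤ n) : seg f m <+: seg f n := by
  unfold seg
  have : List.range m = (List.range n).take m := by
    rw [List.take_range]; congr 1; omega
  rw [this]
  exact (List.take_prefix m (List.range n)).map f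

lemma σfam_stem {L s} {σfam : List Bool → List ℕ} (hP : IsPear L s σfam) (t : List Bool) :
    s <+: σfam t := by
  induction t using List.reverseRecOn with
  | nil => rw [hP.1]
  | append_singleton t c ih =>
    obtain ⟨k, ℓ, _, _, h0, h1⟩ := hP.2.2 t
    cases c
    · rw [h0]; exact ih.trans (List.prefix_append _ _)
    · rw [h1]; exact ih.trans (List.prefix_append _ _)

lemma σfam_length {L s} {σfam : List Bool → List ℕ} (hP : IsPear L s σfam) (t : List Bool) :
    (σfam t).length = s.length + t.length := by
  induction t using List.reverseRecOn with
  | nil => rw [hP.1]; simp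
  | append_singleton t c ih =>
    obtain ⟨k, ℓ, _, _, h0, h1⟩ := hP.2.2 t
    cases c
    · rw [h0]; simp [ih]; omega
    · rw [h1]; simp [ih]; omega

lemma pear_case {L s} {σfam : List Bool → List ℕ} (hP : IsPear L s σfam)
    {ρ : List ℕ} {a : ℕ} {u : List Bool} (h : ρ ++ [a] <+: σfam u) :
    ρ ++ [a] <+: s ∨ ∃ t k ℓ, k < ℓ ∧
      (∀ t', t'.length = t.length → ∀ x ∈ σfam t', x < k) ∧
      σfam (t ++ [false]) = σfam t ++ [k] ∧
      σfam (t ++ [true]) = σfam t ++ [ℓ] ∧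
      σfam t = ρ ∧ (a = k ∨ a = ℓ) := by
  induction u using List.reverseRecOn with
  | nil => left; rwa [hP.1] at h
  | append_singleton t c ih =>
    obtain ⟨k, ℓ, hkl, hbd, h0, h1⟩ := hP.2.2 t
    have key : ∀ x : ℕ, (a = k ∨ a = ℓ) → False ∨ True := fun _ _ => Or.inr trivial
    -- general sub-step: reduce `ρ ++ [a] <+: σfam t ++ [x]`
    have sub : ∀ x : ℕ, ρ ++ [a] <+: σfam t ++ [x] →
        ρ ++ [a] <+: σfam t ∨ (ρ = σfam t ∧ a = x) := by
      intro x hx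
      rcases Nat.lt_or_ge (ρ ++ [a]).length ((σfam t).length + 1) with hlen | hlen
      · left
        exact List.prefix_of_prefix_length_le hx (List.prefix_append _ _) (by simp at hlen ⊢; omega)
      · right
        have heq : ρ ++ [a] = σfam t ++ [x] := by
          apply hx.eq_of_length
          have := hx.length_le
          simp at hlen this ⊢
          omega
        obtain ⟨h1, h2⟩ := List.append_inj' heq rfl
        exact ⟨h1, by simpa using h2⟩
    cases c
    · rw [h0] at h
      rcases sub k h with h' | ⟨h1', h2'⟩
      · exact ih h'
      · exact Or.inr ⟨t, k, ℓ, hkl, hbd, h0, h1, h1'.symm, Or.inl h2'⟩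
    · rw [h1] at h
      rcases sub ℓ h with h' | ⟨h1', h2'⟩
      · exact ih h'
      · exact Or.inr ⟨t, k, ℓ, hkl, hbd, h0, h1, h1'.symm, Or.inr h2'⟩

lemma exists_succSplit {M : Set (List ℕ)} (hM : IsMiller M) {ρ : List ℕ} {m : ℕ}
    (h : ρ ++ [m] ∈ M) : ∃ τ ∈ SuccSplit M ρ, ρ ++ [m] <+: τ := by
  classical
  obtain ⟨τ₀, hpre, hτ₀M, hinf⟩ := hM.2 _ h
  have hPlen : ρ ++ [m] <+: τ₀.take τ₀.length ∧ IsSplit M (τ₀.take τ₀.length) := by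
    refine ⟨by simpa using hpre, ?_⟩
    obtain ⟨x, hx⟩ := hinf.nonempty
    obtain ⟨y, hy1, hyx⟩ := (hinf.diff (Set.finite_singleton x)).nonempty
    simp only [List.take_length]
    exact ⟨hτ₀M, y, x, by simpa using hyx, hy1, hx⟩
  have hex : ∃ n, ρ ++ [m] <+: τ₀.take n ∧ IsSplit M (τ₀.take n) := ⟨τ₀.length, hPlen⟩
  set n := Nat.find hex with hndef
  obtain ⟨hp1, hp2⟩ := Nat.find_spec hex
  have hnle : n ≤ τ₀.length := Nat.find_le hPlen
  set τ := τ₀.take n with hτdef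
  have hτlen : τ.length = n := by simp [hτdef]; omega
  have hρτ : ρ <+: τ := (List.prefix_append ρ [m]).trans hp1
  have hρne : ρ ≠ τ := by
    intro hc
    have := hp1.length_le
    rw [← hc] at this
    simp at this
  refine ⟨τ, ⟨hρτ, hρne, hp2, ?_⟩, hp1⟩
  intro ρ' h1 h2 h3 h4 hsplit
  have hlt : ρ'.length < n := by
    have := h2.length_le
    rcases lt_or_eq_of_le this with h | h
    · omega
    · exact absurd (h2.eq_of_length (by omega)) h4
  have hρ'take : ρ' = τ₀.take ρ'.length := by
    have : ρ' <+: τ₀ := h2.trans (List.take_prefix _ _)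
    exact List.prefix_iff_eq_take.mp this
  have hρ'long : ρ.length + 1 ≤ ρ'.length := by
    have := h1.length_le
    rcases lt_or_eq_of_le this with h | h
    · omega
    · exact absurd (h1.eq_of_length h).symm h3
  have hpm : ρ ++ [m] <+: ρ' :=
    List.prefix_of_prefix_length_le hp1 h2 (by simp; omega)
  exact Nat.find_min hex hlt ⟨hρ'take ▸ hpm, hρ'take ▸ hsplit⟩

-- main key lemma: two branches cannot diverge
lemma key_lemma {M L : Set (List ℕ)} {s : List ℕ} {σfam : List Bool → List ℕ}
    (hM : IsApple M) (hP : IsPear L s σfam)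
    {f g : ℕ → ℕ} (hf : f ∈ branches (M ∩ pearTree σfam))
    (hg : g ∈ branches (M ∩ pearTree σfam))
    {N : ℕ} (hseg : seg f N = seg g N) (hlt : f N < g N) : False := by
  set ρ := seg f N with hρdef
  have hρlen : ρ.length = N := seg_length f N
  set m := f N
  set n := g N
  have hfm : ρ ++ [m] = seg f (N+1) := (seg_succ f N).symm
  have hgn : ρ ++ [n] = seg g (N+1) := by rw [seg_succ g N, hseg]
  have hfmM : ρ ++ [m] ∈ M := hfm ▸ (hf.2 (N+1)).1
  have hgnM : ρ ++ [n] ∈ M := hgn ▸ (hg.2 (N+1)).1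
  have hρM : ρ ∈ M := (hf.2 N).1
  have hρsplit : IsSplit M ρ := ⟨hρM, m, n, Nat.ne_of_lt hlt, hfmM, hgnM⟩
  -- pear structure at the divergence
  obtain ⟨uf, huf⟩ : ρ ++ [m] ∈ pearTree σfam := hfm ▸ (hf.2 (N+1)).2
  obtain ⟨ug, hug⟩ : ρ ++ [n] ∈ pearTree σfam := hgn ▸ (hg.2 (N+1)).2
  have hcasef := pear_case hP huf
  have hcaseg := pear_case hP hug
  have hstemcontra : ∀ t : List Bool, σfam t = ρ →
      (ρ ++ [m] <+: s ∨ ρ ++ [n] <+: s) → False := by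
    intro t ht hc
    have hst : s <+: ρ := ht ▸ σfam_stem hP t
    have := hst.length_le
    rcases hc with hc | hc <;> · have := hc.length_le; simp at this; omega
  -- get the structured description of the n-side
  obtain ⟨t', k', ℓ', hkl', hbd', h0', h1', hteq', hna⟩ :
      ∃ t k ℓ, k < ℓ ∧
      (∀ t', t'.length = t.length → ∀ x ∈ σfam t', x < k) ∧
      σfam (t ++ [false]) = σfam t ++ [k] ∧
      σfam (t ++ [true]) = σfam t ++ [ℓ] ∧
      σfam t = ρ ∧ (n = k ∨ n = ℓ) := by
    rcases hcaseg with hc | hc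
    · rcases hcasef with hc' | hc'
      · -- both prefixes of s: m = n
        have h1 : ρ ++ [m] <+: ρ ++ [n] :=
          List.prefix_of_prefix_length_le hc' hc (by simp)
        have : ρ ++ [m] = ρ ++ [n] := h1.eq_of_length (by simp)
        simp at this
        omega
      · obtain ⟨t, k, ℓ, _, _, _, _, hteq, _⟩ := hc'
        exact absurd (Or.inr hc) (fun hh => hstemcontra t hteq hh)
    · exact hc
  -- the first splitting node of M above ρ++[m]
  obtain ⟨τ, hτsucc, hτpre⟩ := exists_succSplit hM.1 hfmM
  have hτbound : ∀ x ∈ τ, x < n :=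
    hM.2.1 ρ hρsplit m n hlt hgnM hfmM τ hτsucc hτpre
  have hτlong : ρ.length + 2 ≤ τ.length :=
    hM.2.2 ρ τ hρsplit hτsucc.2.2.1 hτsucc.1 hτsucc.2.1
  -- f passes through τ up to length N+2
  have hthrough : ∀ j, N+1 ≤ j → j ≤ τ.length → seg f j = τ.take j := by
    intro j hj1
    induction j, hj1 using Nat.le_induction with
    | base =>
      intro _
      have : ρ ++ [m] = τ.take (N+1) := by
        have := List.prefix_iff_eq_take.mp hτpre
        simpa [hρlen] using this
      rw [← hfm, this]
    | succ j hj ih =>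
      intro hjle
      have hjlt : j < τ.length := by omega
      have hseg_j : seg f j = τ.take j := ih (by omega)
      have htk : τ.take (j+1) = τ.take j ++ [τ[j]] := by
        rw [← List.take_concat_get hjlt]; simp
      by_cases hfj : f j = τ[j]
      · rw [seg_succ, hseg_j, hfj, htk]
      · exfalso
        have hμM1 : seg f j ++ [f j] ∈ M := by rw [← seg_succ]; exact (hf.2 (j+1)).1
        have hμM2 : seg f j ++ [τ[j]] ∈ M := by
          rw [hseg_j, ← htk]
          exact hM.1.1.2.2 τ hτsucc.2.2.1.1 _ (List.take_prefix _ _)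
        have hμsplit : IsSplit M (seg f j) := ⟨(hf.2 j).1, f j, τ[j], hfj, hμM1, hμM2⟩
        refine hτsucc.2.2.2 (seg f j) ?_ ?_ ?_ ?_ hμsplit
        · exact hρdef ▸ seg_prefix f (by omega)
        · rw [hseg_j]; exact List.take_prefix _ _
        · intro hc; have := congrArg List.length hc; simp [seg_length, hρlen] at this; omega
        · intro hc; have := congrArg List.length hc; simp [seg_length] at this; omega
  -- hence f (N+1) ∈ τ, so f (N+1) < n
  have hfN1τ : f (N+1) ∈ τ := by
    have h2 : seg f (N+2) = τ.take (N+2) := hthrough (N+2) (by omega) (by omega)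
    have hmem : f (N+1) ∈ seg f (N+2) := by
      rw [seg_succ]; simp
    rw [h2] at hmem
    exact (List.take_prefix _ _).subset hmem
  have hfN1lt : f (N+1) < n := hτbound _ hfN1τ
  -- pear structure above ρ ++ [m]
  obtain ⟨u2, hu2⟩ : seg f (N+2) ∈ pearTree σfam := (hf.2 (N+2)).2
  have hseg2 : seg f (N+2) = (ρ ++ [m]) ++ [f (N+1)] := by
    rw [seg_succ, ← hfm]
  rw [hseg2] at hu2
  rcases pear_case hP hu2 with hc | ⟨t₁, k₁, ℓ₁, hkl₁, hbd₁, _, _, hteq₁, ha₁⟩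
  · -- (ρ++[m])++[f(N+1)] <+: s : impossible by length
    have hst : s <+: ρ := hteq' ▸ σfam_stem hP t'
    have h1 := hst.length_le
    have h2 := hc.length_le
    simp at h2
    omega
  · -- length bookkeeping
    have hl1 : (σfam t₁).length = s.length + t₁.length := σfam_length hP t₁
    have hl2 : (σfam t').length = s.length + t'.length := σfam_length hP t'
    rw [hteq₁] at hl1
    rw [hteq'] at hl2
    simp at hl1
    have ht₁len : t₁.length = t'.length + 1 := by omega
    -- n is an entry of σfam (t' ++ [b]) of length t₁.length
    have hn_mem : ∃ b : Bool, n ∈ σfam (t' ++ [b]) ∧ (t' ++ [b]).length = t₁.length := by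
      rcases hna with h | h
      · exact ⟨false, by rw [h0', hteq', h]; simp, by simp [ht₁len]⟩
      · exact ⟨true, by rw [h1', hteq', h]; simp, by simp [ht₁len]⟩
    obtain ⟨b, hbmem, hblen⟩ := hn_mem
    have hnk₁ : n < k₁ := hbd₁ _ hblen n hbmem
    have hk₁a : k₁ ≤ f (N+1) := by rcases ha₁ with h | h <;> omega
    omega

/-- If `M` is an apple tree and `P_L` is a pear subtree of a Laver tree `L`, then
`M ∩ P_L` has at most one branch. -/
theorem apple_pear_at_most_one_branch
    (M L : Set (List ℕ)) (s : List ℕ) (σfam : List Bool → List ℕ)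
    (hM : IsApple M) (hL : IsLaverWithStem L s) (hP : IsPear L s σfam) :
    (branches (M ∩ pearTree σfam)).Subsingleton := by
  intro f hf g hg
  funext N
  induction N using Nat.strong_induction_on with
  | _ N ih =>
    by_contra hne
    have hseg : seg f N = seg g N := by
      unfold seg
      apply List.map_congr_left
      intro i hi
      exact ih i (List.mem_range.mp hi)
    rcases lt_trichotomy (f N) (g N) with h | h | h
    · exact key_lemma hM hP hf hg hseg h
    · exact hne h
    · exact key_lemma hM hP hg hf hseg.symm h
end

section
/- Let S be a Sacks tree with stem σ = stem(S) and let i ≠ j be such that σ⌢⟨i⟩, σ⌢⟨j⟩ ∈ S. Let A_S^{⟨i,j⟩} = {⟨ρ,τ⟩ : σ⌢⟨i⟩ ⊆ ρ ∈ split(S), σ⌢⟨j⟩ ⊆ τ ∈ S, |ρ| = |τ|}. Then for every relation R ⊆ A_S^{⟨i,j⟩} there is a Sacks tree S' ⊆ S with stem(S') = σ and σ⌢⟨i⟩, σ⌢⟨j⟩ ∈ S' such that either every pair in A_{S'}^{⟨i,j⟩} belongs to R, or no pair in A_{S'}^{⟨i,j⟩} belongs to R. -/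
/-- `s` is the stem of the Sacks tree `S`: a splitting node comparable with all
nodes of `S`. -/
def IsStem (S : Set (List ℕ)) (s : List ℕ) : Prop :=
  s ∈ S ∧ (∀ σ ∈ S, σ <+: s ∨ s <+: σ) ∧ IsSplit S s

/-- `A_S^{⟨i,j⟩}`: pairs `⟨ρ,τ⟩` with `σ⌢⟨i⟩ ⊆ ρ ∈ split(S)`, `σ⌢⟨j⟩ ⊆ τ ∈ S`,
`|ρ| = |τ|`, where `σ` is the stem of `S`. -/
def Apairs (S : Set (List ℕ)) (σ : List ℕ) (i j : ℕ) : Set (List ℕ × List ℕ) :=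
  {p | (σ ++ [i]) <+: p.1 ∧ IsSplit S p.1 ∧ (σ ++ [j]) <+: p.2 ∧ p.2 ∈ S ∧
    p.1.length = p.2.length}


namespace SPL
open List

lemma take_of_prefix {u v : List ℕ} (h : u <+: v) : v.take u.length = u := by
  obtain ⟨t, rfl⟩ := h; simp

lemma pref_of_pref {u v w : List ℕ} (h1 : u <+: w) (h2 : v <+: w)
    (h : u.length ≤ v.length) : u <+: v := List.prefix_of_prefix_length_le h1 h2 h

lemma S_incseq_pref {S : Set (List ℕ)} (hS : IsTree S) {ν π : List ℕ}
    (hν : ν ∈ S) (h : π <+: ν) : π ∈ S := hS.2.2 ν hν π h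

/-- In a Sacks tree, every node has extensions of every greater length. -/
lemma sacks_ext {S : Set (List ℕ)} (hS : IsSacks S) {ν : List ℕ} (hν : ν ∈ S)
    (L : ℕ) (hL : ν.length ≤ L) : ∃ μ, μ ∈ S ∧ ν <+: μ ∧ μ.length = L := by
  have key : ∀ n, ∃ μ, μ ∈ S ∧ ν <+: μ ∧ n ≤ μ.length := by
    intro n
    induction n with
    | zero => exact ⟨ν, hν, prefix_refl _, Nat.zero_le _⟩
    | succ n ih =>
      obtain ⟨μ, hμS, hpre, hlen⟩ := ih
      rcases Nat.lt_or_ge n μ.length with h | h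
      · exact ⟨μ, hμS, hpre, h⟩
      · obtain ⟨ρ, hρpre, hρS, m, m', hmm, hm, _⟩ := hS.2 μ hμS
        refine ⟨ρ ++ [m], hm, hpre.trans (hρpre.trans ⟨[m], rfl⟩), ?_⟩
        have := hρpre.length_le
        simp only [List.length_append, List.length_singleton]
        omega
  obtain ⟨μ, hμS, hpre, hlen⟩ := key L
  refine ⟨μ.take L, S_incseq_pref hS.1 hμS (take_prefix _ _), ?_, by simp [hlen]⟩
  exact pref_of_pref hpre (take_prefix _ _) (by simp; omega)

/-- Incompatibility of the two sides. -/
lemma sides_ne {σ : List ℕ} {i j : ℕ} (hij : i ≠ j) {u : List ℕ}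
    (h1 : σ ++ [i] <+: u) (h2 : σ ++ [j] <+: u) : False := by
  have : σ ++ [i] = σ ++ [j] :=
    (pref_of_pref h1 h2 (by simp)).eq_of_length_le (by simp)
  exact hij (by simpa using this)

/-- State of the fusion construction. -/
structure FSt where
  len : ℕ
  A : List (List ℕ)
  B : List (List ℕ)

/-- Data for the fusion construction. -/
structure Setup where
  S : Set (List ℕ)
  P : List ℕ → List ℕ → Prop
  a₀ : List ℕ
  b₀ : List ℕ
  hS : IsSacks S
  ha₀ : a₀ ∈ S
  hb₀ : b₀ ∈ S
  hlen₀ : a₀.length = b₀.length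
  H : ∀ (a : List ℕ) (Bl : List (List ℕ)), a ∈ S → a₀ <+: a →
      (∀ b ∈ Bl, b ∈ S ∧ b₀ <+: b ∧ b.length = a.length) →
      ∃ ρ, a <+: ρ ∧ IsSplit S ρ ∧
        ∀ b ∈ Bl, ∃ τ, τ ∈ S ∧ b <+: τ ∧ τ.length = ρ.length ∧ P ρ τ

variable (C : Setup)

def Inv (s : FSt) : Prop :=
  s.A ≠ [] ∧ s.B ≠ [] ∧ s.A.Nodup ∧ s.B.Nodup ∧
  (∀ a ∈ s.A, a ∈ C.S ∧ C.a₀ <+: a ∧ a.length = s.len) ∧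
  (∀ b ∈ s.B, b ∈ C.S ∧ C.b₀ <+: b ∧ b.length = s.len)

/-- The step where the head of `A` is split. -/
def ARel (s t : FSt) : Prop :=
  ∃ a : List ℕ, ∃ tl : List (List ℕ), ∃ ρ : List ℕ, ∃ x y : ℕ, ∃ e eB : List ℕ → List ℕ,
    s.A = a :: tl ∧ a <+: ρ ∧ ρ ∈ C.S ∧ x ≠ y ∧ ρ ++ [x] ∈ C.S ∧ ρ ++ [y] ∈ C.S ∧
    t.len = ρ.length + 1 ∧
    t.A = tl.map e ++ [ρ ++ [x], ρ ++ [y]] ∧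
    (∀ a' ∈ tl, a' <+: e a') ∧
    t.B = s.B.map eB ∧
    (∀ b ∈ s.B, b <+: eB b ∧ C.P ρ ((eB b).take ρ.length))

/-- The step where the head of `B` is split. -/
def BRel (s t : FSt) : Prop :=
  ∃ b : List ℕ, ∃ tl : List (List ℕ), ∃ ρ : List ℕ, ∃ x y : ℕ, ∃ e eA : List ℕ → List ℕ,
    s.B = b :: tl ∧ b <+: ρ ∧ ρ ∈ C.S ∧ x ≠ y ∧ ρ ++ [x] ∈ C.S ∧ ρ ++ [y] ∈ C.S ∧
    t.len = ρ.length + 1 ∧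
    t.B = tl.map e ++ [ρ ++ [x], ρ ++ [y]] ∧
    (∀ b' ∈ tl, b' <+: e b') ∧
    t.A = s.A.map eA ∧
    (∀ a ∈ s.A, a <+: eA a)

def Rel (n : ℕ) (s t : FSt) : Prop :=
  s.len < t.len ∧ (if n % 2 = 0 then ARel C s t else BRel C s t)

lemma step_ex (n : ℕ) (s : FSt) (hs : Inv C s) : ∃ t, Inv C t ∧ Rel C n s t := by
  classical
  obtain ⟨hA, hB, hAnd, hBnd, hAm, hBm⟩ := hs
  by_cases hpar : n % 2 = 0
  · -- A-step
    obtain ⟨a, tl, hsA⟩ : ∃ a tl, s.A = a :: tl := by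
      cases hA' : s.A with
      | nil => exact absurd hA' hA
      | cons a tl => exact ⟨a, tl, rfl⟩
    have haS : a ∈ C.S ∧ C.a₀ <+: a ∧ a.length = s.len := hAm a (by simp [hsA])
    obtain ⟨ρ, hρpre, hρsp, hτ⟩ := C.H a s.B haS.1 haS.2.1 (by
      intro b hb
      obtain ⟨h1, h2, h3⟩ := hBm b hb
      exact ⟨h1, h2, by rw [h3, haS.2.2]⟩)
    obtain ⟨hρS, x, y, hxy, hx, hy⟩ := hρsp
    have hρlen : s.len ≤ ρ.length := by
      have := hρpre.length_le; omega
    set e : List ℕ → List ℕ := fun u =>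
      if h : u ∈ C.S ∧ u.length ≤ ρ.length + 1 then
        (sacks_ext C.hS h.1 (ρ.length+1) h.2).choose else [] with he
    have hespec : ∀ u, u ∈ C.S → u.length ≤ ρ.length + 1 →
        e u ∈ C.S ∧ u <+: e u ∧ (e u).length = ρ.length + 1 := by
      intro u h1 h2
      have hh : u ∈ C.S ∧ u.length ≤ ρ.length + 1 := ⟨h1, h2⟩
      simp only [he, dif_pos hh]
      exact (sacks_ext C.hS h1 (ρ.length+1) h2).choose_spec
    set eB : List ℕ → List ℕ := fun b =>
      if h : b ∈ s.B then
        (sacks_ext C.hS (hτ b h).choose_spec.1 (ρ.length+1)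
          ((le_of_eq (hτ b h).choose_spec.2.2.1).trans (Nat.le_succ _))).choose
      else [] with heB
    have heBspec : ∀ b (hb : b ∈ s.B), eB b ∈ C.S ∧ b <+: eB b ∧
        (eB b).length = ρ.length + 1 ∧ (eB b).take ρ.length = (hτ b hb).choose := by
      intro b hb
      have hval : eB b = (sacks_ext C.hS (hτ b hb).choose_spec.1 (ρ.length+1)
          ((le_of_eq (hτ b hb).choose_spec.2.2.1).trans (Nat.le_succ _))).choose := by
        simp only [heB]; rw [dif_pos hb]
      have m := (sacks_ext C.hS (hτ b hb).choose_spec.1 (ρ.length+1)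
          ((le_of_eq (hτ b hb).choose_spec.2.2.1).trans (Nat.le_succ _))).choose_spec
      rw [← hval] at m
      refine ⟨m.1, (hτ b hb).choose_spec.2.1.trans m.2.1, m.2.2, ?_⟩
      have h9 := take_of_prefix m.2.1
      have h10 : take ρ.length (eB b) = take ((hτ b hb).choose.length) (eB b) := by
        rw [(hτ b hb).choose_spec.2.2.1]
      exact h10.trans h9
    refine ⟨⟨ρ.length + 1, tl.map e ++ [ρ ++ [x], ρ ++ [y]], s.B.map eB⟩,
      ⟨by simp, by simpa using hB, ?_, ?_, ?_, ?_⟩, by dsimp only; omega, ?_⟩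
    · -- Nodup A'
      dsimp only
      have htl : ∀ u ∈ tl, u ∈ C.S ∧ C.a₀ <+: u ∧ u.length = s.len := by
        intro u hu; exact hAm u (by simp [hsA, hu])
      have hkey : ∀ u ∈ tl, (e u).take s.len = u := by
        intro u hu
        have h1 := hespec u (htl u hu).1 (by rw [(htl u hu).2.2]; omega)
        have := take_of_prefix h1.2.1
        rwa [(htl u hu).2.2] at this
      have hnd : Nodup (a :: tl) := by rwa [hsA] at hAnd
      simp only [List.nodup_append]
      refine ⟨?_, by simp [hxy], ?_⟩
      · refine List.Nodup.map_on ?_ (hnd.of_cons)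
        intro u hu v hv heq
        rw [← hkey u hu, ← hkey v hv, heq]
      · intro u hu
        simp only [List.mem_map] at hu
        obtain ⟨v, hv, rfl⟩ := hu
        have hva : (e v).take s.len = v := hkey v hv
        have hchild : ∀ z : ℕ, ((ρ ++ [z]).take s.len) = a := by
          intro z
          have hpref : a <+: ρ ++ [z] := hρpre.trans ⟨[z], rfl⟩
          have := take_of_prefix hpref
          rwa [haS.2.2] at this
        simp only [List.mem_cons, List.mem_singleton, List.not_mem_nil, or_false]
        rintro _ (rfl | rfl) h <;>
        · rw [h] at hva
          rw [hchild] at hva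
          exact (List.nodup_cons.mp hnd).1 (hva ▸ hv)
    · -- Nodup B'
      dsimp only
      refine List.Nodup.map_on ?_ hBnd
      intro u hu v hv heq
      have h1 := heBspec u hu
      have h2 := heBspec v hv
      have k1 : (eB u).take s.len = u := by
        have := take_of_prefix h1.2.1
        rwa [(hBm u hu).2.2] at this
      have k2 : (eB v).take s.len = v := by
        have := take_of_prefix h2.2.1
        rwa [(hBm v hv).2.2] at this
      rw [← k1, ← k2, heq]
    · -- membership A'
      dsimp only
      intro u hu
      simp only [List.mem_append, List.mem_map, List.mem_cons,
        List.not_mem_nil, or_false, List.mem_singleton] at hu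
      rcases hu with ⟨v, hv, rfl⟩ | h | h
      · have hvv := hAm v (by simp [hsA, hv])
        have h1 := hespec v hvv.1 (by rw [hvv.2.2]; omega)
        exact ⟨h1.1, hvv.2.1.trans h1.2.1, h1.2.2⟩
      · subst h
        exact ⟨hx, haS.2.1.trans (hρpre.trans ⟨[x], rfl⟩), by simp⟩
      · subst h
        exact ⟨hy, haS.2.1.trans (hρpre.trans ⟨[y], rfl⟩), by simp⟩
    · -- membership B'
      dsimp only
      intro u hu
      simp only [List.mem_map] at hu
      obtain ⟨v, hv, rfl⟩ := hu
      have h1 := heBspec v hv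
      exact ⟨h1.1, (hBm v hv).2.1.trans h1.2.1, h1.2.2.1⟩
    · -- Rel
      rw [if_pos hpar]
      refine ⟨a, tl, ρ, x, y, e, eB, hsA, hρpre, hρS, hxy, hx, hy, rfl, rfl, ?_, rfl, ?_⟩
      · intro a' ha'
        have hvv := hAm a' (by simp [hsA, ha'])
        exact (hespec a' hvv.1 (by rw [hvv.2.2]; omega)).2.1
      · intro b hb
        have h1 := heBspec b hb
        refine ⟨h1.2.1, ?_⟩
        rw [h1.2.2.2]
        exact (hτ b hb).choose_spec.2.2.2
  · -- B-step
    obtain ⟨b, tl, hsB⟩ : ∃ b tl, s.B = b :: tl := by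
      cases hB' : s.B with
      | nil => exact absurd hB' hB
      | cons b tl => exact ⟨b, tl, rfl⟩
    have hbS : b ∈ C.S ∧ C.b₀ <+: b ∧ b.length = s.len := hBm b (by simp [hsB])
    obtain ⟨ρ, hρpre, hρS, x, y, hxy, hx, hy⟩ := C.hS.2 b hbS.1
    have hρlen : s.len ≤ ρ.length := by
      have := hρpre.length_le; omega
    set e : List ℕ → List ℕ := fun u =>
      if h : u ∈ C.S ∧ u.length ≤ ρ.length + 1 then
        (sacks_ext C.hS h.1 (ρ.length+1) h.2).choose else [] with he
    have hespec : ∀ u, u ∈ C.S → u.length ≤ ρ.length + 1 →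
        e u ∈ C.S ∧ u <+: e u ∧ (e u).length = ρ.length + 1 := by
      intro u h1 h2
      have hh : u ∈ C.S ∧ u.length ≤ ρ.length + 1 := ⟨h1, h2⟩
      simp only [he, dif_pos hh]
      exact (sacks_ext C.hS h1 (ρ.length+1) h2).choose_spec
    refine ⟨⟨ρ.length + 1, s.A.map e, tl.map e ++ [ρ ++ [x], ρ ++ [y]]⟩,
      ⟨by simpa using hA, by simp, ?_, ?_, ?_, ?_⟩, by dsimp only; omega, ?_⟩
    · -- Nodup A'
      dsimp only
      refine List.Nodup.map_on ?_ hAnd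
      intro u hu v hv heq
      have k1 : (e u).take s.len = u := by
        have hvv := hAm u hu
        have := take_of_prefix (hespec u hvv.1 (by rw [hvv.2.2]; omega)).2.1
        rwa [hvv.2.2] at this
      have k2 : (e v).take s.len = v := by
        have hvv := hAm v hv
        have := take_of_prefix (hespec v hvv.1 (by rw [hvv.2.2]; omega)).2.1
        rwa [hvv.2.2] at this
      rw [← k1, ← k2, heq]
    · -- Nodup B'
      dsimp only
      have htl : ∀ u ∈ tl, u ∈ C.S ∧ C.b₀ <+: u ∧ u.length = s.len := by
        intro u hu; exact hBm u (by simp [hsB, hu])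
      have hkey : ∀ u ∈ tl, (e u).take s.len = u := by
        intro u hu
        have h1 := hespec u (htl u hu).1 (by rw [(htl u hu).2.2]; omega)
        have := take_of_prefix h1.2.1
        rwa [(htl u hu).2.2] at this
      have hnd : Nodup (b :: tl) := by rwa [hsB] at hBnd
      simp only [List.nodup_append]
      refine ⟨?_, by simp [hxy], ?_⟩
      · refine List.Nodup.map_on ?_ (hnd.of_cons)
        intro u hu v hv heq
        rw [← hkey u hu, ← hkey v hv, heq]
      · intro u hu
        simp only [List.mem_map] at hu
        obtain ⟨v, hv, rfl⟩ := hu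
        have hva : (e v).take s.len = v := hkey v hv
        have hchild : ∀ z : ℕ, ((ρ ++ [z]).take s.len) = b := by
          intro z
          have hpref : b <+: ρ ++ [z] := hρpre.trans ⟨[z], rfl⟩
          have := take_of_prefix hpref
          rwa [hbS.2.2] at this
        simp only [List.mem_cons, List.mem_singleton, List.not_mem_nil, or_false]
        rintro _ (rfl | rfl) h <;>
        · rw [h] at hva
          rw [hchild] at hva
          exact (List.nodup_cons.mp hnd).1 (hva ▸ hv)
    · -- membership A'
      dsimp only
      intro u hu
      simp only [List.mem_map] at hu
      obtain ⟨v, hv, rfl⟩ := hu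
      have hvv := hAm v hv
      have h1 := hespec v hvv.1 (by rw [hvv.2.2]; omega)
      exact ⟨h1.1, hvv.2.1.trans h1.2.1, h1.2.2⟩
    · -- membership B'
      dsimp only
      intro u hu
      simp only [List.mem_append, List.mem_map, List.mem_cons,
        List.not_mem_nil, or_false, List.mem_singleton] at hu
      rcases hu with ⟨v, hv, rfl⟩ | h | h
      · have hvv := hBm v (by simp [hsB, hv])
        have h1 := hespec v hvv.1 (by rw [hvv.2.2]; omega)
        exact ⟨h1.1, hvv.2.1.trans h1.2.1, h1.2.2⟩
      · subst h
        exact ⟨hx, hbS.2.1.trans (hρpre.trans ⟨[x], rfl⟩), by simp⟩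
      · subst h
        exact ⟨hy, hbS.2.1.trans (hρpre.trans ⟨[y], rfl⟩), by simp⟩
    · -- Rel
      rw [if_neg hpar]
      refine ⟨b, tl, ρ, x, y, e, e, hsB, hρpre, hρS, hxy, hx, hy, rfl, rfl, ?_, rfl, ?_⟩
      · intro b' hb'
        have hvv := hBm b' (by simp [hsB, hb'])
        exact (hespec b' hvv.1 (by rw [hvv.2.2]; omega)).2.1
      · intro a ha
        have hvv := hAm a ha
        exact (hespec a hvv.1 (by rw [hvv.2.2]; omega)).2.1

noncomputable def state : ℕ → {s : FSt // Inv C s}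
  | 0 => ⟨⟨C.a₀.length, [C.a₀], [C.b₀]⟩, by
      refine ⟨by simp, by simp, by simp, by simp, ?_, ?_⟩
      · intro a ha; simp only [List.mem_singleton] at ha; subst ha
        exact ⟨C.ha₀, prefix_refl _, rfl⟩
      · intro b hb; simp only [List.mem_singleton] at hb; subst hb
        exact ⟨C.hb₀, prefix_refl _, C.hlen₀.symm⟩⟩
  | n + 1 => ⟨(step_ex C n (state n).1 (state n).2).choose,
      (step_ex C n (state n).1 (state n).2).choose_spec.1⟩

noncomputable def st (n : ℕ) : FSt := (state C n).1

lemma st_inv (n : ℕ) : Inv C (st C n) := (state C n).2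

lemma st_rel (n : ℕ) : Rel C n (st C n) (st C (n+1)) := by
  show Rel C n (state C n).1 (state C (n+1)).1
  have : (state C (n+1)).1 = (step_ex C n (state C n).1 (state C n).2).choose := rfl
  rw [this]
  exact (step_ex C n (state C n).1 (state C n).2).choose_spec.2

lemma st_zero : st C 0 = ⟨C.a₀.length, [C.a₀], [C.b₀]⟩ := rfl

/-- The fusion tree. -/
def Sp : Set (List ℕ) :=
  {π | ∃ n ν, (ν ∈ (st C n).A ∨ ν ∈ (st C n).B) ∧ π <+: ν}

lemma len_lt (n : ℕ) : (st C n).len < (st C (n+1)).len := (st_rel C n).1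

lemma len_mono {n m : ℕ} (h : n ≤ m) : (st C n).len ≤ (st C m).len := by
  induction m with
  | zero => simp_all
  | succ m ih =>
    rcases Nat.lt_or_ge n (m+1) with h' | h'
    · exact (ih (by omega)).trans (len_lt C m).le
    · have : n = m + 1 := by omega
      subst this; rfl

lemma len_unbounded (k : ℕ) : ∃ n, k ≤ (st C n).len := by
  refine ⟨k, ?_⟩
  induction k with
  | zero => omega
  | succ k ih => have := len_lt C k; omega

/-- Forward extension, preserving the side. -/
lemma fwd_one (n : ℕ) :
    (∀ ν ∈ (st C n).A, ∃ ν', ν' ∈ (st C (n+1)).A ∧ ν <+: ν') ∧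
    (∀ ν ∈ (st C n).B, ∃ ν', ν' ∈ (st C (n+1)).B ∧ ν <+: ν') := by
  have hrel := (st_rel C n).2
  split_ifs at hrel with hpar
  · obtain ⟨a, tl, ρ, x, y, e, eB, hsA, hρpre, hρS, hxy, hx, hy, hlen, hA', he, hB', heB⟩ := hrel
    constructor
    · intro ν hν
      rw [hsA] at hν
      rcases List.mem_cons.mp hν with rfl | hν
      · exact ⟨ρ ++ [x], by rw [hA']; simp, hρpre.trans ⟨[x], rfl⟩⟩
      · exact ⟨e ν, by rw [hA']; simp [List.mem_map]; exact Or.inl ⟨ν, hν, rfl⟩,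
          he ν hν⟩
    · intro ν hν
      exact ⟨eB ν, by rw [hB']; exact List.mem_map.mpr ⟨ν, hν, rfl⟩, (heB ν hν).1⟩
  · obtain ⟨b, tl, ρ, x, y, e, eA, hsB, hρpre, hρS, hxy, hx, hy, hlen, hB', he, hA', heA⟩ := hrel
    constructor
    · intro ν hν
      exact ⟨eA ν, by rw [hA']; exact List.mem_map.mpr ⟨ν, hν, rfl⟩, heA ν hν⟩
    · intro ν hν
      rw [hsB] at hν
      rcases List.mem_cons.mp hν with rfl | hν
      · exact ⟨ρ ++ [x], by rw [hB']; simp, hρpre.trans ⟨[x], rfl⟩⟩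
      · exact ⟨e ν, by rw [hB']; simp [List.mem_map]; exact Or.inl ⟨ν, hν, rfl⟩,
          he ν hν⟩

lemma fwd {n m : ℕ} (h : n ≤ m) :
    (∀ ν ∈ (st C n).A, ∃ ν', ν' ∈ (st C m).A ∧ ν <+: ν') ∧
    (∀ ν ∈ (st C n).B, ∃ ν', ν' ∈ (st C m).B ∧ ν <+: ν') := by
  induction m with
  | zero =>
    have : n = 0 := by omega
    subst this
    exact ⟨fun ν hν => ⟨ν, hν, prefix_refl _⟩, fun ν hν => ⟨ν, hν, prefix_refl _⟩⟩
  | succ m ih =>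
    rcases Nat.lt_or_ge n (m+1) with h' | h'
    · obtain ⟨ihA, ihB⟩ := ih (by omega)
      constructor
      · intro ν hν
        obtain ⟨ν', hν', hp⟩ := ihA ν hν
        obtain ⟨ν'', hν'', hp'⟩ := (fwd_one C m).1 ν' hν'
        exact ⟨ν'', hν'', hp.trans hp'⟩
      · intro ν hν
        obtain ⟨ν', hν', hp⟩ := ihB ν hν
        obtain ⟨ν'', hν'', hp'⟩ := (fwd_one C m).2 ν' hν'
        exact ⟨ν'', hν'', hp.trans hp'⟩
    · have : n = m + 1 := by omega
      subst this
      exact ⟨fun ν hν => ⟨ν, hν, prefix_refl _⟩, fun ν hν => ⟨ν, hν, prefix_refl _⟩⟩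

/-- Backwards: truncation to an earlier level lands in the earlier front. -/
lemma back_one (n : ℕ) :
    (∀ ν ∈ (st C (n+1)).A, ∃ μ, μ ∈ (st C n).A ∧ μ <+: ν) ∧
    (∀ ν ∈ (st C (n+1)).B, ∃ μ, μ ∈ (st C n).B ∧ μ <+: ν) := by
  have hrel := (st_rel C n).2
  split_ifs at hrel with hpar
  · obtain ⟨a, tl, ρ, x, y, e, eB, hsA, hρpre, hρS, hxy, hx, hy, hlen, hA', he, hB', heB⟩ := hrel
    constructor
    · intro ν hν
      rw [hA'] at hν
      simp only [List.mem_append, List.mem_map, List.mem_cons, List.not_mem_nil,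
        or_false, List.mem_singleton] at hν
      rcases hν with ⟨v, hv, rfl⟩ | rfl | rfl
      · exact ⟨v, by rw [hsA]; simp [hv], he v hv⟩
      · exact ⟨a, by rw [hsA]; simp, hρpre.trans ⟨[x], rfl⟩⟩
      · exact ⟨a, by rw [hsA]; simp, hρpre.trans ⟨[y], rfl⟩⟩
    · intro ν hν
      rw [hB'] at hν
      obtain ⟨v, hv, rfl⟩ := List.mem_map.mp hν
      exact ⟨v, hv, (heB v hv).1⟩
  · obtain ⟨b, tl, ρ, x, y, e, eA, hsB, hρpre, hρS, hxy, hx, hy, hlen, hB', he, hA', heA⟩ := hrel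
    constructor
    · intro ν hν
      rw [hA'] at hν
      obtain ⟨v, hv, rfl⟩ := List.mem_map.mp hν
      exact ⟨v, hv, heA v hv⟩
    · intro ν hν
      rw [hB'] at hν
      simp only [List.mem_append, List.mem_map, List.mem_cons, List.not_mem_nil,
        or_false, List.mem_singleton] at hν
      rcases hν with ⟨v, hv, rfl⟩ | rfl | rfl
      · exact ⟨v, by rw [hsB]; simp [hv], he v hv⟩
      · exact ⟨b, by rw [hsB]; simp, hρpre.trans ⟨[x], rfl⟩⟩
      · exact ⟨b, by rw [hsB]; simp, hρpre.trans ⟨[y], rfl⟩⟩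

lemma back {n m : ℕ} (h : n ≤ m) :
    (∀ ν ∈ (st C m).A, ∃ μ, μ ∈ (st C n).A ∧ μ <+: ν) ∧
    (∀ ν ∈ (st C m).B, ∃ μ, μ ∈ (st C n).B ∧ μ <+: ν) := by
  induction m with
  | zero =>
    have : n = 0 := by omega
    subst this
    exact ⟨fun ν hν => ⟨ν, hν, prefix_refl _⟩, fun ν hν => ⟨ν, hν, prefix_refl _⟩⟩
  | succ m ih =>
    rcases Nat.lt_or_ge n (m+1) with h' | h'
    · obtain ⟨ihA, ihB⟩ := ih (by omega)
      constructor
      · intro ν hν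
        obtain ⟨μ, hμ, hp⟩ := (back_one C m).1 ν hν
        obtain ⟨μ', hμ', hp'⟩ := ihA μ hμ
        exact ⟨μ', hμ', hp'.trans hp⟩
      · intro ν hν
        obtain ⟨μ, hμ, hp⟩ := (back_one C m).2 ν hν
        obtain ⟨μ', hμ', hp'⟩ := ihB μ hμ
        exact ⟨μ', hμ', hp'.trans hp⟩
    · have : n = m + 1 := by omega
      subst this
      exact ⟨fun ν hν => ⟨ν, hν, prefix_refl _⟩, fun ν hν => ⟨ν, hν, prefix_refl _⟩⟩

/-- Membership characterization at a given stage. -/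
lemma mem_char {π : List ℕ} (hπ : π ∈ Sp C) {n : ℕ} (hn : π.length ≤ (st C n).len) :
    ∃ ν, (ν ∈ (st C n).A ∨ ν ∈ (st C n).B) ∧ π <+: ν := by
  obtain ⟨m, μ, hμ, hp⟩ := hπ
  rcases Nat.le_total m n with h | h
  · rcases hμ with hμ | hμ
    · obtain ⟨ν, hν, hp'⟩ := (fwd C h).1 μ hμ
      exact ⟨ν, Or.inl hν, hp.trans hp'⟩
    · obtain ⟨ν, hν, hp'⟩ := (fwd C h).2 μ hμ
      exact ⟨ν, Or.inr hν, hp.trans hp'⟩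
  · have hside : ∀ ν, (ν ∈ (st C n).A ∨ ν ∈ (st C n).B) → ν.length = (st C n).len := by
      rintro ν (hν | hν)
      · exact ((st_inv C n).2.2.2.2.1 ν hν).2.2
      · exact ((st_inv C n).2.2.2.2.2 ν hν).2.2
    rcases hμ with hμ | hμ
    · obtain ⟨ν, hν, hp'⟩ := (back C h).1 μ hμ
      refine ⟨ν, Or.inl hν, pref_of_pref hp hp' ?_⟩
      rw [hside ν (Or.inl hν)]; exact hn
    · obtain ⟨ν, hν, hp'⟩ := (back C h).2 μ hμ
      refine ⟨ν, Or.inr hν, pref_of_pref hp hp' ?_⟩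
      rw [hside ν (Or.inr hν)]; exact hn

lemma Sp_sub : Sp C ⊆ C.S := by
  rintro π ⟨n, ν, hν, hp⟩
  have hνS : ν ∈ C.S := by
    rcases hν with hν | hν
    · exact ((st_inv C n).2.2.2.2.1 ν hν).1
    · exact ((st_inv C n).2.2.2.2.2 ν hν).1
  exact S_incseq_pref C.hS.1 hνS hp

lemma mem_Sp_of_front {n : ℕ} {ν : List ℕ} (hν : ν ∈ (st C n).A ∨ ν ∈ (st C n).B) :
    ν ∈ Sp C := ⟨n, ν, hν, prefix_refl _⟩

lemma Sp_tree : IsTree (Sp C) := by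
  refine ⟨⟨C.a₀, mem_Sp_of_front C (n := 0) (Or.inl (by rw [st_zero]; simp))⟩, ?_, ?_⟩
  · intro π hπ
    exact C.hS.1.2.1 π (Sp_sub C hπ)
  · rintro π ⟨n, ν, hν, hp⟩ τ hτ
    exact ⟨n, ν, hν, hτ.trans hp⟩

lemma schedA : ∀ k n, n % 2 = 0 → ∀ (l₁ l₂ : List (List ℕ)) (ν : List ℕ),
    (st C n).A = l₁ ++ ν :: l₂ → l₁.length = k →
    ∃ ρ, ν <+: ρ ∧ IsSplit (Sp C) ρ := by
  intro k
  induction k with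
  | zero =>
    intro n hpar l₁ l₂ ν hdec hl
    have hrel := (st_rel C n).2
    rw [if_pos hpar] at hrel
    obtain ⟨a, tl, ρ, x, y, e, eB, hsA, hρpre, hρS, hxy, hx, hy, hlen, hA', he, hB', heB⟩ := hrel
    rw [List.length_eq_zero_iff] at hl
    subst hl
    simp only [List.nil_append] at hdec
    rw [hdec] at hsA
    obtain ⟨rfl, rfl⟩ : ν = a ∧ l₂ = tl := by
      constructor <;> [exact (List.cons.injEq .. ▸ hsA).1; exact (List.cons.injEq .. ▸ hsA).2]
    have hxmem : ρ ++ [x] ∈ Sp C :=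
      mem_Sp_of_front C (n := n+1) (Or.inl (by rw [hA']; simp))
    have hymem : ρ ++ [y] ∈ Sp C :=
      mem_Sp_of_front C (n := n+1) (Or.inl (by rw [hA']; simp))
    refine ⟨ρ, hρpre, ⟨n+1, ρ ++ [x], Or.inl (by rw [hA']; simp), ⟨[x], rfl⟩⟩,
      x, y, hxy, hxmem, hymem⟩
  | succ k ih =>
    intro n hpar l₁ l₂ ν hdec hl
    have hrel := (st_rel C n).2
    rw [if_pos hpar] at hrel
    obtain ⟨a, tl, ρ, x, y, e, eB, hsA, hρpre, hρS, hxy, hx, hy, hlen, hA', he, hB', heB⟩ := hrel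
    obtain ⟨a', l₁', rfl⟩ : ∃ a' l₁', l₁ = a' :: l₁' := by
      cases l₁ with
      | nil => simp at hl
      | cons a' l₁' => exact ⟨a', l₁', rfl⟩
    rw [hdec] at hsA
    simp only [List.cons_append, List.cons.injEq] at hsA
    obtain ⟨rfl, htl⟩ := hsA
    have hνtl : ν ∈ tl := by rw [← htl]; simp
    have hA1 : (st C (n+1)).A =
        (l₁'.map e) ++ (e ν) :: (l₂.map e ++ [ρ ++ [x], ρ ++ [y]]) := by
      rw [hA', ← htl]; simp
    -- odd step n+1 : B-step, A side is mapped
    have hpar1 : ¬ (n+1) % 2 = 0 := by omega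
    have hrel1 := (st_rel C (n+1)).2
    rw [if_neg hpar1] at hrel1
    obtain ⟨b, tl', ρ', x', y', e', eA, hsB1, hρpre1, hρS1, hxy1, hx1, hy1, hlen1,
      hB1, he1, hA2, heA⟩ := hrel1
    have hA2' : (st C (n+2)).A =
        ((l₁'.map e).map eA) ++ (eA (e ν)) :: ((l₂.map e ++ [ρ ++ [x], ρ ++ [y]]).map eA) := by
      rw [hA2, hA1]; simp
    have hpar2 : (n+2) % 2 = 0 := by omega
    obtain ⟨ρ'', hp'', hsp''⟩ := ih (n+2) hpar2 _ _ _ hA2' (by simp only [List.length_map]; simp at hl; omega)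
    have hν1 : e ν ∈ (st C (n+1)).A := by rw [hA1]; simp
    exact ⟨ρ'', ((he ν hνtl).trans (heA _ hν1)).trans hp'', hsp''⟩

lemma schedB : ∀ k n, ¬ n % 2 = 0 → ∀ (l₁ l₂ : List (List ℕ)) (ν : List ℕ),
    (st C n).B = l₁ ++ ν :: l₂ → l₁.length = k →
    ∃ ρ, ν <+: ρ ∧ IsSplit (Sp C) ρ := by
  intro k
  induction k with
  | zero =>
    intro n hpar l₁ l₂ ν hdec hl
    have hrel := (st_rel C n).2
    rw [if_neg hpar] at hrel
    obtain ⟨b, tl, ρ, x, y, e, eA, hsB, hρpre, hρS, hxy, hx, hy, hlen, hB', he, hA', heA⟩ := hrel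
    rw [List.length_eq_zero_iff] at hl
    subst hl
    simp only [List.nil_append] at hdec
    rw [hdec] at hsB
    obtain ⟨rfl, rfl⟩ : ν = b ∧ l₂ = tl := by
      constructor <;> [exact (List.cons.injEq .. ▸ hsB).1; exact (List.cons.injEq .. ▸ hsB).2]
    have hxmem : ρ ++ [x] ∈ Sp C :=
      mem_Sp_of_front C (n := n+1) (Or.inr (by rw [hB']; simp))
    have hymem : ρ ++ [y] ∈ Sp C :=
      mem_Sp_of_front C (n := n+1) (Or.inr (by rw [hB']; simp))
    refine ⟨ρ, hρpre, ⟨n+1, ρ ++ [x], Or.inr (by rw [hB']; simp), ⟨[x], rfl⟩⟩,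
      x, y, hxy, hxmem, hymem⟩
  | succ k ih =>
    intro n hpar l₁ l₂ ν hdec hl
    have hrel := (st_rel C n).2
    rw [if_neg hpar] at hrel
    obtain ⟨b, tl, ρ, x, y, e, eA, hsB, hρpre, hρS, hxy, hx, hy, hlen, hB', he, hA', heA⟩ := hrel
    obtain ⟨b', l₁', rfl⟩ : ∃ b' l₁', l₁ = b' :: l₁' := by
      cases l₁ with
      | nil => simp at hl
      | cons b' l₁' => exact ⟨b', l₁', rfl⟩
    rw [hdec] at hsB
    simp only [List.cons_append, List.cons.injEq] at hsB
    obtain ⟨rfl, htl⟩ := hsB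
    have hνtl : ν ∈ tl := by rw [← htl]; simp
    have hB1 : (st C (n+1)).B =
        (l₁'.map e) ++ (e ν) :: (l₂.map e ++ [ρ ++ [x], ρ ++ [y]]) := by
      rw [hB', ← htl]; simp
    have hpar1 : (n+1) % 2 = 0 := by omega
    have hrel1 := (st_rel C (n+1)).2
    rw [if_pos hpar1] at hrel1
    obtain ⟨a, tl', ρ', x', y', e', eB, hsA1, hρpre1, hρS1, hxy1, hx1, hy1, hlen1,
      hA1, he1, hB2, heB⟩ := hrel1
    have hB2' : (st C (n+2)).B =
        ((l₁'.map e).map eB) ++ (eB (e ν)) :: ((l₂.map e ++ [ρ ++ [x], ρ ++ [y]]).map eB) := by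
      rw [hB2, hB1]; simp
    have hpar2 : ¬ (n+2) % 2 = 0 := by omega
    obtain ⟨ρ'', hp'', hsp''⟩ := ih (n+2) hpar2 _ _ _ hB2' (by simp only [List.length_map]; simp at hl; omega)
    have hν1 : e ν ∈ (st C (n+1)).B := by rw [hB1]; simp
    exact ⟨ρ'', ((he ν hνtl).trans ((heB _ hν1).1)).trans hp'', hsp''⟩

lemma split_above {ν : List ℕ} {n : ℕ} (hν : ν ∈ (st C n).A ∨ ν ∈ (st C n).B) :
    ∃ ρ, ν <+: ρ ∧ IsSplit (Sp C) ρ := by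
  rcases hν with hν | hν
  · by_cases hpar : n % 2 = 0
    · obtain ⟨l₁, l₂, hdec⟩ := List.append_of_mem hν
      exact schedA C l₁.length n hpar l₁ l₂ ν hdec rfl
    · obtain ⟨ν', hν', hp⟩ := (fwd_one C n).1 ν hν
      obtain ⟨l₁, l₂, hdec⟩ := List.append_of_mem hν'
      obtain ⟨ρ, hp', hsp⟩ := schedA C l₁.length (n+1) (by omega) l₁ l₂ ν' hdec rfl
      exact ⟨ρ, hp.trans hp', hsp⟩
  · by_cases hpar : n % 2 = 0
    · obtain ⟨ν', hν', hp⟩ := (fwd_one C n).2 ν hν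
      obtain ⟨l₁, l₂, hdec⟩ := List.append_of_mem hν'
      obtain ⟨ρ, hp', hsp⟩ := schedB C l₁.length (n+1) (by omega) l₁ l₂ ν' hdec rfl
      exact ⟨ρ, hp.trans hp', hsp⟩
    · obtain ⟨l₁, l₂, hdec⟩ := List.append_of_mem hν
      exact schedB C l₁.length n hpar l₁ l₂ ν hdec rfl

lemma Sp_sacks : IsSacks (Sp C) := by
  refine ⟨Sp_tree C, ?_⟩
  rintro π ⟨n, ν, hν, hp⟩
  obtain ⟨ρ, hp', hsp⟩ := split_above C hν
  exact ⟨ρ, hp.trans hp', hsp⟩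

lemma val_at {ρ ν : List ℕ} {x : ℕ} (h : ρ ++ [x] <+: ν) :
    ∀ (hl : ρ.length < ν.length), ν[ρ.length] = x := by
  intro hl
  have h1 : (ρ ++ [x])[ρ.length]'(by simp) = x := by simp
  rw [← h1]
  exact (h.getElem (by simp)).symm

lemma distinct_at {ρ ν₁ ν₂ : List ℕ} {x y : ℕ} (hxy : x ≠ y)
    (h1 : ρ ++ [x] <+: ν₁) (h2 : ρ ++ [y] <+: ν₂) : ν₁ ≠ ν₂ := by
  intro heq
  subst heq
  have hl : ρ.length < ν₁.length := by
    have := h1.length_le; simp at this; omega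
  exact hxy ((val_at h1 hl).symm.trans (val_at h2 hl))

lemma eq_take_of_prefix_le {u w : List ℕ} (hu : u <+: w) {k : ℕ} (hk : u.length = k) :
    u = w.take k := by
  subst hk; exact (take_of_prefix hu).symm

/-- The key induction: a splitting of the `A`-side of the fusion tree comes from a
designated splitting step, whose level is `P`-homogeneous on the `B`-side. -/
lemma ind_split : ∀ m (ρ : List ℕ) (x y : ℕ) (ν₁ ν₂ : List ℕ), x ≠ y →
    ρ ++ [x] <+: ν₁ → ρ ++ [y] <+: ν₂ → ν₁ ∈ (st C m).A → ν₂ ∈ (st C m).A →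
    ∃ k, ρ.length < (st C (k+1)).len ∧
      ∀ ν ∈ (st C (k+1)).B, C.P ρ (ν.take ρ.length) := by
  intro m
  induction m with
  | zero =>
    intro ρ x y ν₁ ν₂ hxy h1 h2 hm1 hm2
    rw [st_zero] at hm1 hm2
    simp only [List.mem_singleton] at hm1 hm2
    exact absurd (hm1.trans hm2.symm) (distinct_at hxy h1 h2)
  | succ m ih =>
    intro ρ x y ν₁ ν₂ hxy h1 h2 hm1 hm2
    have hinv := st_inv C m
    have hinv1 := st_inv C (m+1)
    have hlen1 : ν₁.length = (st C (m+1)).len := (hinv1.2.2.2.2.1 ν₁ hm1).2.2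
    have hlen2 : ν₂.length = (st C (m+1)).len := (hinv1.2.2.2.2.1 ν₂ hm2).2.2
    have hρν₁ : ρ <+: ν₁ := (List.prefix_append ρ [x]).trans h1
    have hρν₂ : ρ <+: ν₂ := (List.prefix_append ρ [y]).trans h2
    rcases le_or_gt (ρ.length + 1) (st C m).len with hc | hc
    · -- the divergence exists already at stage m
      obtain ⟨μ₁, hμ₁, hp₁⟩ := (back_one C m).1 ν₁ hm1
      obtain ⟨μ₂, hμ₂, hp₂⟩ := (back_one C m).1 ν₂ hm2
      have hl₁ : μ₁.length = (st C m).len := (hinv.2.2.2.2.1 μ₁ hμ₁).2.2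
      have hl₂ : μ₂.length = (st C m).len := (hinv.2.2.2.2.1 μ₂ hμ₂).2.2
      refine ih ρ x y μ₁ μ₂ hxy ?_ ?_ hμ₁ hμ₂
      · exact pref_of_pref h1 hp₁ (by simp; omega)
      · exact pref_of_pref h2 hp₂ (by simp; omega)
    · -- the divergence is at a level of the current step
      have hrel := (st_rel C m).2
      have hnd := hinv.2.2.1
      split_ifs at hrel with hpar
      · obtain ⟨a, tl, ρ', x', y', e, eB, hsA, hρpre, hρS, hxy', hx', hy', hlen,
          hA', he, hB', heB⟩ := hrel
        rw [hsA] at hnd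
        -- origins
        have horig : ∀ ν, ν ∈ (st C (m+1)).A → ρ <+: ν →
            ((∃ v ∈ tl, ν = e v ∧ v = ρ.take (st C m).len) ∨
             ((ν = ρ' ++ [x'] ∨ ν = ρ' ++ [y']) ∧ a = ρ.take (st C m).len)) := by
          intro ν hν hρν
          have : ν ∈ tl.map e ++ [ρ' ++ [x'], ρ' ++ [y']] := by rwa [hA'] at hν
          simp only [List.mem_append, List.mem_map, List.mem_cons, List.not_mem_nil,
            or_false, List.mem_singleton] at this
          have hνlen : ν.length = (st C (m+1)).len := (hinv1.2.2.2.2.1 ν hν).2.2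
          rcases this with ⟨v, hv, rfl⟩ | h | h
          · have hvv : v ∈ (st C m).A := by rw [hsA]; simp [hv]
            have hvl : v.length = (st C m).len := (hinv.2.2.2.2.1 v hvv).2.2
            have hvρ : v <+: ρ := pref_of_pref (he v hv) hρν (by omega)
            exact Or.inl ⟨v, hv, rfl, eq_take_of_prefix_le hvρ hvl⟩
          · have hal : a.length = (st C m).len := (hinv.2.2.2.2.1 a (by rw [hsA]; simp)).2.2
            have hap : a <+: ν := by
              rw [h]; exact hρpre.trans ⟨[x'], rfl⟩
            have haρ : a <+: ρ := pref_of_pref hap hρν (by omega)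
            exact Or.inr ⟨Or.inl h, eq_take_of_prefix_le haρ hal⟩
          · have hal : a.length = (st C m).len := (hinv.2.2.2.2.1 a (by rw [hsA]; simp)).2.2
            have hap : a <+: ν := by
              rw [h]; exact hρpre.trans ⟨[y'], rfl⟩
            have haρ : a <+: ρ := pref_of_pref hap hρν (by omega)
            exact Or.inr ⟨Or.inr h, eq_take_of_prefix_le haρ hal⟩
        have hne : ν₁ ≠ ν₂ := distinct_at hxy h1 h2
        rcases horig ν₁ hm1 hρν₁ with ⟨v₁, hv₁, rfl, hvt₁⟩ | ⟨hch₁, hat₁⟩ <;>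
          rcases horig ν₂ hm2 hρν₂ with ⟨v₂, hv₂, rfl, hvt₂⟩ | ⟨hch₂, hat₂⟩
        · exact absurd (by rw [hvt₁.trans hvt₂.symm]) hne
        · exact absurd (hvt₁.trans hat₂.symm ▸ hv₁) (List.nodup_cons.mp hnd).1
        · exact absurd (hvt₂.trans hat₁.symm ▸ hv₂) (List.nodup_cons.mp hnd).1
        · -- both are children of the designated split ρ'
          have hρlen : ρ.length ≤ ρ'.length := by
            have := h1.length_le
            have hh : ν₁.length = ρ'.length + 1 := by
              rcases hch₁ with h | h <;> rw [h] <;> simp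
            simp at this; omega
          have hρρ' : ρ.length = ρ'.length := by
            rcases Nat.lt_or_ge ρ.length ρ'.length with hlt | hge
            · exfalso
              have e₁ : ν₁[ρ.length]'(by rcases hch₁ with h|h <;> rw[h] <;> simp <;> omega) = ρ'[ρ.length] := by
                rcases hch₁ with h | h <;>
                · subst h
                  simp [List.getElem_append, hlt]
              have e₂ : ν₂[ρ.length]'(by rcases hch₂ with h|h <;> rw[h] <;> simp <;> omega) = ρ'[ρ.length] := by
                rcases hch₂ with h | h <;>
                · subst h
                  simp [List.getElem_append, hlt]
              have f₁ : ν₁[ρ.length]'(by rcases hch₁ with h|h <;> rw[h] <;> simp <;> omega) = x :=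
                val_at h1 (by rcases hch₁ with h|h <;> rw[h] <;> simp <;> omega)
              have f₂ : ν₂[ρ.length]'(by rcases hch₂ with h|h <;> rw[h] <;> simp <;> omega) = y :=
                val_at h2 (by rcases hch₂ with h|h <;> rw[h] <;> simp <;> omega)
              exact hxy ((f₁.symm.trans e₁).trans (e₂.symm.trans f₂))
            · omega
          have hρeq : ρ = ρ' := by
            have hp1 : ρ' <+: ν₁ := by
              rcases hch₁ with h | h <;> rw [h] <;> exact ⟨_, rfl⟩
            have := pref_of_pref hρν₁ hp1 (le_of_eq hρρ')
            exact this.eq_of_length_le (le_of_eq hρρ'.symm)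
          refine ⟨m, ?_, ?_⟩
          · rw [hlen, hρeq]; omega
          · intro ν hν
            rw [hB'] at hν
            obtain ⟨b, hb, rfl⟩ := List.mem_map.mp hν
            rw [hρeq]
            exact (heB b hb).2
      · -- B-step: the A-side is merely extended, pull back
        obtain ⟨b, tl, ρ', x', y', e, eA, hsB, hρpre, hρS, hxy', hx', hy', hlen,
          hB', he, hA', heA⟩ := hrel
        have hmem₁ : ν₁ ∈ (st C m).A.map eA := by rwa [← hA']
        have hmem₂ : ν₂ ∈ (st C m).A.map eA := by rwa [← hA']
        obtain ⟨a₁, ha₁, rfl⟩ := List.mem_map.mp hmem₁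
        obtain ⟨a₂, ha₂, rfl⟩ := List.mem_map.mp hmem₂
        have hl₁ : a₁.length = (st C m).len := (hinv.2.2.2.2.1 a₁ ha₁).2.2
        have hl₂ : a₂.length = (st C m).len := (hinv.2.2.2.2.1 a₂ ha₂).2.2
        have ht₁ : a₁ = ρ.take (st C m).len :=
          eq_take_of_prefix_le (pref_of_pref (heA a₁ ha₁) hρν₁ (by omega)) hl₁
        have ht₂ : a₂ = ρ.take (st C m).len :=
          eq_take_of_prefix_le (pref_of_pref (heA a₂ ha₂) hρν₂ (by omega)) hl₂
        exact absurd (by rw [ht₁.trans ht₂.symm]) (distinct_at hxy h1 h2)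

variable (σ : List ℕ) (i j : ℕ)

lemma front_sides {n : ℕ} (hai : σ ++ [i] <+: C.a₀) (hbj : σ ++ [j] <+: C.b₀) :
    (∀ ν ∈ (st C n).A, σ ++ [i] <+: ν) ∧ (∀ ν ∈ (st C n).B, σ ++ [j] <+: ν) := by
  constructor
  · intro ν hν
    exact hai.trans ((st_inv C n).2.2.2.2.1 ν hν).2.1
  · intro ν hν
    exact hbj.trans ((st_inv C n).2.2.2.2.2 ν hν).2.1

lemma pairs_P (hij : i ≠ j) (hai : σ ++ [i] <+: C.a₀) (hbj : σ ++ [j] <+: C.b₀) :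
    ∀ p ∈ Apairs (Sp C) σ i j, C.P p.1 p.2 := by
  rintro ⟨ρ, τ⟩ ⟨hiρ, ⟨hρSp, x, y, hxy, hxSp, hySp⟩, hjτ, hτSp, hlen⟩
  dsimp only at *
  obtain ⟨n, hn⟩ := len_unbounded C (ρ.length + 1)
  obtain ⟨ν₁, hν₁, hp₁⟩ := mem_char C hxSp (n := n) (by simp; omega)
  obtain ⟨ν₂, hν₂, hp₂⟩ := mem_char C hySp (n := n) (by simp; omega)
  have hσiρ : ∀ ν, ρ ++ [x] <+: ν ∨ ρ ++ [y] <+: ν → σ ++ [i] <+: ν := by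
    rintro ν (h | h) <;>
      exact hiρ.trans ((List.prefix_append ρ _).trans h)
  have hA₁ : ν₁ ∈ (st C n).A := by
    rcases hν₁ with h | h
    · exact h
    · exact absurd ((front_sides C σ i j hai hbj).2 ν₁ h)
        (fun hc => sides_ne hij (hσiρ ν₁ (Or.inl hp₁)) hc)
  have hA₂ : ν₂ ∈ (st C n).A := by
    rcases hν₂ with h | h
    · exact h
    · exact absurd ((front_sides C σ i j hai hbj).2 ν₂ h)
        (fun hc => sides_ne hij (hσiρ ν₂ (Or.inr hp₂)) hc)
  obtain ⟨k, hkl, hk⟩ := ind_split C n ρ x y ν₁ ν₂ hxy hp₁ hp₂ hA₁ hA₂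
  obtain ⟨ν, hν, hp⟩ := mem_char C hτSp (n := k+1) (by omega)
  have hBν : ν ∈ (st C (k+1)).B := by
    rcases hν with h | h
    · exact absurd ((front_sides C σ i j hai hbj).1 ν h)
        (fun hc => sides_ne hij hc (hjτ.trans hp))
    · exact h
  have hτtake : τ = ν.take ρ.length := eq_take_of_prefix_le hp hlen.symm
  rw [hτtake]
  exact hk ν hBν

/-- The packaged core construction. -/
lemma core (hij : i ≠ j) (hai : σ ++ [i] <+: C.a₀) (hbj : σ ++ [j] <+: C.b₀) :
    ∃ S', IsSacks S' ∧ S' ⊆ C.S ∧ IsStem S' σ ∧ σ ++ [i] ∈ S' ∧ σ ++ [j] ∈ S' ∧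
      ∀ p ∈ Apairs S' σ i j, C.P p.1 p.2 := by
  have ha₀Sp : C.a₀ ∈ Sp C := mem_Sp_of_front C (n := 0) (Or.inl (by rw [st_zero]; simp))
  have hb₀Sp : C.b₀ ∈ Sp C := mem_Sp_of_front C (n := 0) (Or.inr (by rw [st_zero]; simp))
  have hiSp : σ ++ [i] ∈ Sp C := (Sp_tree C).2.2 _ ha₀Sp _ hai
  have hjSp : σ ++ [j] ∈ Sp C := (Sp_tree C).2.2 _ hb₀Sp _ hbj
  have hσSp : σ ∈ Sp C := (Sp_tree C).2.2 _ hiSp _ ⟨[i], rfl⟩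
  refine ⟨Sp C, Sp_sacks C, Sp_sub C, ⟨hσSp, ?_, hσSp, i, j, hij, hiSp, hjSp⟩,
    hiSp, hjSp, pairs_P C σ i j hij hai hbj⟩
  -- comparability with σ
  rintro π ⟨n, ν, hν, hp⟩
  have hσν : σ <+: ν := by
    rcases hν with hν | hν
    · exact ((List.prefix_append σ [i]).trans hai).trans ((st_inv C n).2.2.2.2.1 ν hν).2.1
    · exact ((List.prefix_append σ [j]).trans hbj).trans ((st_inv C n).2.2.2.2.2 ν hν).2.1
  rcases le_or_gt π.length σ.length with h | h
  · exact Or.inl (pref_of_pref hp hσν h)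
  · exact Or.inr (pref_of_pref hσν hp h.le)

end SPL

namespace SPL

variable (S : Set (List ℕ)) (R : Set (List ℕ × List ℕ))

def Full (ρ b : List ℕ) : Prop :=
  ∀ τ, τ ∈ S → b <+: τ → τ.length = ρ.length → (ρ, τ) ∈ R

def Hot (a b : List ℕ) : Prop :=
  ∀ a', a' ∈ S → a <+: a' →
    ∃ ρ, a' <+: ρ ∧ IsSplit S ρ ∧ b.length ≤ ρ.length ∧ Full S R ρ b

end SPL

theorem sacks_partition_lemma'
    (S : Set (List ℕ)) (σ : List ℕ) (i j : ℕ)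
    (hS : IsSacks S) (hij : i ≠ j)
    (hi : σ ++ [i] ∈ S) (hj : σ ++ [j] ∈ S)
    (R : Set (List ℕ × List ℕ)) :
    ∃ S', IsSacks S' ∧ S' ⊆ S ∧ IsStem S' σ ∧ σ ++ [i] ∈ S' ∧ σ ++ [j] ∈ S' ∧
      ((∀ p ∈ Apairs S' σ i j, p ∈ R) ∨ (∀ p ∈ Apairs S' σ i j, p ∉ R)) := by
  classical
  by_cases hcase : ∃ a b, a ∈ S ∧ σ ++ [i] <+: a ∧ b ∈ S ∧ σ ++ [j] <+: b ∧ SPL.Hot S R a b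
  · -- homogeneously inside R
    obtain ⟨a, b, haS, hia, hbS, hjb, hot⟩ := hcase
    obtain ⟨a₀, ha₀S, haa₀, ha₀len⟩ :=
      SPL.sacks_ext hS haS (max a.length b.length) (le_max_left _ _)
    obtain ⟨b₀, hb₀S, hbb₀, hb₀len⟩ :=
      SPL.sacks_ext hS hbS (max a.length b.length) (le_max_right _ _)
    have H : ∀ (a' : List ℕ) (Bl : List (List ℕ)), a' ∈ S → a₀ <+: a' →
        (∀ b' ∈ Bl, b' ∈ S ∧ b₀ <+: b' ∧ b'.length = a'.length) →
        ∃ ρ, a' <+: ρ ∧ IsSplit S ρ ∧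
          ∀ b' ∈ Bl, ∃ τ, τ ∈ S ∧ b' <+: τ ∧ τ.length = ρ.length ∧ (ρ, τ) ∈ R := by
      intro a' Bl ha'S ha₀a' hBl
      obtain ⟨ρ, hρpre, hρsp, hρb, hfull⟩ := hot a' ha'S (haa₀.trans ha₀a')
      refine ⟨ρ, hρpre, hρsp, ?_⟩
      intro b' hb'
      obtain ⟨hb'S, hb₀b', hb'len⟩ := hBl b' hb'
      have : b'.length ≤ ρ.length := by
        have := hρpre.length_le; omega
      obtain ⟨τ, hτS, hbτ, hτlen⟩ := SPL.sacks_ext hS hb'S ρ.length this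
      exact ⟨τ, hτS, hbτ, hτlen,
        hfull τ hτS ((hbb₀.trans hb₀b').trans hbτ) hτlen⟩
    set C : SPL.Setup :=
      ⟨S, fun ρ τ => (ρ, τ) ∈ R, a₀, b₀, hS, ha₀S, hb₀S,
        ha₀len.trans hb₀len.symm, H⟩ with hC
    obtain ⟨S', h1, h2, h3, h4, h5, h6⟩ :=
      SPL.core C σ i j hij (hia.trans haa₀) (hjb.trans hbb₀)
    exact ⟨S', h1, h2, h3, h4, h5, Or.inl h6⟩
  · -- homogeneously outside R
    push_neg at hcase
    have nothot : ∀ a b, a ∈ S → σ ++ [i] <+: a → b ∈ S → σ ++ [j] <+: b →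
        ∃ a', a' ∈ S ∧ a <+: a' ∧ ∀ ρ, a' <+: ρ → IsSplit S ρ →
          b.length ≤ ρ.length → ¬ SPL.Full S R ρ b := by
      intro a b haS hia hbS hjb
      have := hcase a b haS hia hbS hjb
      unfold SPL.Hot at this
      push_neg at this
      obtain ⟨a', ha'S, haa', h⟩ := this
      refine ⟨a', ha'S, haa', ?_⟩
      intro ρ hpre hsp hlen hfull
      exact (h ρ hpre hsp hlen) hfull
    have H : ∀ (a : List ℕ) (Bl : List (List ℕ)), a ∈ S → σ ++ [i] <+: a →
        (∀ b ∈ Bl, b ∈ S ∧ σ ++ [j] <+: b ∧ b.length = a.length) →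
        ∃ ρ, a <+: ρ ∧ IsSplit S ρ ∧
          ∀ b ∈ Bl, ∃ τ, τ ∈ S ∧ b <+: τ ∧ τ.length = ρ.length ∧ (ρ, τ) ∉ R := by
      intro a Bl haS hia hBl
      have key : ∀ (Bl' : List (List ℕ)), (∀ b ∈ Bl', b ∈ S ∧ σ ++ [j] <+: b) →
          ∃ a'', a'' ∈ S ∧ a <+: a'' ∧
            ∀ ρ, a'' <+: ρ → IsSplit S ρ →
              ∀ b ∈ Bl', b.length ≤ ρ.length → ¬ SPL.Full S R ρ b := by
        intro Bl'
        induction Bl' with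
        | nil => exact fun _ => ⟨a, haS, List.prefix_refl _, fun ρ _ _ b hb => absurd hb
            List.not_mem_nil⟩
        | cons b rest ih =>
          intro hmem
          obtain ⟨a₁, ha₁S, haa₁, h₁⟩ := ih (fun b' hb' => hmem b' (by simp [hb']))
          obtain ⟨a₂, ha₂S, ha₁a₂, h₂⟩ := nothot a₁ b ha₁S (hia.trans haa₁)
            (hmem b (by simp)).1 (hmem b (by simp)).2
          refine ⟨a₂, ha₂S, haa₁.trans ha₁a₂, ?_⟩
          intro ρ hpre hsp b' hb' hlen
          rcases List.mem_cons.mp hb' with rfl | hb'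
          · exact h₂ ρ hpre hsp hlen
          · exact h₁ ρ (ha₁a₂.trans hpre) hsp b' hb' hlen
      obtain ⟨a'', ha''S, haa'', hprop⟩ := key Bl (fun b hb => ⟨(hBl b hb).1, (hBl b hb).2.1⟩)
      obtain ⟨ρ, hpre, hsp⟩ := hS.2 a'' ha''S
      refine ⟨ρ, haa''.trans hpre, hsp, ?_⟩
      intro b hb
      have hblen : b.length ≤ ρ.length := by
        have h1 := (hBl b hb).2.2
        have h2 := haa''.length_le
        have h3 := hpre.length_le
        omega
      have := hprop ρ hpre hsp b hb hblen
      unfold SPL.Full at this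
      push_neg at this
      obtain ⟨τ, hτS, hbτ, hτlen, hτR⟩ := this
      exact ⟨τ, hτS, hbτ, hτlen, hτR⟩
    set C : SPL.Setup :=
      ⟨S, fun ρ τ => (ρ, τ) ∉ R, σ ++ [i], σ ++ [j], hS, hi, hj, by simp, H⟩ with hC
    obtain ⟨S', h1, h2, h3, h4, h5, h6⟩ :=
      SPL.core C σ i j hij (List.prefix_refl _) (List.prefix_refl _)
    exact ⟨S', h1, h2, h3, h4, h5, Or.inr h6⟩


/-- **Lemma 1.** Given a Sacks tree `S` with stem `σ`, `i ≠ j` with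
`σ⌢⟨i⟩, σ⌢⟨j⟩ ∈ S`, and a relation `R ⊆ A_S^{⟨i,j⟩}`, there is a Sacks tree
`S' ⊆ S` with the same stem (and still containing `σ⌢⟨i⟩, σ⌢⟨j⟩`) such that either
all pairs of `A_{S'}^{⟨i,j⟩}` are in `R`, or none is. -/
theorem sacks_partition_lemma
    (S : Set (List ℕ)) (σ : List ℕ) (i j : ℕ)
    (hS : IsSacks S) (hstem : IsStem S σ) (hij : i ≠ j)
    (hi : σ ++ [i] ∈ S) (hj : σ ++ [j] ∈ S)
    (R : Set (List ℕ × List ℕ)) (hR : R ⊆ Apairs S σ i j) :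
    ∃ S', IsSacks S' ∧ S' ⊆ S ∧ IsStem S' σ ∧ σ ++ [i] ∈ S' ∧ σ ++ [j] ∈ S' ∧
      ((∀ p ∈ Apairs S' σ i j, p ∈ R) ∨ (∀ p ∈ Apairs S' σ i j, p ∉ R)) :=
  sacks_partition_lemma' S σ i j hS hij hi hj R
end
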